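/- arXiv:1601.00946 — 6 statements merged into one kernel-verified Lean document; each statement's English description precedes it below -/
import Mathlib

section
/- Let H = (ℤ/2) ⊕ ℤ with generators a (of the ℤ/2 factor) and b (of the ℤ factor). Define an action ρ₀ of H on ℤ by: b acts by n ↦ n + 2, and a acts by swapping 2n and 2n+1 for every n ∈ ℤ. Then there is no bijection p : ℤ → ℤ such that the conjugated action p ∘ ρ₀(h) ∘ p⁻¹ is by isometries of ℤ (with the standard metric) for every h ∈ H. -/
/-- The bijection of `ℤ` swapping `2n` and `2n+1` for every `n`. -/
def swapPair (n : ℤ) : ℤ := if Even n then n + 1 else n - 1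

/-- The action `ρ₀` of `H = (ℤ/2) ⊕ ℤ` on `ℤ`: the generator `a` of the `ℤ/2`
factor acts by `swapPair` and the generator `b` of the `ℤ` factor acts by
`n ↦ n + 2`.  Since these two bijections commute, the element `(ε, k)` acts by
`n ↦ swapPair^ε n + 2k`. -/
def rho0 : ZMod 2 × ℤ → ℤ → ℤ :=
  fun h n => (if h.1 = 0 then n else swapPair n) + 2 * h.2

lemma swapPair_invol (x : ℤ) : swapPair (swapPair x) = x := by
  rcases Int.even_or_odd x with he | ho
  · have h1 : ¬ Even (x + 1) := by simp [Int.even_add_one, he]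
    simp [swapPair, he, h1]
  · have h0 : ¬ Even x := Int.not_even_iff_odd.mpr ho
    have h1 : Even (x - 1) := Int.even_sub_one.mpr h0
    simp [swapPair, h0, h1]

lemma swapPair_ne (x : ℤ) : swapPair x ≠ x := by
  unfold swapPair; split <;> omega

lemma swapPair_add_two (x : ℤ) : swapPair (x + 2) = swapPair x + 2 := by
  have h2 : Even (x + 2) ↔ Even x := by simp [parity_simps]
  rcases Int.even_or_odd x with he | ho
  · simp only [swapPair, if_pos he, if_pos (h2.mpr he)]; ring
  · have h0 : ¬ Even x := Int.not_even_iff_odd.mpr ho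
    simp only [swapPair, if_neg h0, if_neg (fun h => h0 (h2.mp h))]
    ring

/-- Every isometry of `ℤ` is a translation or a reflection. -/
lemma isom_class (f : ℤ → ℤ) (h : ∀ m n, |f m - f n| = |m - n|) :
    (∀ n, f n = f 0 + n) ∨ (∀ n, f n = f 0 - n) := by
  have key : ∀ n : ℤ, f n - f 0 = n ∨ f n - f 0 = -n := by
    intro n
    have := abs_eq_abs.mp (h n 0)
    simpa using this
  rcases key 1 with h1 | h1
  · left; intro n
    rcases key n with hn | hn
    · omega
    · rcases abs_eq_abs.mp (h n 1) with h' | h' <;> omega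
  · right; intro n
    rcases key n with hn | hn
    · rcases abs_eq_abs.mp (h n 1) with h' | h' <;> omega
    · omega

/-- there is no bijection `p : ℤ → ℤ` conjugating the action `ρ₀`
of `(ℤ/2) ⊕ ℤ` on `ℤ` to an action by isometries of `ℤ` with the standard
metric. -/
theorem stmt1 :
    ¬ ∃ p : ℤ ≃ ℤ, ∀ (h : ZMod 2 × ℤ) (m n : ℤ),
        |p (rho0 h (p.symm m)) - p (rho0 h (p.symm n))| = |m - n| := by
  rintro ⟨p, hp⟩
  set fa : ℤ → ℤ := fun n => p (rho0 (1, 0) (p.symm n)) with hfa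
  set fb : ℤ → ℤ := fun n => p (rho0 (0, 1) (p.symm n)) with hfb
  have ha_eq : ∀ n, fa n = p (swapPair (p.symm n)) := by
    intro n; simp [hfa, rho0]
  have hb_eq : ∀ n, fb n = p (p.symm n + 2) := by
    intro n; simp [hfb, rho0]
  -- fa is an involution
  have ha_inv : ∀ n, fa (fa n) = n := by
    intro n
    rw [ha_eq, ha_eq, Equiv.symm_apply_apply, swapPair_invol, Equiv.apply_symm_apply]
  -- fa has no fixed point
  have ha_nofix : ∀ n, fa n ≠ n := by
    intro n hn
    rw [ha_eq] at hn
    exact swapPair_ne _ (by simpa using congrArg p.symm hn)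
  -- fa and fb commute
  have hcomm : ∀ n, fa (fb n) = fb (fa n) := by
    intro n
    rw [hb_eq, ha_eq, ha_eq, hb_eq, Equiv.symm_apply_apply, Equiv.symm_apply_apply,
      swapPair_add_two]
  -- fb ∘ fb is not the identity
  have hb2 : fb (fb 0) ≠ 0 := by
    intro hn
    rw [hb_eq, hb_eq, Equiv.symm_apply_apply] at hn
    have := congrArg p.symm hn
    simp at this
    omega
  rcases isom_class fa (fun m n => hp (1, 0) m n) with hA | hA
  · -- fa is a translation: contradicts being a fixed-point-free involution
    have h0 := ha_inv 0
    rw [hA (fa 0), hA 0] at h0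
    exact ha_nofix 0 (by rw [hA 0]; omega)
  rcases isom_class fb (fun m n => hp (0, 1) m n) with hB | hB
  · -- fb translation, fa reflection: commutation forces fb 0 = 0
    have hc := hcomm 0
    rw [hA (fb 0), hB (fa 0), hA 0] at hc
    have hb0 : fb 0 = 0 := by omega
    exact hb2 (by rw [hB (fb 0)]; omega)
  · -- fb reflection: then fb is an involution, contradiction
    exact hb2 (by rw [hB (fb 0)]; omega)
end

section
/- Let K be a group acting on ℤ by bijections, each of which is an (L,A)-quasi-isometry. Suppose there is an isometric action of K on ℤ together with a K-equivariant surjective quasi-isometry f : ℤ → ℤ (from the given action to the isometric one). If the restriction of the given action to some subgroup K₂ ≤ K is a transitive action by translations of ℤ, then f is injective, hence a bijection. -/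
/-- `f : ℤ → ℤ` is an `(L,A)`-quasi-isometry of `ℤ` with its standard metric. -/
def IsQIZ (L A : ℝ) (f : ℤ → ℤ) : Prop :=
  (∀ m n : ℤ,
      L⁻¹ * |(m : ℝ) - n| - A ≤ |(f m : ℝ) - f n| ∧
      |(f m : ℝ) - f n| ≤ L * |(m : ℝ) - n| + A) ∧
  ∀ n : ℤ, ∃ m : ℤ, |(n : ℝ) - f m| ≤ A

/-- Let `K` act on `ℤ` by bijections which are `(L,A)`-quasi-isometries
(action `ρ`), let `σ` be an isometric action of `K` on `ℤ`, and let `f : ℤ → ℤ` be a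
`K`-equivariant surjective quasi-isometry from `ρ` to `σ`.  If the restriction of `ρ`
to some subgroup `K₂ ≤ K` is a transitive action by translations of `ℤ`, then `f` is
injective, hence a bijection. -/
theorem stmt2 :
    ∀ (K : Type) [Group K], ∀ (ρ σ : K →* Equiv.Perm ℤ) (L A L' A' : ℝ) (f : ℤ → ℤ),
      (∀ k : K, IsQIZ L A (ρ k)) →
      (∀ (k : K) (m n : ℤ), |((σ k m : ℤ) : ℝ) - ((σ k n : ℤ) : ℝ)| = |(m : ℝ) - n|) →
      Function.Surjective f →
      IsQIZ L' A' f →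
      (∀ (k : K) (n : ℤ), f (ρ k n) = σ k (f n)) →
      ∀ K₂ : Subgroup K,
        (∀ k ∈ K₂, ∃ c : ℤ, ∀ n : ℤ, ρ k n = n + c) →
        (∀ m : ℤ, ∃ k ∈ K₂, ρ k 0 = m) →
        Function.Injective f ∧ Function.Bijective f := by
  intro K _ ρ σ L A L' A' f hρ hσ hsurj hf heq K₂ htransl htrans
  obtain ⟨hbd, _⟩ := hf
  have hinj : Function.Injective f := by
    intro a b hab
    by_contra hne
    set d : ℤ := b - a with hd
    have hd0 : d ≠ 0 := sub_ne_zero.mpr (Ne.symm hne)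
    obtain ⟨k, hk, hk0⟩ := htrans d
    obtain ⟨c, hc⟩ := htransl k hk
    have hcd : c = d := by have := hc 0; rw [hk0] at this; omega
    have key : ∀ n : ℤ, f (n + d) = σ k (f n) := by
      intro n; rw [← heq k n, hc n, hcd]
    have hfix : σ k (f a) = f a := by
      have h1 := key a
      have h2 : a + d = b := by omega
      rw [h2, ← hab] at h1
      exact h1.symm
    have hiter : ∀ j : ℕ, f (a + j * d) = f a := by
      intro j
      induction j with
      | zero => simp
      | succ j ih =>
        have h2 : a + ((j : ℤ) + 1) * d = (a + j * d) + d := by ring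
        push_cast
        rw [h2, key, ih, hfix]
    rcases le_or_gt L' 0 with hL | hL
    · rcases eq_or_lt_of_le hL with hL0 | hLneg
      · -- L' = 0 : f is bounded, contradicting surjectivity
        obtain ⟨m, hm⟩ := hsurj (f 0 + (⌈A'⌉.toNat + 1))
        have hub := (hbd m 0).2
        rw [hm, hL0, zero_mul, zero_add] at hub
        have h3 : (A' : ℝ) ≤ (⌈A'⌉.toNat : ℝ) := by
          have := Int.self_le_toNat ⌈A'⌉
          calc A' ≤ (⌈A'⌉ : ℝ) := Int.le_ceil A'
            _ ≤ _ := by exact_mod_cast this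
        have h4 : ((f 0 + (⌈A'⌉.toNat + 1) : ℤ) : ℝ) - (f 0 : ℝ) = (⌈A'⌉.toNat : ℝ) + 1 := by
          push_cast; ring
        rw [h4] at hub
        have h5 : |(⌈A'⌉.toNat : ℝ) + 1| = (⌈A'⌉.toNat : ℝ) + 1 := by
          rw [abs_of_pos]; positivity
        rw [h5] at hub
        linarith
      · -- L' < 0 : upper bound fails for far apart points
        set N : ℤ := ⌈A' / (-L')⌉.toNat + 1 with hN
        have hub := (hbd N 0).2
        have hNpos : (0 : ℝ) < (N : ℝ) := by
          have : (0 : ℤ) < N := by positivity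
          exact_mod_cast this
        have hNabs : |(N : ℝ) - (0 : ℤ)| = (N : ℝ) := by
          rw [Int.cast_zero, sub_zero, abs_of_pos hNpos]
        rw [hNabs] at hub
        have hNbig : A' / (-L') < (N : ℝ) := by
          have h6 : (⌈A' / (-L')⌉ : ℝ) ≤ ((⌈A' / (-L')⌉.toNat : ℤ) : ℝ) := by
            exact_mod_cast Int.self_le_toNat _
          have h7 : A' / (-L') ≤ (⌈A' / (-L')⌉ : ℝ) := Int.le_ceil _
          have : ((N : ℤ) : ℝ) = ((⌈A' / (-L')⌉.toNat : ℤ) : ℝ) + 1 := by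
            rw [hN]; push_cast; ring
          rw [this]; linarith
        have hLneg' : (0 : ℝ) < -L' := by linarith
        have : A' < (N : ℝ) * (-L') := (div_lt_iff₀ hLneg').mp hNbig
        have habs : (0 : ℝ) ≤ |(f N : ℝ) - (f 0 : ℝ)| := abs_nonneg _
        nlinarith
    · -- L' > 0 : lower bound fails on the progression
      set j : ℕ := ⌈L' * A'⌉.toNat + 1 with hj
      have hlow := (hbd (a + j * d) a).1
      rw [hiter j] at hlow
      have h8 : |(f a : ℝ) - (f a : ℝ)| = 0 := by simp
      rw [h8] at hlow
      have h9 : ((a + (j : ℤ) * d : ℤ) : ℝ) - (a : ℝ) = (j : ℝ) * (d : ℝ) := by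
        push_cast; ring
      rw [h9] at hlow
      have hdabs : (1 : ℝ) ≤ |(d : ℝ)| := by
        have : (1 : ℤ) ≤ |d| := Int.one_le_abs hd0
        calc (1 : ℝ) ≤ ((|d| : ℤ) : ℝ) := by exact_mod_cast this
          _ = |(d : ℝ)| := by push_cast; ring
      have hjbig : L' * A' < (j : ℝ) := by
        have h6 : (⌈L' * A'⌉ : ℝ) ≤ ((⌈L' * A'⌉.toNat : ℤ) : ℝ) := by
          exact_mod_cast Int.self_le_toNat _
        have h7 : L' * A' ≤ (⌈L' * A'⌉ : ℝ) := Int.le_ceil _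
        have : ((j : ℕ) : ℝ) = ((⌈L' * A'⌉.toNat : ℤ) : ℝ) + 1 := by
          rw [hj]; push_cast; ring
        rw [this]; linarith
      have hja : |(j : ℝ) * (d : ℝ)| = (j : ℝ) * |(d : ℝ)| := by
        rw [abs_mul, Nat.abs_cast]
      rw [hja] at hlow
      have hLinv : (0 : ℝ) < L'⁻¹ := by positivity
      have hjnn : (0 : ℝ) ≤ (j : ℝ) := Nat.cast_nonneg _
      have h10 : L'⁻¹ * (j : ℝ) ≤ L'⁻¹ * ((j : ℝ) * |(d : ℝ)|) := by nlinarith [mul_nonneg (mul_nonneg hLinv.le hjnn) (sub_nonneg.mpr hdabs)]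
      have h11 : L'⁻¹ * (j : ℝ) ≤ A' := by linarith
      have h12 := mul_le_mul_of_nonneg_left h11 hL.le
      rw [← mul_assoc, mul_inv_cancel₀ (ne_of_gt hL), one_mul] at h12
      linarith
  exact ⟨hinj, hinj, hsurj⟩
end

section
/- Let f : Y → Z be a cubical map between CAT(0) cube complexes. Then the inverse image under f of any hyperplane of Z is a disjoint union of hyperplanes of Y. -/
/-! A combinatorial model of CAT(0) cube complexes: by a theorem of Chepoi, the
1-skeleta of CAT(0) cube complexes are exactly the median graphs, and the cube
complex is determined by its 1-skeleton (cubes = induced subhypercubes, by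
flagness).  We phrase statements about CAT(0) cube complexes in this model. -/

open SimpleGraph

/-- A subset of vertices is convex (equivalently, the subcomplex it spans is a
convex subcomplex) iff it is closed under metric betweenness. -/
def ConvexIn {V : Type} (G : SimpleGraph V) (S : Set V) : Prop :=
  ∀ x ∈ S, ∀ y ∈ S, ∀ z : V, G.dist x z + G.dist z y = G.dist x y → z ∈ S

/-- Median graphs: connected graphs in which every triple of vertices has a
unique median. -/
def IsMedianGraph {V : Type} (G : SimpleGraph V) : Prop :=
  G.Connected ∧ ∀ x y z : V, ∃! m : V,
    G.dist x m + G.dist m y = G.dist x y ∧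
    G.dist y m + G.dist m z = G.dist y z ∧
    G.dist x m + G.dist m z = G.dist x z

/-- `x y z w` are the vertices (in cyclic order) of a square (2-cube). -/
def IsSquare4 {V : Type} (G : SimpleGraph V) (x y z w : V) : Prop :=
  G.Adj x y ∧ G.Adj y z ∧ G.Adj z w ∧ G.Adj w x ∧ x ≠ z ∧ y ≠ w

/-- Oriented edges `e`, `f` are opposite sides of a square. -/
def ElemPar {V : Type} (G : SimpleGraph V) (e f : V × V) : Prop :=
  G.Adj e.1 e.2 ∧ G.Adj f.1 f.2 ∧ G.Adj e.1 f.1 ∧ G.Adj e.2 f.2 ∧ e.1 ≠ f.2 ∧ e.2 ≠ f.1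

/-- Parallelism of (oriented) edges: the equivalence relation generated by being
opposite sides of a square, together with orientation reversal. -/
def Par {V : Type} (G : SimpleGraph V) : V × V → V × V → Prop :=
  Relation.EqvGen (fun e f => ElemPar G e f ∨ f = (e.2, e.1))

/-- A hyperplane, recorded as the set of (oriented) edges dual to it, i.e. a
parallelism class of edges. -/
def IsHyperplane {V : Type} (G : SimpleGraph V) (h : Set (V × V)) : Prop :=
  ∃ e : V × V, G.Adj e.1 e.2 ∧ h = {f | G.Adj f.1 f.2 ∧ Par G e f}

/-- Two hyperplanes cross (intersect as subspaces) iff they have dual edges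
forming the corner of a square. -/
def CrossHyp {V : Type} (G : SimpleGraph V) (h₁ h₂ : Set (V × V)) : Prop :=
  ∃ x y z w : V, IsSquare4 G x y z w ∧ (x, y) ∈ h₁ ∧ (y, z) ∈ h₂

/-- A cubical map, at the level of 1-skeleta: each edge is mapped to an edge or
collapsed to a vertex, and the restriction to each square is a natural projection
onto a face followed by an isometry (so a square maps to a square, an edge
(collapsing one parallel class of its sides), or a vertex). -/
def IsCubicalMap {V V' : Type} (G : SimpleGraph V) (H : SimpleGraph V') (f : V → V') : Prop :=
  (∀ x y : V, G.Adj x y → f x = f y ∨ H.Adj (f x) (f y)) ∧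
  (∀ x y z w : V, IsSquare4 G x y z w →
    (f x = f y ∧ f y = f z ∧ f z = f w) ∨
    (f x = f y ∧ f z = f w ∧ f x ≠ f z) ∨
    (f y = f z ∧ f w = f x ∧ f x ≠ f y) ∨
    (f x ≠ f z ∧ f y ≠ f w ∧ f x ≠ f y ∧ f y ≠ f z ∧ f z ≠ f w ∧ f w ≠ f x))

/-- The set of edges of the source mapping into a given set `h` of edges of the
target (the combinatorial inverse image of a hyperplane). -/
def hypPreimage {V V' : Type} (G : SimpleGraph V) (f : V → V') (h : Set (V' × V')) :
    Set (V × V) :=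
  {e | G.Adj e.1 e.2 ∧ (f e.1, f e.2) ∈ h}

/-- `c` is (the vertex set of) a cube of dimension `n`: an induced subhypercube of
the 1-skeleton (these span actual cubes of the complex, by flagness). -/
def IsCubeOfDim {V : Type} (G : SimpleGraph V) (c : Set V) (n : ℕ) : Prop :=
  ∃ e : c ≃ (Fin n → Bool), ∀ x y : c, G.Adj x.1 y.1 ↔ ∃! i : Fin n, e x i ≠ e y i

/-- `c` is (the vertex set of) a cube of the complex. -/
def IsCube {V : Type} (G : SimpleGraph V) (c : Set V) : Prop :=
  ∃ n : ℕ, IsCubeOfDim G c n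

/-- Vertices of the first cubical subdivision: the cubes (their barycenters). -/
def SubVert {V : Type} (G : SimpleGraph V) := {c : Set V // IsCube G c}

/-- The 1-skeleton of the first cubical subdivision: barycenters of cubes, two
being adjacent iff one cube is a codimension-one face of the other. -/
def subdivGraph {V : Type} (G : SimpleGraph V) : SimpleGraph (SubVert G) where
  Adj a b := a.1 ≠ b.1 ∧ ∃ n : ℕ,
    (IsCubeOfDim G a.1 n ∧ IsCubeOfDim G b.1 (n + 1) ∧ a.1 ⊆ b.1) ∨
    (IsCubeOfDim G b.1 n ∧ IsCubeOfDim G a.1 (n + 1) ∧ b.1 ⊆ a.1)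
  symm := by
    refine ⟨?_⟩
    rintro a b ⟨hne, n, h | h⟩
    · exact ⟨fun h' => hne h'.symm, n, Or.inr h⟩
    · exact ⟨fun h' => hne h'.symm, n, Or.inl h⟩
  loopless := by refine ⟨?_⟩; rintro a ⟨hne, _⟩; exact hne rfl

/-- A subset of vertices is connected in the induced subgraph. -/
def InducedConnected {V : Type} (G : SimpleGraph V) (S : Set V) : Prop :=
  ∀ x ∈ S, ∀ y ∈ S, Relation.ReflTransGen (fun a b => a ∈ S ∧ b ∈ S ∧ G.Adj a b) x y

/-! In a median graph each edge `(a, b)` splits the vertices into the half-space of vertices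
closer to `a` and its complement, and opposite sides of a square split them in the same way:
a vertex on different sides would make both remaining corners of the square medians of one
triple. So parallel edges determine the same pair of half-spaces, which two consecutive edges
`a - b - c` never do.

A cubical map sends opposite sides of a square, unless it collapses them, either to opposite sides of a square or to the
same edge, so the inverse image of a hyperplane is a union of parallelism classes. Two of these
classes cannot cross: a square with consecutive sides in the inverse image would be mapped
injectively onto a square of the target with two consecutive sides dual to the same hyperplane. -/

theorem Relation.EqvGen.apply_eq {α β : Type*} {r : α → α → Prop} {φ : α → β}
    (hφ : ∀ a b, r a b → φ a = φ b) {a b : α} (h : Relation.EqvGen r a b) : φ a = φ b :=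
  congrArg (Quot.lift φ hφ) (Quot.eqvGen_sound h)

section MedianGraph

variable {V : Type} {G : SimpleGraph V}

theorem IsMedianGraph.dist_adj_cases (hG : IsMedianGraph G) {x y : V} (hxy : G.Adj x y)
    (v : V) : G.dist v y = G.dist v x + 1 ∨ G.dist v x = G.dist v y + 1 := by
  obtain ⟨m, ⟨hxmy, hymv, hxmv⟩, -⟩ := hG.2 x y v
  rw [dist_eq_one_iff_adj.mpr hxy] at hxmy
  rw [dist_comm (u := v), dist_comm (u := v)]
  rcases Nat.eq_zero_or_pos (G.dist x m) with hxm | hxm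
  · obtain rfl : x = m := hG.1.dist_eq_zero_iff.mp hxm
    rw [dist_eq_one_iff_adj.mpr hxy.symm] at hymv
    omega
  · obtain rfl : m = y := hG.1.dist_eq_zero_iff.mp (by omega)
    rw [dist_eq_one_iff_adj.mpr hxy] at hxmv
    omega

theorem IsMedianGraph.dist_ne_of_adj (hG : IsMedianGraph G) {x y : V} (hxy : G.Adj x y)
    (v : V) : G.dist v x ≠ G.dist v y := by
  rcases hG.dist_adj_cases hxy v with h | h <;> omega

theorem IsMedianGraph.dist_eq_two (hG : IsMedianGraph G) {a b c : V} (hab : G.Adj a b)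
    (hbc : G.Adj b c) (hac : a ≠ c) : G.dist a c = 2 := by
  have hac' : G.dist a c ≠ 0 := fun h => hac (hG.1.dist_eq_zero_iff.mp h)
  rcases hG.dist_adj_cases hbc a with h | h <;> rw [dist_eq_one_iff_adj.mpr hab] at h <;> omega

def halfspace (G : SimpleGraph V) (e : V × V) : Set V :=
  {v | G.dist v e.1 < G.dist v e.2}

theorem ElemPar.symm {e f : V × V} (h : ElemPar G e f) : ElemPar G f e :=
  ⟨h.2.1, h.1, h.2.2.1.symm, h.2.2.2.1.symm, h.2.2.2.2.2.symm, h.2.2.2.2.1.symm⟩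

theorem ElemPar.swap {e f : V × V} (h : ElemPar G e f) : ElemPar G e.swap f.swap :=
  ⟨h.1.symm, h.2.1.symm, h.2.2.2.1, h.2.2.1, h.2.2.2.2.2, h.2.2.2.2.1⟩

theorem IsMedianGraph.halfspace_subset_of_elemPar (hG : IsMedianGraph G) {e f : V × V}
    (h : ElemPar G e f) : halfspace G e ⊆ halfspace G f := by
  obtain ⟨he, hf, h₁, h₂, hef, hfe⟩ := h
  intro v (hv : G.dist v e.1 < G.dist v e.2)
  by_contra hv'
  change ¬ G.dist v f.1 < G.dist v f.2 at hv'
  have := hG.dist_adj_cases he v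
  have := hG.dist_adj_cases hf v
  have := hG.dist_adj_cases h₁ v
  have := hG.dist_adj_cases h₂ v
  -- `v` is at some distance `d` from `e.1` and `f.2` and at `d + 1` from `e.2` and `f.1`, so
  -- `e.1` and `f.2` are both medians of `v, e.2, f.1`.
  have hd : G.dist e.2 f.1 = 2 := hG.dist_eq_two he.symm h₁ hfe
  obtain ⟨m, -, huniq⟩ := hG.2 v e.2 f.1
  have he₁ : e.1 = m := huniq e.1 <| by
    beta_reduce
    rw [dist_eq_one_iff_adj.mpr he, dist_eq_one_iff_adj.mpr he.symm,
      dist_eq_one_iff_adj.mpr h₁, hd]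
    omega
  have hf₂ : f.2 = m := huniq f.2 <| by
    beta_reduce
    rw [dist_eq_one_iff_adj.mpr h₂.symm, dist_eq_one_iff_adj.mpr h₂,
      dist_eq_one_iff_adj.mpr hf.symm, hd]
    omega
  exact hef (he₁.trans hf₂.symm)

theorem IsMedianGraph.halfspace_eq_of_elemPar (hG : IsMedianGraph G) {e f : V × V}
    (h : ElemPar G e f) : halfspace G e = halfspace G f :=
  (hG.halfspace_subset_of_elemPar h).antisymm (hG.halfspace_subset_of_elemPar h.symm)

def halfspacePair (G : SimpleGraph V) (e : V × V) : Sym2 (Set V) :=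
  s(halfspace G e, halfspace G e.swap)

theorem IsMedianGraph.halfspacePair_eq_of_par (hG : IsMedianGraph G) {e f : V × V}
    (h : Par G e f) : halfspacePair G e = halfspacePair G f := by
  refine h.apply_eq fun e f hr => ?_
  rcases hr with hp | rfl
  · rw [halfspacePair, halfspacePair, hG.halfspace_eq_of_elemPar hp,
      hG.halfspace_eq_of_elemPar hp.swap]
  · exact Sym2.eq_swap

theorem IsMedianGraph.not_par_of_adj_of_adj (hG : IsMedianGraph G) {a b c : V}
    (hab : G.Adj a b) (hbc : G.Adj b c) (hac : a ≠ c) : ¬ Par G (a, b) (b, c) := by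
  intro hpar
  have hba₁ : G.dist b a = 1 := dist_eq_one_iff_adj.mpr hab.symm
  have hbc₁ : G.dist b c = 1 := dist_eq_one_iff_adj.mpr hbc
  have hcb₁ : G.dist c b = 1 := dist_eq_one_iff_adj.mpr hbc.symm
  have hca₂ : G.dist c a = 2 := by rw [dist_comm]; exact hG.dist_eq_two hab hbc hac
  rcases Sym2.eq_iff.mp (hG.halfspacePair_eq_of_par hpar) with ⟨h, -⟩ | ⟨-, h⟩
  · have hb : b ∈ halfspace G (b, c) := by simp [halfspace, hbc₁]
    rw [← h] at hb
    simp [halfspace, hba₁] at hb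
  · have hc : c ∈ halfspace G (a, b).swap := by simp [halfspace, hcb₁, hca₂]
    rw [h] at hc
    simp [halfspace, hcb₁] at hc

end MedianGraph

section Hyperplane

variable {V : Type} {G : SimpleGraph V}

def dualHyperplane (G : SimpleGraph V) (e : V × V) : Set (V × V) :=
  {f | G.Adj f.1 f.2 ∧ Par G e f}

theorem isHyperplane_dualHyperplane {e : V × V} (he : G.Adj e.1 e.2) :
    IsHyperplane G (dualHyperplane G e) :=
  ⟨e, he, rfl⟩

theorem mem_dualHyperplane_self {e : V × V} (he : G.Adj e.1 e.2) : e ∈ dualHyperplane G e :=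
  ⟨he, Relation.EqvGen.refl e⟩

theorem dualHyperplane_eq_of_par {e e' : V × V} (h : Par G e e') :
    dualHyperplane G e = dualHyperplane G e' := by
  ext g
  exact and_congr_right fun _ =>
    ⟨(Relation.EqvGen.symm _ _ h).trans _ _ _, h.trans _ _ _⟩

theorem IsHyperplane.adj_of_mem {h : Set (V × V)} (hh : IsHyperplane G h) {g : V × V}
    (hg : g ∈ h) : G.Adj g.1 g.2 := by
  obtain ⟨e, -, rfl⟩ := hh
  exact hg.1

theorem IsHyperplane.mem_of_step {h : Set (V × V)} (hh : IsHyperplane G h) {g g' : V × V}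
    (hg : g ∈ h) (hr : ElemPar G g g' ∨ g' = g.swap) : g' ∈ h := by
  obtain ⟨e, -, rfl⟩ := hh
  refine ⟨?_, hg.2.trans _ _ _ (Relation.EqvGen.rel _ _ hr)⟩
  rcases hr with hp | rfl
  exacts [hp.2.1, hg.1.symm]

theorem IsHyperplane.par_of_mem {h : Set (V × V)} (hh : IsHyperplane G h) {g g' : V × V}
    (hg : g ∈ h) (hg' : g' ∈ h) : Par G g g' := by
  obtain ⟨e, -, rfl⟩ := hh
  exact (Relation.EqvGen.symm _ _ hg.2).trans _ _ _ hg'.2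

end Hyperplane

section CubicalMap

variable {V V' : Type} {G : SimpleGraph V} {H : SimpleGraph V'} {f : V → V'}
  {h : Set (V' × V')}

theorem IsCubicalMap.mem_hypPreimage_of_elemPar (hcub : IsCubicalMap G H f)
    (hh : IsHyperplane H h) {e e' : V × V} (hp : ElemPar G e e')
    (he : e ∈ hypPreimage G f h) : e' ∈ hypPreimage G f h := by
  obtain ⟨h₁, h₂, h₃, h₄, h₅, h₆⟩ := hp
  have hne : f e.1 ≠ f e.2 := (hh.adj_of_mem he.2).ne
  refine ⟨h₂, ?_⟩
  rcases hcub.2 _ _ _ _ ⟨h₁, h₄, h₂.symm, h₃.symm, h₅, h₆⟩ with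
    ⟨hc, -⟩ | ⟨hc, -⟩ | ⟨hc₁, hc₂, -⟩ | ⟨hc₁, hc₂, -, hc₄, hc₅, hc₆⟩
  · exact absurd hc hne
  · exact absurd hc hne
  · rw [hc₂, ← hc₁]
    exact he.2
  · refine hh.mem_of_step he.2 (Or.inl ⟨hh.adj_of_mem he.2, ?_, ?_, ?_, hc₁, hc₂⟩)
    · exact (hcub.1 _ _ h₂).resolve_left (Ne.symm hc₅)
    · exact (hcub.1 _ _ h₃).resolve_left (Ne.symm hc₆)
    · exact (hcub.1 _ _ h₄).resolve_left hc₄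

theorem IsCubicalMap.mem_hypPreimage_iff_of_par (hcub : IsCubicalMap G H f)
    (hh : IsHyperplane H h) {e e' : V × V} (hp : Par G e e') :
    e ∈ hypPreimage G f h ↔ e' ∈ hypPreimage G f h := by
  refine (hp.apply_eq (φ := (· ∈ hypPreimage G f h)) fun e e' hr => ?_).to_iff
  rcases hr with hp | rfl
  · exact propext ⟨hcub.mem_hypPreimage_of_elemPar hh hp,
      hcub.mem_hypPreimage_of_elemPar hh hp.symm⟩
  · exact propext ⟨fun he => ⟨he.1.symm, hh.mem_of_step he.2 (Or.inr rfl)⟩,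
      fun he => ⟨he.1.symm, hh.mem_of_step he.2 (Or.inr rfl)⟩⟩

theorem IsCubicalMap.dualHyperplane_subset_hypPreimage (hcub : IsCubicalMap G H f)
    (hh : IsHyperplane H h) {e : V × V} (he : e ∈ hypPreimage G f h) :
    dualHyperplane G e ⊆ hypPreimage G f h :=
  fun _ hg => (hcub.mem_hypPreimage_iff_of_par hh hg.2).mp he

theorem IsCubicalMap.hypPreimage_eq_sUnion (hcub : IsCubicalMap G H f)
    (hh : IsHyperplane H h) :
    hypPreimage G f h = ⋃₀ (dualHyperplane G '' hypPreimage G f h) := by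
  refine subset_antisymm (fun g hg => ?_) (Set.sUnion_subset ?_)
  · exact ⟨_, Set.mem_image_of_mem _ hg, mem_dualHyperplane_self hg.1⟩
  · rintro _ ⟨e, he, rfl⟩
    exact hcub.dualHyperplane_subset_hypPreimage hh he

theorem IsCubicalMap.not_crossHyp_of_subset_hypPreimage (hH : IsMedianGraph H)
    (hcub : IsCubicalMap G H f) (hh : IsHyperplane H h) {h₁ h₂ : Set (V × V)}
    (hh₁ : h₁ ⊆ hypPreimage G f h) (hh₂ : h₂ ⊆ hypPreimage G f h) : ¬ CrossHyp G h₁ h₂ := by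
  rintro ⟨x, y, z, w, hsq, hxy, hyz⟩
  have hfxy := (hh₁ hxy).2
  have hfyz := (hh₂ hyz).2
  have hfx_ne_fz : f x ≠ f z := by
    rcases hcub.2 _ _ _ _ hsq with ⟨hc, -⟩ | ⟨hc, -⟩ | ⟨hc, -⟩ | ⟨hc, -⟩
    exacts [absurd hc (hh.adj_of_mem hfxy).ne, absurd hc (hh.adj_of_mem hfxy).ne,
      absurd hc (hh.adj_of_mem hfyz).ne, hc]
  exact hH.not_par_of_adj_of_adj (hh.adj_of_mem hfxy) (hh.adj_of_mem hfyz) hfx_ne_fz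
    (hh.par_of_mem hfxy hfyz)

end CubicalMap

theorem stmt4_general {V V' : Type} (G : SimpleGraph V) (H : SimpleGraph V')
    (hH : IsMedianGraph H)
    (f : V → V') (hcub : IsCubicalMap G H f) :
    ∀ h : Set (V' × V'), IsHyperplane H h →
      ∃ Hs : Set (Set (V × V)),
        (∀ h' ∈ Hs, IsHyperplane G h') ∧
        hypPreimage G f h = ⋃₀ Hs ∧
        Hs.Pairwise (fun a b => Disjoint a b ∧ ¬ CrossHyp G a b) := by
  intro h hh
  refine ⟨dualHyperplane G '' hypPreimage G f h, ?_, hcub.hypPreimage_eq_sUnion hh, ?_⟩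
  · rintro _ ⟨e, he, rfl⟩
    exact isHyperplane_dualHyperplane he.1
  · rintro _ ⟨e, he, rfl⟩ _ ⟨e', he', rfl⟩ hne
    refine ⟨Set.disjoint_left.mpr fun g hg hg' => hne ?_, ?_⟩
    · exact dualHyperplane_eq_of_par (hg.2.trans _ _ _ (Relation.EqvGen.symm _ _ hg'.2))
    · exact hcub.not_crossHyp_of_subset_hypPreimage hH hh
        (hcub.dualHyperplane_subset_hypPreimage hh he)
        (hcub.dualHyperplane_subset_hypPreimage hh he')

/-- if `f : Y → Z` is a cubical map between CAT(0) cube complexes,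
then the inverse image of any hyperplane of `Z` is a disjoint union of hyperplanes
of `Y` (pairwise disjoint as edge sets, and pairwise non-crossing, i.e. disjoint
as subspaces). -/
theorem stmt4 {V V' : Type} (G : SimpleGraph V) (H : SimpleGraph V')
    (hG : IsMedianGraph G) (hH : IsMedianGraph H)
    (f : V → V') (hcub : IsCubicalMap G H f) :
    ∀ h : Set (V' × V'), IsHyperplane H h →
      ∃ Hs : Set (Set (V × V)),
        (∀ h' ∈ Hs, IsHyperplane G h') ∧
        hypPreimage G f h = ⋃₀ Hs ∧
        Hs.Pairwise (fun a b => Disjoint a b ∧ ¬ CrossHyp G a b) :=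
  stmt4_general G H hH f hcub
end

section
/- Let X(Γ) be the universal cover of the Salvetti complex of a right-angled Artin group G(Γ), and let 𝒫(Γ) be its extension complex. Fix non-adjacent vertices v, u ∈ 𝒫(Γ) and a standard geodesic l_u with Δ(l_u) = u. Then for any standard geodesic l with Δ(l) = v, the nearest-point projection π_{l_u}(l) is a single vertex of l_u, and this vertex is independent of the choice of l within its parallelism class. -/
/-! A model of the right-angled Artin group `G(Γ)` and of the vertex set of the
universal cover `X(Γ)` of its Salvetti complex: the group is the presented group
with commutator relations from `Γ`, and the `0`-skeleton of `X(Γ)` is identified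
with `G(Γ)`, with the `1`-skeleton given by the Cayley graph. -/

/-- The commutator relators of the right-angled Artin group on `Γ`. -/
def raagRels {ι : Type} (Γ : SimpleGraph ι) : Set (FreeGroup ι) :=
  {r | ∃ i j : ι, Γ.Adj i j ∧
    r = FreeGroup.of i * FreeGroup.of j * (FreeGroup.of i)⁻¹ * (FreeGroup.of j)⁻¹}

/-- The right-angled Artin group `G(Γ)`. -/
abbrev Raag {ι : Type} (Γ : SimpleGraph ι) := PresentedGroup (raagRels Γ)

/-- The standard generator of `G(Γ)` corresponding to a vertex of `Γ`. -/
def rgen {ι : Type} (Γ : SimpleGraph ι) (i : ι) : Raag Γ := PresentedGroup.of i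

/-- The Cayley graph of `G(Γ)` w.r.t. the standard generators: the 1-skeleton of
`X(Γ)`, with vertex set identified with `G(Γ)`. -/
def cayley {ι : Type} (Γ : SimpleGraph ι) : SimpleGraph (Raag Γ) where
  Adj g h := g ≠ h ∧ ∃ i : ι, h = g * rgen Γ i ∨ g = h * rgen Γ i
  symm := by constructor; rintro g h ⟨hne, i, hi⟩; exact ⟨hne.symm, i, hi.symm⟩
  loopless := by constructor; rintro g ⟨hne, _⟩; exact hne rfl

/-- The distance from a vertex to a set of vertices (in the graph metric, i.e.
the word metric). -/
noncomputable def setDistN {V : Type} (G : SimpleGraph V) (x : V) (B : Set V) : ℕ :=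
  sInf ((fun b => G.dist x b) '' B)

/-- Two nonempty subsets are parallel: the distance to one is constant on the
other, and vice versa (with a common constant). -/
def ParSets {V : Type} (G : SimpleGraph V) (A B : Set V) : Prop :=
  A.Nonempty ∧ B.Nonempty ∧ ∃ c : ℕ,
    (∀ a ∈ A, setDistN G a B = c) ∧ (∀ b ∈ B, setDistN G b A = c)

/-- `m` is the unique nearest point of `A` to `z` (the nearest-point projection
of `z` onto `A`). -/
def NearestPt {V : Type} (G : SimpleGraph V) (A : Set V) (z m : V) : Prop :=
  m ∈ A ∧ ∀ w ∈ A, w ≠ m → G.dist z m < G.dist z w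

/-- The (vertex set of the) standard geodesic through `g` in the direction of the
generator `i`. -/
def stdGeod {ι : Type} (Γ : SimpleGraph ι) (g : Raag Γ) (i : ι) : Set (Raag Γ) :=
  {h | ∃ n : ℤ, h = g * rgen Γ i ^ n}

/-- `A` is (the vertex set of) a standard geodesic of `X(Γ)`. -/
def IsStdGeod {ι : Type} (Γ : SimpleGraph ι) (A : Set (Raag Γ)) : Prop :=
  ∃ (g : Raag Γ) (i : ι), A = stdGeod Γ g i

/-- The standard geodesics `A` and `B` span a standard 2-flat. -/
def Span2 {ι : Type} (Γ : SimpleGraph ι) (A B : Set (Raag Γ)) : Prop :=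
  ∃ (g : Raag Γ) (i j : ι), Γ.Adj i j ∧ A = stdGeod Γ g i ∧ B = stdGeod Γ g j

/-- The vertices `Δ(A)`, `Δ(B)` of the extension complex `𝒫(Γ)` determined by
the standard geodesics `A`, `B` are adjacent: some parallel representatives span
a standard 2-flat. -/
def ClassAdj {ι : Type} (Γ : SimpleGraph ι) (A B : Set (Raag Γ)) : Prop :=
  ∃ A' B' : Set (Raag Γ), IsStdGeod Γ A' ∧ IsStdGeod Γ B' ∧
    ParSets (cayley Γ) A A' ∧ ParSets (cayley Γ) B B' ∧
    (Span2 Γ A' B' ∨ Span2 Γ B' A')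

/-- `F` is (the 0-skeleton of) a standard flat of `X(Γ)`: a coset of the standard
abelian subgroup generated by a finite clique of `Γ`. -/
def IsStdFlat {ι : Type} (Γ : SimpleGraph ι) (F : Set (Raag Γ)) : Prop :=
  ∃ (g : Raag Γ) (S : Set ι), S.Finite ∧ S.Pairwise Γ.Adj ∧
    F = (fun x => g * x) '' (Subgroup.closure (rgen Γ '' S) : Set (Raag Γ))

/-- The `Δ(l)`-level of height `x`: the set of vertices whose nearest-point
projection onto the standard geodesic `l` is `x`. -/
def levelSet {ι : Type} (Γ : SimpleGraph ι) (l : Set (Raag Γ)) (x : Raag Γ) :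
    Set (Raag Γ) :=
  {z | NearestPt (cayley Γ) l z x}

/-!
Vertices of `X(Γ)` are the elements of `G(Γ)`, and the graph distance is the word length
`|g⁻¹ h|`. A word is reduced when no letter `x` is followed, across letters commuting with `x`,
by `x⁻¹`; reduced words are geodesic, because `G(Γ)` acts on reduced words up to commutation
swaps, a letter `x` either cancelling the first such `x⁻¹` or being prepended.

Along a standard geodesic, `n ↦ |v jⁿ|` moves by `±1` (parity) and has no local maximum, so it
is V-shaped: every vertex has a unique nearest point on `h⟨j⟩`. If a step `p ↦ p x` moves this
nearest point, comparing lengths forces `x = j^{±1}` and puts the nearest point in `p · link(j)`.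
The standard geodesics parallel to `g⟨i⟩` are the `g u ⟨i⟩` with `u ∈ link(i)`, reached from `g`
by steps `i^{±1}` and link letters of `i`; a step moving the projection would then make `Δ(l)` and
`Δ(l_u)` equal or adjacent.
-/

lemma Nat.eq_add_of_step_of_le (g : ℕ → ℕ)
    (hstep : ∀ d, g (d + 1) = g d + 1 ∨ g d = g (d + 1) + 1)
    (hmax : ∀ d, ¬ (g (d + 1 + 1) < g (d + 1) ∧ g d < g (d + 1))) (h₀ : g 0 ≤ g 1) (d : ℕ) :
    g d = g 0 + d := by
  have hsucc : ∀ d, g (d + 1) = g d + 1 := by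
    intro d
    induction d with
    | zero => have := hstep 0; simp only [zero_add] at this ⊢; omega
    | succ d ih => have := hstep (d + 1); have := hmax d; omega
  induction d with
  | zero => rfl
  | succ d ih => rw [hsucc, ih, add_assoc]

lemma Int.exists_eq_add_natAbs_sub_of_step (f : ℤ → ℕ)
    (hstep : ∀ n, f (n + 1) = f n + 1 ∨ f n = f (n + 1) + 1)
    (hmax : ∀ n, ¬ (f (n + 1 + 1) < f (n + 1) ∧ f n < f (n + 1))) :
    ∃ k, ∀ n, f n = f k + (n - k).natAbs := by
  set k := Function.argmin f
  have hmin : ∀ n, f k ≤ f n := fun n => Function.argmin_le f n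
  have hup := Nat.eq_add_of_step_of_le (fun d => f (k + d))
    (fun d => by have := hstep (k + d); push_cast; ring_nf at this ⊢; omega)
    (fun d => by have := hmax (k + d); push_cast; ring_nf at this ⊢; omega)
    (by simpa using hmin (k + 1))
  have hdown := Nat.eq_add_of_step_of_le (fun d => f (k - d))
    (fun d => by have := hstep (k - d - 1); push_cast; ring_nf at this ⊢; omega)
    (fun d => by have := hmax (k - d - 2); push_cast; ring_nf at this ⊢; omega)
    (by simpa using hmin (k - 1))
  refine ⟨k, fun n => ?_⟩
  rcases le_total k n with h | h
  · have := hup (n - k).toNat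
    simp only [Int.toNat_of_nonneg (sub_nonneg.mpr h), add_sub_cancel, Nat.cast_zero, add_zero]
      at this
    omega
  · have := hdown (k - n).toNat
    simp only [Int.toNat_of_nonneg (sub_nonneg.mpr h), sub_sub_cancel, Nat.cast_zero, sub_zero]
      at this
    omega

lemma setDistN_eq {V : Type} {G : SimpleGraph V} {x : V} {B : Set V} {c : ℕ}
    (hle : ∀ b ∈ B, c ≤ G.dist x b) (hex : ∃ b ∈ B, G.dist x b = c) : setDistN G x B = c := by
  obtain ⟨b, hb, hbc⟩ := hex
  exact le_antisymm (Nat.sInf_le ⟨b, hb, hbc⟩) (le_csInf ⟨_, b, hb, rfl⟩ (by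
    rintro _ ⟨b', hb', rfl⟩
    exact hle b' hb'))

lemma ParSets.symm {V : Type} {G : SimpleGraph V} {A B : Set V} (h : ParSets G A B) :
    ParSets G B A := by
  obtain ⟨hA, hB, c, h₁, h₂⟩ := h
  exact ⟨hB, hA, c, h₂, h₁⟩

namespace Raag

open Relation Multiplicative

variable {ι : Type} {Γ : SimpleGraph ι}

section Lift

variable {G : Type*} [Group G]

def lift (f : ι → G) (hf : ∀ a b, Γ.Adj a b → Commute (f a) (f b)) : Raag Γ →* G :=
  PresentedGroup.toGroup (f := f) <| by
    rintro _ ⟨a, b, hab, rfl⟩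
    simpa [commutatorElement_def] using commutatorElement_eq_one_iff_mul_comm.mpr (hf a b hab).eq

@[simp]
lemma lift_rgen (f : ι → G) (hf : ∀ a b, Γ.Adj a b → Commute (f a) (f b)) (a : ι) :
    lift f hf (rgen Γ a) = f a :=
  PresentedGroup.toGroup.of _

end Lift

lemma rgen_commute {a b : ι} (h : Γ.Adj a b) : Commute (rgen Γ a) (rgen Γ b) := by
  have := PresentedGroup.one_of_mem (rels := raagRels Γ) ⟨a, b, h, rfl⟩
  simp only [map_mul, map_inv] at this
  exact commutatorElement_eq_one_iff_mul_comm.mp this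

/-! ### Words and reduced words -/

abbrev Letter (ι : Type) := ι × Bool

def Letter.inv (x : Letter ι) : Letter ι := (x.1, !x.2)

@[simp] lemma Letter.inv_inv (x : Letter ι) : x.inv.inv = x := by
  obtain ⟨a, b⟩ := x; cases b <;> rfl

@[simp] lemma Letter.inv_fst (x : Letter ι) : x.inv.1 = x.1 := rfl

variable (Γ) in
def ofLetter (x : Letter ι) : Raag Γ := if x.2 then rgen Γ x.1 else (rgen Γ x.1)⁻¹

@[simp] lemma ofLetter_inv (x : Letter ι) : ofLetter Γ x.inv = (ofLetter Γ x)⁻¹ := by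
  obtain ⟨a, b⟩ := x; cases b <;> simp [ofLetter, Letter.inv]

@[simp] lemma ofLetter_true (a : ι) : ofLetter Γ (a, true) = rgen Γ a := rfl

@[simp] lemma ofLetter_false (a : ι) : ofLetter Γ (a, false) = (rgen Γ a)⁻¹ := rfl

variable (Γ) in
def ofWord (L : List (Letter ι)) : Raag Γ := (L.map (ofLetter Γ)).prod

@[simp] lemma ofWord_nil : ofWord Γ ([] : List (Letter ι)) = 1 := rfl

@[simp] lemma ofWord_cons (x : Letter ι) (L : List (Letter ι)) :
    ofWord Γ (x :: L) = ofLetter Γ x * ofWord Γ L := by simp [ofWord]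

@[simp] lemma ofWord_append (L M : List (Letter ι)) :
    ofWord Γ (L ++ M) = ofWord Γ L * ofWord Γ M := by simp [ofWord]

lemma ofWord_reverse_map_inv (L : List (Letter ι)) :
    ofWord Γ (L.map Letter.inv).reverse = (ofWord Γ L)⁻¹ := by
  induction L with
  | nil => simp
  | cons x L ih => simp [ih]

lemma ofLetter_commute {x y : Letter ι} (h : Γ.Adj x.1 y.1) :
    Commute (ofLetter Γ x) (ofLetter Γ y) := by
  have := rgen_commute h
  unfold ofLetter
  split_ifs <;> simp [this]

lemma ofLetter_commute_ofWord {x : Letter ι} {L : List (Letter ι)}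
    (h : ∀ z ∈ L, Γ.Adj x.1 z.1) : Commute (ofLetter Γ x) (ofWord Γ L) := by
  induction L with
  | nil => exact Commute.one_right _
  | cons y L ih =>
    simp only [List.forall_mem_cons] at h
    simpa using (ofLetter_commute h.1).mul_right (ih h.2)

lemma ofWord_surjective : Function.Surjective (ofWord Γ : List (Letter ι) → Raag Γ) := by
  let H : Subgroup (Raag Γ) :=
    { carrier := Set.range (ofWord Γ)
      one_mem' := ⟨[], rfl⟩
      mul_mem' := by rintro _ _ ⟨L, rfl⟩ ⟨M, rfl⟩; exact ⟨L ++ M, ofWord_append L M⟩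
      inv_mem' := by rintro _ ⟨L, rfl⟩; exact ⟨_, ofWord_reverse_map_inv L⟩ }
  exact PresentedGroup.generated_by _ H fun a => ⟨[(a, true)], by simp [ofLetter, rgen]⟩

variable (Γ) in
def HasCancellingPair (L : List (Letter ι)) : Prop :=
  ∃ (A B C : List (Letter ι)) (x : Letter ι),
    L = A ++ x :: (B ++ x.inv :: C) ∧ ∀ z ∈ B, Γ.Adj x.1 z.1

lemma not_hasCancellingPair_nil : ¬ HasCancellingPair Γ ([] : List (Letter ι)) := by
  rintro ⟨A, B, C, x, h, -⟩
  simp at h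

lemma HasCancellingPair.cons {L : List (Letter ι)} (y : Letter ι) (h : HasCancellingPair Γ L) :
    HasCancellingPair Γ (y :: L) := by
  obtain ⟨A, B, C, x, rfl, hB⟩ := h
  exact ⟨y :: A, B, C, x, rfl, hB⟩

open scoped Classical in
variable (Γ) in
/-- Scans `L` for a letter `x⁻¹` that can be brought next to `x` through commuting letters,
and deletes it. -/
noncomputable def cancelScan (x : Letter ι) : List (Letter ι) → Option (List (Letter ι))
  | [] => none
  | y :: L =>
    if y = x.inv then some L
    else if Γ.Adj x.1 y.1 then (cancelScan x L).map (y :: ·) else none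

section CancelScan

variable {x y : Letter ι}

lemma cancelScan_cons_of_eq_inv (L : List (Letter ι)) (h : y = x.inv) :
    cancelScan Γ x (y :: L) = some L := by
  simp [cancelScan, h]

lemma cancelScan_cons_of_adj (L : List (Letter ι)) (h : Γ.Adj x.1 y.1) :
    cancelScan Γ x (y :: L) = (cancelScan Γ x L).map (y :: ·) := by
  have : y ≠ x.inv := by rintro rfl; simp at h
  simp [cancelScan, this, h]

lemma cancelScan_cons_of_not_adj (L : List (Letter ι)) (h₁ : y ≠ x.inv) (h₂ : ¬ Γ.Adj x.1 y.1) :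
    cancelScan Γ x (y :: L) = none := by
  simp [cancelScan, h₁, h₂]

lemma cancelScan_append_of_adj {P : List (Letter ι)} (M : List (Letter ι))
    (hP : ∀ z ∈ P, Γ.Adj x.1 z.1) :
    cancelScan Γ x (P ++ M) = (cancelScan Γ x M).map (P ++ ·) := by
  induction P with
  | nil => simp
  | cons p P ih =>
    simp only [List.forall_mem_cons] at hP
    rw [List.cons_append, cancelScan_cons_of_adj _ hP.1, ih hP.2, Option.map_map]
    rfl

lemma cancelScan_append_inv_cons {P : List (Letter ι)} (T : List (Letter ι))
    (hP : ∀ z ∈ P, Γ.Adj x.1 z.1) :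
    cancelScan Γ x (P ++ x.inv :: T) = some (P ++ T) := by
  rw [cancelScan_append_of_adj _ hP, cancelScan_cons_of_eq_inv _ rfl]
  rfl

lemma exists_eq_append_inv_cons_of_cancelScan {L L' : List (Letter ι)}
    (h : cancelScan Γ x L = some L') :
    ∃ P T, (∀ z ∈ P, Γ.Adj x.1 z.1) ∧ L = P ++ x.inv :: T ∧ L' = P ++ T := by
  induction L generalizing L' with
  | nil => simp [cancelScan] at h
  | cons y L ih =>
    by_cases hy : y = x.inv
    · rw [cancelScan_cons_of_eq_inv L hy, Option.some_inj] at h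
      exact ⟨[], L, by simp, by simp [hy], by simp [h]⟩
    by_cases hxy : Γ.Adj x.1 y.1
    · rw [cancelScan_cons_of_adj L hxy, Option.map_eq_some_iff] at h
      obtain ⟨M, hM, rfl⟩ := h
      obtain ⟨P, T, hP, rfl, rfl⟩ := ih hM
      exact ⟨y :: P, T, List.forall_mem_cons.mpr ⟨hxy, hP⟩, rfl, rfl⟩
    · simp [cancelScan_cons_of_not_adj L hy hxy] at h

lemma isSome_cancelScan_iff {L : List (Letter ι)} :
    (cancelScan Γ x L).isSome ↔
      ∃ P T, (∀ z ∈ P, Γ.Adj x.1 z.1) ∧ L = P ++ x.inv :: T := by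
  constructor
  · intro h
    obtain ⟨L', hL'⟩ := Option.isSome_iff_exists.mp h
    obtain ⟨P, T, hP, hL, -⟩ := exists_eq_append_inv_cons_of_cancelScan hL'
    exact ⟨P, T, hP, hL⟩
  · rintro ⟨P, T, hP, rfl⟩
    simp [cancelScan_append_inv_cons T hP]

lemma isSome_cancelScan_insert {w : Letter ι} (hw : Γ.Adj x.1 w.1) (P T : List (Letter ι)) :
    (cancelScan Γ x (P ++ w :: T)).isSome = (cancelScan Γ x (P ++ T)).isSome := by
  induction P with
  | nil => simp [cancelScan_cons_of_adj T hw]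
  | cons p P ih =>
    simp only [List.cons_append]
    by_cases hp : p = x.inv
    · simp [cancelScan_cons_of_eq_inv _ hp]
    by_cases hxp : Γ.Adj x.1 p.1
    · simp [cancelScan_cons_of_adj _ hxp, ih]
    · simp [cancelScan_cons_of_not_adj _ hp hxp]

end CancelScan

lemma hasCancellingPair_cons_iff {y : Letter ι} {L : List (Letter ι)} :
    HasCancellingPair Γ (y :: L) ↔ (cancelScan Γ y L).isSome ∨ HasCancellingPair Γ L := by
  rw [isSome_cancelScan_iff]
  constructor
  · rintro ⟨_ | ⟨a, A⟩, B, C, x, h, hB⟩ <;> simp only [List.nil_append, List.cons_append,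
      List.cons.injEq] at h <;> obtain ⟨rfl, rfl⟩ := h
    · exact Or.inl ⟨B, C, hB, rfl⟩
    · exact Or.inr ⟨A, B, C, x, rfl, hB⟩
  · rintro (⟨B, C, hB, rfl⟩ | h)
    · exact ⟨[], B, C, y, rfl, hB⟩
    · exact h.cons y

lemma HasCancellingPair.insert {w : Letter ι} {P T : List (Letter ι)}
    (hP : ∀ y ∈ P, Γ.Adj y.1 w.1) (h : HasCancellingPair Γ (P ++ T)) :
    HasCancellingPair Γ (P ++ w :: T) := by
  induction P with
  | nil => exact h.cons w
  | cons p P ih =>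
    simp only [List.forall_mem_cons] at hP
    simp only [List.cons_append, hasCancellingPair_cons_iff] at h ⊢
    rw [isSome_cancelScan_insert hP.1]
    exact h.imp_right (ih hP.2)

/-! ### The action on reduced words -/

variable (Γ) in
noncomputable def push (x : Letter ι) (L : List (Letter ι)) : List (Letter ι) :=
  (cancelScan Γ x L).getD (x :: L)

section Push

variable {x y : Letter ι} {L : List (Letter ι)}

lemma push_of_cancelScan_eq_some {L' : List (Letter ι)} (h : cancelScan Γ x L = some L') :
    push Γ x L = L' := by
  simp [push, h]

lemma push_of_cancelScan_eq_none (h : cancelScan Γ x L = none) : push Γ x L = x :: L := by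
  simp [push, h]

lemma length_push_le (x : Letter ι) (L : List (Letter ι)) :
    (push Γ x L).length ≤ L.length + 1 := by
  cases h : cancelScan Γ x L with
  | none => simp [push_of_cancelScan_eq_none h]
  | some L' =>
    obtain ⟨P, T, -, rfl, rfl⟩ := exists_eq_append_inv_cons_of_cancelScan h
    simp [push_of_cancelScan_eq_some h]
    omega

lemma push_of_not_hasCancellingPair_cons (h : ¬ HasCancellingPair Γ (x :: L)) :
    push Γ x L = x :: L :=
  push_of_cancelScan_eq_none <| Option.not_isSome_iff_eq_none.mp fun hs =>
    h (hasCancellingPair_cons_iff.mpr (Or.inl hs))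

lemma not_hasCancellingPair_push (h : ¬ HasCancellingPair Γ L) :
    ¬ HasCancellingPair Γ (push Γ x L) := by
  cases hs : cancelScan Γ x L with
  | none =>
    rw [push_of_cancelScan_eq_none hs, hasCancellingPair_cons_iff, hs]
    simpa using h
  | some L' =>
    obtain ⟨P, T, hP, rfl, rfl⟩ := exists_eq_append_inv_cons_of_cancelScan hs
    rw [push_of_cancelScan_eq_some hs]
    exact fun h' => h (h'.insert fun z hz => by simpa using (hP z hz).symm)

end Push

variable (Γ) in
def CommSwap (L M : List (Letter ι)) : Prop :=
  ∃ (A : List (Letter ι)) (x y : Letter ι) (B : List (Letter ι)),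
    Γ.Adj x.1 y.1 ∧ L = A ++ x :: y :: B ∧ M = A ++ y :: x :: B

lemma CommSwap.cons {L M : List (Letter ι)} (p : Letter ι) (h : CommSwap Γ L M) :
    CommSwap Γ (p :: L) (p :: M) := by
  obtain ⟨A, x, y, B, hxy, rfl, rfl⟩ := h
  exact ⟨p :: A, x, y, B, hxy, rfl, rfl⟩

lemma CommSwap.length_eq {L M : List (Letter ι)} (h : CommSwap Γ L M) : L.length = M.length := by
  obtain ⟨A, x, y, B, -, rfl, rfl⟩ := h
  simp

lemma length_eq_of_eqvGen_commSwap {L M : List (Letter ι)} (h : EqvGen (CommSwap Γ) L M) :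
    L.length = M.length := by
  induction h with
  | rel _ _ h => exact h.length_eq
  | refl => rfl
  | symm _ _ _ ih => exact ih.symm
  | trans _ _ _ _ _ ih₁ ih₂ => exact ih₁.trans ih₂

lemma eqvGen_commSwap_cons {L M : List (Letter ι)} (p : Letter ι) (h : EqvGen (CommSwap Γ) L M) :
    EqvGen (CommSwap Γ) (p :: L) (p :: M) := by
  induction h with
  | rel _ _ h => exact .rel _ _ (h.cons p)
  | refl => exact .refl _
  | symm _ _ _ ih => exact ih.symm
  | trans _ _ _ _ _ ih₁ ih₂ => exact ih₁.trans _ _ _ ih₂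

lemma eqvGen_commSwap_cons_append {w : Letter ι} (P T : List (Letter ι))
    (hP : ∀ z ∈ P, Γ.Adj w.1 z.1) : EqvGen (CommSwap Γ) (w :: (P ++ T)) (P ++ w :: T) := by
  induction P with
  | nil => exact .refl _
  | cons p P ih =>
    simp only [List.forall_mem_cons] at hP
    exact (EqvGen.rel _ _ ⟨[], w, p, P ++ T, hP.1, rfl, rfl⟩).trans _ _ _
      (eqvGen_commSwap_cons p (ih hP.2))

lemma cancelScan_rel_cons_cons {x u v : Letter ι} (huv : Γ.Adj u.1 v.1) (B : List (Letter ι)) :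
    Option.Rel (EqvGen (CommSwap Γ)) (cancelScan Γ x (u :: v :: B))
      (cancelScan Γ x (v :: u :: B)) := by
  by_cases hu : u = x.inv
  · subst hu
    rw [cancelScan_cons_of_eq_inv _ rfl, cancelScan_cons_of_adj _ (by simpa using huv),
      cancelScan_cons_of_eq_inv _ rfl]
    exact .some (.refl _)
  by_cases hv : v = x.inv
  · subst hv
    rw [cancelScan_cons_of_eq_inv (u :: B) rfl, cancelScan_cons_of_adj _ (by simpa using huv.symm),
      cancelScan_cons_of_eq_inv _ rfl]
    exact .some (.refl _)
  by_cases hxu : Γ.Adj x.1 u.1 <;> by_cases hxv : Γ.Adj x.1 v.1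
  · rw [cancelScan_cons_of_adj _ hxu, cancelScan_cons_of_adj _ hxv,
      cancelScan_cons_of_adj _ hxv, cancelScan_cons_of_adj _ hxu]
    cases cancelScan Γ x B with
    | none => exact .none
    | some R => exact .some (.rel _ _ ⟨[], u, v, R, huv, rfl, rfl⟩)
  · rw [cancelScan_cons_of_adj _ hxu, cancelScan_cons_of_not_adj _ hv hxv,
      cancelScan_cons_of_not_adj _ hv hxv]
    exact .none
  · rw [cancelScan_cons_of_not_adj _ hu hxu, cancelScan_cons_of_adj _ hxv,
      cancelScan_cons_of_not_adj _ hu hxu]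
    exact .none
  · rw [cancelScan_cons_of_not_adj _ hu hxu, cancelScan_cons_of_not_adj _ hv hxv]
    exact .none

lemma cancelScan_rel_of_commSwap {x : Letter ι} {L M : List (Letter ι)} (h : CommSwap Γ L M) :
    Option.Rel (EqvGen (CommSwap Γ)) (cancelScan Γ x L) (cancelScan Γ x M) := by
  obtain ⟨A, u, v, B, huv, rfl, rfl⟩ := h
  induction A with
  | nil => exact cancelScan_rel_cons_cons huv B
  | cons a A ih =>
    simp only [List.cons_append]
    by_cases ha : a = x.inv
    · rw [cancelScan_cons_of_eq_inv _ ha, cancelScan_cons_of_eq_inv _ ha]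
      exact .some (.rel _ _ ⟨A, u, v, B, huv, rfl, rfl⟩)
    by_cases hxa : Γ.Adj x.1 a.1
    · rw [cancelScan_cons_of_adj _ hxa, cancelScan_cons_of_adj _ hxa]
      generalize cancelScan Γ x (A ++ u :: v :: B) = o₁,
        cancelScan Γ x (A ++ v :: u :: B) = o₂ at ih
      cases ih with
      | none => exact .none
      | some h => exact .some (eqvGen_commSwap_cons a h)
    · rw [cancelScan_cons_of_not_adj _ ha hxa, cancelScan_cons_of_not_adj _ ha hxa]
      exact .none

lemma push_eqvGen_of_commSwap {x : Letter ι} {L M : List (Letter ι)} (h : CommSwap Γ L M) :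
    EqvGen (CommSwap Γ) (push Γ x L) (push Γ x M) := by
  have hrel := cancelScan_rel_of_commSwap (x := x) h
  unfold push
  generalize cancelScan Γ x L = o₁, cancelScan Γ x M = o₂ at hrel
  cases hrel with
  | some h => exact h
  | none => exact .rel _ _ (h.cons x)

lemma push_eqvGen_of_eqvGen {x : Letter ι} {L M : List (Letter ι)}
    (h : EqvGen (CommSwap Γ) L M) : EqvGen (CommSwap Γ) (push Γ x L) (push Γ x M) := by
  induction h with
  | rel _ _ h => exact push_eqvGen_of_commSwap h
  | refl => exact .refl _
  | symm _ _ _ ih => exact ih.symm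
  | trans _ _ _ _ _ ih₁ ih₂ => exact ih₁.trans _ _ _ ih₂

section PushRelations

variable {x y : Letter ι}

lemma push_inv_push_eqvGen {L : List (Letter ι)} (h : ¬ HasCancellingPair Γ L) :
    EqvGen (CommSwap Γ) (push Γ x.inv (push Γ x L)) L := by
  cases hs : cancelScan Γ x L with
  | none =>
    rw [push_of_cancelScan_eq_none hs,
      push_of_cancelScan_eq_some (cancelScan_cons_of_eq_inv L (by simp))]
    exact .refl _
  | some L' =>
    obtain ⟨P, T, hP, rfl, rfl⟩ := exists_eq_append_inv_cons_of_cancelScan hs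
    have hP' : ∀ z ∈ P, Γ.Adj x.inv.1 z.1 := by simpa using hP
    have hT : cancelScan Γ x.inv T = none := by
      refine Option.not_isSome_iff_eq_none.mp fun hT => h ?_
      obtain ⟨Q, S, hQ, rfl⟩ := isSome_cancelScan_iff.mp hT
      exact ⟨P, Q, S, x.inv, by simp, hQ⟩
    rw [push_of_cancelScan_eq_some hs,
      push_of_cancelScan_eq_none (by rw [cancelScan_append_of_adj _ hP', hT]; rfl)]
    exact eqvGen_commSwap_cons_append P T hP'

lemma push_push_of_cancelScan_eq_none (hxy : Γ.Adj x.1 y.1) {L L' : List (Letter ι)}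
    (hx : cancelScan Γ x L = some L') (hy : cancelScan Γ y L = none) :
    push Γ x (push Γ y L) = push Γ y (push Γ x L) := by
  obtain ⟨P, T, hP, rfl, rfl⟩ := exists_eq_append_inv_cons_of_cancelScan hx
  have hy' : cancelScan Γ y (P ++ T) = none := by
    rw [← Option.not_isSome_iff_eq_none,
      ← isSome_cancelScan_insert (w := x.inv) (by simpa using hxy.symm), hy]
    simp
  rw [push_of_cancelScan_eq_none hy, push_of_cancelScan_eq_some hx, push_of_cancelScan_eq_none hy',
    push_of_cancelScan_eq_some (by rw [cancelScan_cons_of_adj _ hxy, hx]; rfl)]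

lemma push_push_append_inv_cons_append_inv_cons {P M S : List (Letter ι)}
    (hP : ∀ z ∈ P, Γ.Adj x.1 z.1) (hPM : ∀ z ∈ P ++ x.inv :: M, Γ.Adj y.1 z.1) :
    push Γ x (push Γ y (P ++ x.inv :: (M ++ y.inv :: S))) =
      push Γ y (push Γ x (P ++ x.inv :: (M ++ y.inv :: S))) := by
  have hPM' : ∀ z ∈ P ++ M, Γ.Adj y.1 z.1 := fun z hz => hPM z (by
    simp only [List.mem_append, List.mem_cons] at hz ⊢; tauto)
  have hy : cancelScan Γ y (P ++ x.inv :: (M ++ y.inv :: S)) = some (P ++ x.inv :: (M ++ S)) := by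
    simpa using cancelScan_append_inv_cons S hPM
  have hy' : cancelScan Γ y (P ++ (M ++ y.inv :: S)) = some (P ++ (M ++ S)) := by
    simpa using cancelScan_append_inv_cons S hPM'
  rw [push_of_cancelScan_eq_some hy, push_of_cancelScan_eq_some (cancelScan_append_inv_cons _ hP),
    push_of_cancelScan_eq_some (cancelScan_append_inv_cons _ hP), push_of_cancelScan_eq_some hy']

lemma push_push_eqvGen (hxy : Γ.Adj x.1 y.1) (L : List (Letter ι)) :
    EqvGen (CommSwap Γ) (push Γ x (push Γ y L)) (push Γ y (push Γ x L)) := by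
  cases hx : cancelScan Γ x L with
  | none =>
    cases hy : cancelScan Γ y L with
    | none =>
      rw [push_of_cancelScan_eq_none hx, push_of_cancelScan_eq_none hy,
        push_of_cancelScan_eq_none (by rw [cancelScan_cons_of_adj _ hxy, hx]; rfl),
        push_of_cancelScan_eq_none (by rw [cancelScan_cons_of_adj _ hxy.symm, hy]; rfl)]
      exact .rel _ _ ⟨[], x, y, L, hxy, rfl, rfl⟩
    | some _ =>
      rw [push_push_of_cancelScan_eq_none hxy.symm hy hx]
      exact .refl _
  | some Lx =>
    cases hy : cancelScan Γ y L with
    | none => rw [push_push_of_cancelScan_eq_none hxy hx hy]; exact .refl _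
    | some Ly =>
      obtain ⟨P, T, hP, hL, -⟩ := exists_eq_append_inv_cons_of_cancelScan hx
      obtain ⟨Q, S, hQ, hL', -⟩ := exists_eq_append_inv_cons_of_cancelScan hy
      have hne : x.inv ≠ y.inv := fun h => Γ.ne_of_adj hxy (by simpa using congrArg Prod.fst h)
      rcases List.append_eq_append_iff.mp (hL.symm.trans hL') with
        ⟨_ | ⟨e, M⟩, rfl, hT⟩ | ⟨_ | ⟨e, M⟩, rfl, hS⟩
      · exact absurd (List.cons.inj hT).1 hne
      · rw [List.cons_append] at hT
        obtain ⟨rfl, rfl⟩ := List.cons.inj hT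
        subst hL
        rw [push_push_append_inv_cons_append_inv_cons hP hQ]
        exact .refl _
      · exact absurd (List.cons.inj hS).1 hne.symm
      · rw [List.cons_append] at hS
        obtain ⟨rfl, rfl⟩ := List.cons.inj hS
        subst hL'
        rw [push_push_append_inv_cons_append_inv_cons hQ hP]
        exact .refl _

end PushRelations

variable (Γ) in
def NormalForm : Type :=
  Quotient ((EqvGen.setoid (CommSwap Γ)).comap
    (Subtype.val : {L : List (Letter ι) // ¬ HasCancellingPair Γ L} → List (Letter ι)))

namespace NormalForm

def mk (L : List (Letter ι)) (h : ¬ HasCancellingPair Γ L) : NormalForm Γ := Quotient.mk _ ⟨L, h⟩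

variable (Γ) in
def nil : NormalForm Γ := mk [] not_hasCancellingPair_nil

lemma mk_eq_mk {L M : List (Letter ι)} {hL : ¬ HasCancellingPair Γ L}
    {hM : ¬ HasCancellingPair Γ M} (h : EqvGen (CommSwap Γ) L M) : mk L hL = mk M hM :=
  Quotient.sound h

lemma ind {p : NormalForm Γ → Prop} (h : ∀ L hL, p (mk L hL)) (q : NormalForm Γ) : p q :=
  Quotient.ind (fun L => h L.1 L.2) q

def length : NormalForm Γ → ℕ :=
  Quotient.lift (fun L => L.1.length) fun _ _ h => length_eq_of_eqvGen_commSwap h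

@[simp] lemma length_mk (L : List (Letter ι)) (h : ¬ HasCancellingPair Γ L) :
    (mk L h).length = L.length := rfl

noncomputable def push (x : Letter ι) : NormalForm Γ → NormalForm Γ :=
  Quotient.map (fun L => ⟨Raag.push Γ x L.1, not_hasCancellingPair_push L.2⟩)
    fun _ _ h => push_eqvGen_of_eqvGen h

@[simp] lemma push_mk (x : Letter ι) (L : List (Letter ι)) (h : ¬ HasCancellingPair Γ L) :
    push x (mk L h) = mk (Raag.push Γ x L) (not_hasCancellingPair_push h) := rfl

noncomputable def pushPerm (x : Letter ι) : Equiv.Perm (NormalForm Γ) where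
  toFun := push x
  invFun := push x.inv
  left_inv := ind fun _ h => mk_eq_mk (push_inv_push_eqvGen h)
  right_inv := ind fun _ h => mk_eq_mk (by simpa using push_inv_push_eqvGen (x := x.inv) h)

lemma pushPerm_commute {x y : Letter ι} (hxy : Γ.Adj x.1 y.1) :
    Commute (pushPerm (Γ := Γ) x) (pushPerm y) :=
  Equiv.ext <| ind fun L _ => mk_eq_mk (push_push_eqvGen hxy L)

end NormalForm

variable (Γ) in
noncomputable def normalFormAction : Raag Γ →* Equiv.Perm (NormalForm Γ) :=
  lift (fun a => NormalForm.pushPerm (a, true)) fun _ _ h => NormalForm.pushPerm_commute h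

lemma normalFormAction_ofLetter (x : Letter ι) :
    normalFormAction Γ (ofLetter Γ x) = NormalForm.pushPerm x := by
  obtain ⟨a, _ | _⟩ := x <;> simp [ofLetter, normalFormAction]
  rfl

lemma normalFormAction_ofWord_cons (x : Letter ι) (L : List (Letter ι)) (q : NormalForm Γ) :
    normalFormAction Γ (ofWord Γ (x :: L)) q =
      NormalForm.push x (normalFormAction Γ (ofWord Γ L) q) := by
  rw [ofWord_cons, map_mul, Equiv.Perm.mul_apply, normalFormAction_ofLetter]
  rfl

/-! ### Word length -/

variable (Γ) in
noncomputable def wordLength (g : Raag Γ) : ℕ :=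
  sInf {n | ∃ L : List (Letter ι), L.length = n ∧ ofWord Γ L = g}

lemma wordLength_ofWord_le (L : List (Letter ι)) : wordLength Γ (ofWord Γ L) ≤ L.length :=
  Nat.sInf_le ⟨L, rfl, rfl⟩

lemma exists_ofWord_eq (g : Raag Γ) :
    ∃ L : List (Letter ι), L.length = wordLength Γ g ∧ ofWord Γ L = g := by
  obtain ⟨L, rfl⟩ := ofWord_surjective g
  exact Nat.sInf_mem (s := {n | ∃ M : List (Letter ι), M.length = n ∧ ofWord Γ M = ofWord Γ L})
    ⟨L.length, L, rfl, rfl⟩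

lemma normalFormAction_ofWord_mk_nil {L : List (Letter ι)} (h : ¬ HasCancellingPair Γ L) :
    normalFormAction Γ (ofWord Γ L) (.nil Γ) = .mk L h := by
  induction L with
  | nil => rfl
  | cons x L ih =>
    have hL : ¬ HasCancellingPair Γ L := fun h' => h (h'.cons x)
    rw [normalFormAction_ofWord_cons, ih hL, NormalForm.push_mk]
    congr 1
    exact push_of_not_hasCancellingPair_cons h

lemma length_normalFormAction_ofWord_le (L : List (Letter ι)) (q : NormalForm Γ) :
    (normalFormAction Γ (ofWord Γ L) q).length ≤ q.length + L.length := by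
  induction L with
  | nil => simp
  | cons x L ih =>
    rw [normalFormAction_ofWord_cons]
    generalize normalFormAction Γ (ofWord Γ L) q = q' at ih
    induction q' using NormalForm.ind with
    | h M hM =>
      have := length_push_le (Γ := Γ) x M
      simp only [NormalForm.push_mk, NormalForm.length_mk, List.length_cons] at ih ⊢
      omega

theorem wordLength_ofWord_of_not_hasCancellingPair {L : List (Letter ι)}
    (h : ¬ HasCancellingPair Γ L) : wordLength Γ (ofWord Γ L) = L.length := by
  refine (wordLength_ofWord_le L).antisymm ?_
  obtain ⟨M, hM, hML⟩ := exists_ofWord_eq (ofWord Γ L)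
  have := length_normalFormAction_ofWord_le M (.nil Γ)
  rw [hML, normalFormAction_ofWord_mk_nil h] at this
  simpa [hM, NormalForm.nil] using this

lemma ofWord_append_cons_append_inv_cons {x : Letter ι} (A B C : List (Letter ι))
    (hB : ∀ z ∈ B, Γ.Adj x.1 z.1) :
    ofWord Γ (A ++ x :: (B ++ x.inv :: C)) = ofWord Γ (A ++ B ++ C) := by
  have := (ofLetter_commute_ofWord (Γ := Γ) hB).eq
  simp only [ofWord_append, ofWord_cons, ofLetter_inv]
  rw [← mul_assoc (ofLetter Γ x), this]
  group

lemma HasCancellingPair.wordLength_ofWord_add_two_le {L : List (Letter ι)}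
    (h : HasCancellingPair Γ L) : wordLength Γ (ofWord Γ L) + 2 ≤ L.length := by
  obtain ⟨A, B, C, x, rfl, hB⟩ := h
  have := wordLength_ofWord_le (Γ := Γ) (A ++ B ++ C)
  rw [ofWord_append_cons_append_inv_cons A B C hB]
  simp only [List.length_append, List.length_cons] at this ⊢
  omega

lemma not_hasCancellingPair_iff {L : List (Letter ι)} :
    ¬ HasCancellingPair Γ L ↔ wordLength Γ (ofWord Γ L) = L.length :=
  ⟨wordLength_ofWord_of_not_hasCancellingPair, fun h h' => by
    have := h'.wordLength_ofWord_add_two_le; omega⟩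

lemma wordLength_mul_le (g h : Raag Γ) :
    wordLength Γ (g * h) ≤ wordLength Γ g + wordLength Γ h := by
  obtain ⟨L, hL, rfl⟩ := exists_ofWord_eq g
  obtain ⟨M, hM, rfl⟩ := exists_ofWord_eq h
  simpa [← hL, ← hM] using wordLength_ofWord_le (Γ := Γ) (L ++ M)

@[simp]
lemma wordLength_inv (g : Raag Γ) : wordLength Γ g⁻¹ = wordLength Γ g := by
  suffices h : ∀ g : Raag Γ, wordLength Γ g⁻¹ ≤ wordLength Γ g from
    (h g).antisymm (by simpa using h g⁻¹)
  intro g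
  obtain ⟨L, hL, rfl⟩ := exists_ofWord_eq g
  simpa [← hL, ofWord_reverse_map_inv] using
    wordLength_ofWord_le (Γ := Γ) (L.map Letter.inv).reverse

lemma wordLength_ofLetter_le (x : Letter ι) : wordLength Γ (ofLetter Γ x) ≤ 1 := by
  simpa using wordLength_ofWord_le (Γ := Γ) [x]

lemma wordLength_zpow_le (g : Raag Γ) (n : ℤ) :
    wordLength Γ (g ^ n) ≤ n.natAbs * wordLength Γ g := by
  have hpow : ∀ m : ℕ, wordLength Γ (g ^ m) ≤ m * wordLength Γ g := by
    intro m
    induction m with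
    | zero => simpa using wordLength_ofWord_le (Γ := Γ) []
    | succ m ih =>
      rw [pow_succ, add_mul, one_mul]
      exact (wordLength_mul_le _ _).trans (by omega)
  cases n with
  | ofNat m => simpa using hpow m
  | negSucc m => simpa [zpow_negSucc] using hpow (m + 1)

lemma wordLength_ofLetter_mul_le (x : Letter ι) (g : Raag Γ) :
    wordLength Γ (ofLetter Γ x * g) ≤ wordLength Γ g + 1 := by
  have := wordLength_ofLetter_le (Γ := Γ) x
  have := wordLength_mul_le (ofLetter Γ x) g
  omega

lemma wordLength_le_ofLetter_mul (x : Letter ι) (g : Raag Γ) :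
    wordLength Γ g ≤ wordLength Γ (ofLetter Γ x * g) + 1 := by
  simpa using wordLength_ofLetter_mul_le x.inv (ofLetter Γ x * g)

section Parity

variable (Γ) in
noncomputable def parity : Raag Γ →* Multiplicative (ZMod 2) :=
  lift (fun _ => ofAdd 1) fun _ _ _ => Commute.all _ _

lemma parity_ofLetter (x : Letter ι) : parity Γ (ofLetter Γ x) = ofAdd 1 := by
  obtain ⟨a, _ | _⟩ := x <;> simp [ofLetter, parity]
  rfl

lemma parity_ofWord (L : List (Letter ι)) : parity Γ (ofWord Γ L) = ofAdd (L.length : ZMod 2) := by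
  induction L with
  | nil => simp
  | cons x L ih => simp [ih, parity_ofLetter, ← ofAdd_add, add_comm]

lemma parity_eq_ofAdd_wordLength (g : Raag Γ) : parity Γ g = ofAdd (wordLength Γ g : ZMod 2) := by
  obtain ⟨L, hL, rfl⟩ := exists_ofWord_eq g
  rw [parity_ofWord, hL]

lemma wordLength_mul_ofLetter (g : Raag Γ) (x : Letter ι) :
    wordLength Γ (g * ofLetter Γ x) = wordLength Γ g + 1 ∨
      wordLength Γ g = wordLength Γ (g * ofLetter Γ x) + 1 := by
  have h₁ := (wordLength_mul_le g (ofLetter Γ x)).trans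
    (Nat.add_le_add_left (wordLength_ofLetter_le x) _)
  have h₂ := (wordLength_mul_le (g * ofLetter Γ x) (ofLetter Γ x.inv)).trans
    (Nat.add_le_add_left (wordLength_ofLetter_le x.inv) _)
  rw [ofLetter_inv, mul_inv_cancel_right] at h₂
  have hne : wordLength Γ (g * ofLetter Γ x) ≠ wordLength Γ g := fun h => by
    have := map_mul (parity Γ) g (ofLetter Γ x)
    rw [parity_eq_ofAdd_wordLength, parity_eq_ofAdd_wordLength g, parity_ofLetter, h,
      ← ofAdd_add] at this
    simpa using ofAdd.injective this
  omega

end Parity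

section ExpSum

open scoped Classical

variable (Γ) in
noncomputable def expSum (a : ι) : Raag Γ →* Multiplicative ℤ :=
  lift (fun b => ofAdd (if b = a then 1 else 0)) fun _ _ _ => Commute.all _ _

lemma toAdd_expSum_rgen_zpow (a b : ι) (n : ℤ) :
    toAdd (expSum Γ a (rgen Γ b ^ n)) = if b = a then n else 0 := by
  by_cases h : b = a <;> simp [expSum, h]

lemma natAbs_toAdd_expSum_ofWord_le (a : ι) (L : List (Letter ι)) :
    (toAdd (expSum Γ a (ofWord Γ L))).natAbs ≤ (L.filter (·.1 = a)).length := by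
  induction L with
  | nil => simp
  | cons x L ih =>
    obtain ⟨b, _ | _⟩ := x <;> by_cases h : b = a <;>
      simp [ofLetter, expSum, h] at ih ⊢ <;> omega

lemma natAbs_toAdd_expSum_le_wordLength (a : ι) (g : Raag Γ) :
    (toAdd (expSum Γ a g)).natAbs ≤ wordLength Γ g := by
  obtain ⟨L, hL, rfl⟩ := exists_ofWord_eq g
  exact (natAbs_toAdd_expSum_ofWord_le a L).trans (hL ▸ List.length_filter_le _ _)

end ExpSum

lemma wordLength_rgen_zpow_le (i : ι) (m : ℤ) : wordLength Γ (rgen Γ i ^ m) ≤ m.natAbs := by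
  have := wordLength_ofLetter_le (Γ := Γ) (i, true)
  rw [ofLetter_true] at this
  exact (wordLength_zpow_le _ m).trans (mul_le_of_le_one_right (Nat.zero_le _) this)

section Link

open scoped Classical

variable (Γ) in
noncomputable def deleteGen (j : ι) : Raag Γ →* Raag Γ :=
  lift (fun a => if a = j then 1 else rgen Γ a) fun a b h => by
    split_ifs <;> simp [rgen_commute h]

lemma deleteGen_ofWord (j : ι) (L : List (Letter ι)) :
    deleteGen Γ j (ofWord Γ L) = ofWord Γ (L.filter (·.1 ≠ j)) := by
  induction L with
  | nil => simp
  | cons x L ih =>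
    rw [ofWord_cons, map_mul, ih, List.filter_cons]
    obtain ⟨b, _ | _⟩ := x <;> by_cases h : b = j <;> simp [ofLetter, deleteGen, h]

variable (Γ) in
def link (i : ι) : Subgroup (Raag Γ) := Subgroup.closure (rgen Γ '' {a | Γ.Adj i a})

variable {i : ι} {u : Raag Γ}

lemma ofWord_mem_link {L : List (Letter ι)} (h : ∀ z ∈ L, Γ.Adj i z.1) : ofWord Γ L ∈ link Γ i := by
  refine list_prod_mem fun g hg => ?_
  obtain ⟨⟨a, b⟩, hz, rfl⟩ := List.mem_map.mp hg
  have hgen : rgen Γ a ∈ link Γ i := Subgroup.subset_closure ⟨a, h _ hz, rfl⟩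
  cases b
  · exact inv_mem hgen
  · exact hgen

lemma commute_rgen_of_mem_link (hu : u ∈ link Γ i) : Commute (rgen Γ i) u := by
  have : link Γ i ≤ Subgroup.centralizer {rgen Γ i} := by
    rw [link, Subgroup.closure_le]
    rintro _ ⟨a, ha, rfl⟩
    simpa [Subgroup.mem_centralizer_iff] using (rgen_commute ha).eq
  exact Subgroup.mem_centralizer_iff.mp (this hu) _ rfl

lemma expSum_of_mem_link (hu : u ∈ link Γ i) : expSum Γ i u = 1 := by
  have : link Γ i ≤ (expSum Γ i).ker := by
    rw [link, Subgroup.closure_le]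
    rintro _ ⟨a, ha, rfl⟩
    simpa [expSum] using (Γ.ne_of_adj ha).symm
  exact this hu

lemma deleteGen_of_mem_link (hu : u ∈ link Γ i) : deleteGen Γ i u = u := by
  have : link Γ i ≤ (deleteGen Γ i).eqLocus (MonoidHom.id _) := by
    rw [link, Subgroup.closure_le]
    rintro _ ⟨a, ha, rfl⟩
    show deleteGen Γ i (rgen Γ a) = rgen Γ a
    simp [deleteGen, (Γ.ne_of_adj ha).symm]
  exact this hu

lemma wordLength_mul_zpow_of_mem_link (hu : u ∈ link Γ i) (m : ℤ) :
    wordLength Γ (u * rgen Γ i ^ m) = wordLength Γ u + m.natAbs := by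
  refine le_antisymm ?_ ?_
  · exact (wordLength_mul_le _ _).trans (Nat.add_le_add_left (wordLength_rgen_zpow_le i m) _)
  · -- In a geodesic word for `u iᵐ`, the letters other than `i` spell `u` (apply `deleteGen`)
    -- and there are at least `|m|` letters `i` (count `expSum`).
    obtain ⟨V, hV, hVg⟩ := exists_ofWord_eq (u * rgen Γ i ^ m)
    have hdel : ofWord Γ (V.filter (·.1 ≠ i)) = u := by
      rw [← deleteGen_ofWord, hVg, map_mul, deleteGen_of_mem_link hu, map_zpow]
      simp [deleteGen]
    have hexp : (toAdd (expSum Γ i (ofWord Γ V))).natAbs = m.natAbs := by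
      rw [hVg, map_mul, expSum_of_mem_link hu, one_mul, toAdd_expSum_rgen_zpow, if_pos rfl]
    have h₁ := wordLength_ofWord_le (Γ := Γ) (V.filter (·.1 ≠ i))
    have h₂ := natAbs_toAdd_expSum_ofWord_le (Γ := Γ) i V
    have h₃ := V.length_eq_length_filter_add (·.1 = i)
    simp only [decide_not] at h₃ h₁ hdel
    rw [hdel] at h₁
    omega

end Link

/-! ### Projections to standard geodesics -/

lemma not_wordLength_mul_rgen_lt_and_mul_inv_lt (u : Raag Γ) (j : ι) :
    ¬ (wordLength Γ (u * rgen Γ j) < wordLength Γ u ∧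
      wordLength Γ (u * (rgen Γ j)⁻¹) < wordLength Γ u) := by
  rintro ⟨h₁, h₂⟩
  rw [← wordLength_inv, mul_inv_rev, ← wordLength_inv u] at h₁
  rw [← wordLength_inv, mul_inv_rev, inv_inv, ← wordLength_inv u] at h₂
  obtain ⟨R, hR, hRu⟩ := exists_ofWord_eq ((rgen Γ j)⁻¹ * u⁻¹)
  have hW : ofWord Γ ((j, true) :: R) = u⁻¹ := by simp [ofLetter, hRu]
  have hlen : wordLength Γ u⁻¹ ≤ R.length + 1 := by
    simpa [hW] using wordLength_ofWord_le (Γ := Γ) ((j, true) :: R)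
  have hWred : ¬ HasCancellingPair Γ ((j, true) :: R) := by
    rw [not_hasCancellingPair_iff, hW, List.length_cons]
    omega
  have hpair : HasCancellingPair Γ ((j, true) :: (j, true) :: R) := by
    by_contra hred
    rw [not_hasCancellingPair_iff] at hred
    have hW' : ofWord Γ ((j, true) :: (j, true) :: R) = rgen Γ j * u⁻¹ := by
      rw [ofWord_cons, hW]; rfl
    rw [hW'] at hred
    simp only [List.length_cons] at hred
    omega
  rcases hasCancellingPair_cons_iff.mp hpair with h | h
  · rw [cancelScan_cons_of_not_adj _ (by simp [Letter.inv]) (Γ.irrefl)] at h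
    simp at h
  · exact hWred h

lemma exists_forall_wordLength_mul_zpow (v : Raag Γ) (j : ι) :
    ∃ k : ℤ, ∀ n, wordLength Γ (v * rgen Γ j ^ n) =
      wordLength Γ (v * rgen Γ j ^ k) + (n - k).natAbs :=
  Int.exists_eq_add_natAbs_sub_of_step (fun n => wordLength Γ (v * rgen Γ j ^ n))
    (fun n => by
      simpa [zpow_add_one, mul_assoc] using wordLength_mul_ofLetter (v * rgen Γ j ^ n) (j, true))
    (fun n => by
      have := not_wordLength_mul_rgen_lt_and_mul_inv_lt (v * rgen Γ j ^ (n + 1)) j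
      rwa [mul_assoc, ← zpow_add_one, mul_assoc, ← zpow_sub_one, add_sub_cancel_right] at this)

variable (Γ) in
/-- The exponent `k` of the nearest point `g jᵏ` of `stdGeod Γ g j` to `x`, for `v = x⁻¹ g`. -/
noncomputable def projExp (v : Raag Γ) (j : ι) : ℤ := (exists_forall_wordLength_mul_zpow v j).choose

lemma wordLength_mul_zpow_eq (v : Raag Γ) (j : ι) (n : ℤ) :
    wordLength Γ (v * rgen Γ j ^ n) =
      wordLength Γ (v * rgen Γ j ^ projExp Γ v j) + (n - projExp Γ v j).natAbs :=
  (exists_forall_wordLength_mul_zpow v j).choose_spec n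

lemma eq_and_mem_link_of_wordLength_inv_mul_mul {x y : Letter ι} {u : Raag Γ}
    (h₁ : wordLength Γ ((ofLetter Γ x)⁻¹ * u * ofLetter Γ y) = wordLength Γ u)
    (h₂ : wordLength Γ (u * ofLetter Γ y) = wordLength Γ u + 1)
    (h₃ : wordLength Γ ((ofLetter Γ x)⁻¹ * u) = wordLength Γ u + 1) :
    y = x ∧ u ∈ link Γ x.1 := by
  obtain ⟨A, hA, rfl⟩ := exists_ofWord_eq u
  have hAy : ¬ HasCancellingPair Γ (A ++ [y]) := by
    rw [not_hasCancellingPair_iff]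
    simp [h₂, hA]
  have hxA : ¬ HasCancellingPair Γ (x.inv :: A) := by
    rw [not_hasCancellingPair_iff]
    simp [h₃, hA]
  have hpair : HasCancellingPair Γ (x.inv :: (A ++ [y])) := by
    have hval : ofWord Γ (x.inv :: (A ++ [y])) = (ofLetter Γ x)⁻¹ * ofWord Γ A * ofLetter Γ y := by
      simp [mul_assoc]
    by_contra h
    rw [not_hasCancellingPair_iff, hval, h₁] at h
    simp only [List.length_cons, List.length_append] at h
    omega
  rcases hasCancellingPair_cons_iff.mp hpair with hs | h
  · obtain ⟨P, T, hP, hPT⟩ := isSome_cancelScan_iff.mp hs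
    simp only [Letter.inv_inv, Letter.inv_fst] at hP hPT
    rcases T.eq_nil_or_concat with rfl | ⟨T, t, rfl⟩
    · obtain ⟨rfl, hyx⟩ := List.append_inj' hPT rfl
      exact ⟨List.singleton_inj.mp hyx, ofWord_mem_link hP⟩
    · have hPT' : A ++ [y] = (P ++ x :: T) ++ [t] := by simpa using hPT
      obtain ⟨rfl, -⟩ := List.append_inj' hPT' rfl
      exact absurd ⟨[], P, T, x.inv, by simp, by simpa using hP⟩ hxA
  · exact absurd h hAy

lemma exists_letter_ofLetter_eq_zpow (j : ι) {s : ℤ} (hs : s = 1 ∨ s = -1) :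
    ∃ y : Letter ι, y.1 = j ∧ ofLetter Γ y = rgen Γ j ^ s := by
  rcases hs with rfl | rfl
  · exact ⟨(j, true), rfl, by simp [ofLetter]⟩
  · exact ⟨(j, false), rfl, by simp [ofLetter]⟩

lemma eq_and_mem_link_of_projExp_ne {v : Raag Γ} {j : ι} {x : Letter ι}
    (hne : projExp Γ ((ofLetter Γ x)⁻¹ * v) j ≠ projExp Γ v j) :
    x.1 = j ∧ v * rgen Γ j ^ projExp Γ v j ∈ link Γ j := by
  have e₁ := wordLength_mul_zpow_eq v j
  have e₂ := wordLength_mul_zpow_eq ((ofLetter Γ x)⁻¹ * v) j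
  set k₁ := projExp Γ v j
  set k₂ := projExp Γ ((ofLetter Γ x)⁻¹ * v) j
  have hlip : ∀ n : ℤ, wordLength Γ ((ofLetter Γ x)⁻¹ * v * rgen Γ j ^ n) ≤
        wordLength Γ (v * rgen Γ j ^ n) + 1 ∧
      wordLength Γ (v * rgen Γ j ^ n) ≤
        wordLength Γ ((ofLetter Γ x)⁻¹ * v * rgen Γ j ^ n) + 1 := fun n => by
    rw [mul_assoc, ← ofLetter_inv]
    exact ⟨wordLength_ofLetter_mul_le _ _, wordLength_le_ofLetter_mul _ _⟩
  have hk₁ := hlip k₁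
  have hk₂ := hlip k₂
  rw [e₂ k₁] at hk₁
  rw [e₁ k₂] at hk₂
  obtain ⟨y, rfl, hy⟩ := exists_letter_ofLetter_eq_zpow (Γ := Γ) j (s := k₂ - k₁) (by omega)
  have hu : ∀ w : Raag Γ, w * rgen Γ y.1 ^ k₁ * ofLetter Γ y = w * rgen Γ y.1 ^ k₂ := fun w => by
    rw [hy, mul_assoc, ← zpow_add, add_sub_cancel]
  obtain ⟨rfl, hmem⟩ := eq_and_mem_link_of_wordLength_inv_mul_mul (u := v * rgen Γ y.1 ^ k₁)
    (by rw [← mul_assoc, hu, e₂ k₂]; omega) (by rw [hu, e₁ k₂]; omega)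
    (by rw [← mul_assoc, e₂ k₁]; omega)
  exact ⟨rfl, hmem⟩

lemma cayley_adj_mul_ofLetter (g : Raag Γ) (x : Letter ι) :
    (cayley Γ).Adj g (g * ofLetter Γ x) := by
  refine ⟨fun h => ?_, x.1, ?_⟩
  · have := parity_ofLetter (Γ := Γ) x
    rw [mul_eq_left.mp h.symm, map_one] at this
    exact absurd this (by decide)
  · obtain ⟨a, _ | _⟩ := x
    · simp [ofLetter]
    · simp [ofLetter]

lemma exists_walk_length_eq (g : Raag Γ) (L : List (Letter ι)) :
    ∃ p : (cayley Γ).Walk g (g * ofWord Γ L), p.length = L.length := by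
  induction L generalizing g with
  | nil =>
    exact ⟨SimpleGraph.Walk.nil.copy rfl (by simp), by rw [SimpleGraph.Walk.length_copy]; rfl⟩
  | cons x L ih =>
    obtain ⟨p, hp⟩ := ih (g * ofLetter Γ x)
    exact ⟨(p.cons (cayley_adj_mul_ofLetter g x)).copy rfl (by simp [mul_assoc]), by simp [hp]⟩

lemma exists_ofWord_eq_of_walk {g h : Raag Γ} (p : (cayley Γ).Walk g h) :
    ∃ L : List (Letter ι), ofWord Γ L = g⁻¹ * h ∧ L.length = p.length := by
  induction p with
  | nil => exact ⟨[], by simp, rfl⟩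
  | @cons g b h hadj p ih =>
    obtain ⟨L, hL, hlen⟩ := ih
    obtain ⟨-, a, rfl | rfl⟩ := hadj
    · exact ⟨(a, true) :: L, by simp [hL, mul_assoc], by rw [List.length_cons, hlen]; rfl⟩
    · exact ⟨(a, false) :: L, by simp [hL, mul_assoc], by rw [List.length_cons, hlen]; rfl⟩

lemma dist_cayley (g h : Raag Γ) : (cayley Γ).dist g h = wordLength Γ (g⁻¹ * h) := by
  obtain ⟨L, hL, hLg⟩ := exists_ofWord_eq (g⁻¹ * h)
  obtain ⟨p, hp⟩ := exists_walk_length_eq g L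
  have hend : g * ofWord Γ L = h := by rw [hLg, mul_inv_cancel_left]
  refine le_antisymm ?_ ?_
  · simpa [hp, hL] using SimpleGraph.dist_le (p.copy rfl hend)
  · obtain ⟨q, hq⟩ := (p.copy rfl hend).reachable.exists_walk_length_eq_dist
    obtain ⟨M, hM, hMq⟩ := exists_ofWord_eq_of_walk q
    rw [← hq, ← hMq, ← hM]
    exact wordLength_ofWord_le M

lemma stdGeod_mul_zpow (g : Raag Γ) (i : ι) (t : ℤ) :
    stdGeod Γ (g * rgen Γ i ^ t) i = stdGeod Γ g i := by
  ext w
  constructor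
  · rintro ⟨n, rfl⟩
    exact ⟨t + n, by rw [zpow_add, mul_assoc]⟩
  · rintro ⟨n, rfl⟩
    exact ⟨n - t, by rw [mul_assoc, ← zpow_add, add_sub_cancel]⟩

lemma setDistN_stdGeod (x g : Raag Γ) (j : ι) :
    setDistN (cayley Γ) x (stdGeod Γ g j) =
      wordLength Γ (x⁻¹ * g * rgen Γ j ^ projExp Γ (x⁻¹ * g) j) :=
  setDistN_eq
    (by rintro _ ⟨n, rfl⟩; rw [dist_cayley, ← mul_assoc, wordLength_mul_zpow_eq _ _ n]; omega)
    ⟨_, ⟨_, rfl⟩, by rw [dist_cayley, ← mul_assoc]⟩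

lemma dist_mul_zpow_eq (x g : Raag Γ) (j : ι) (n : ℤ) :
    (cayley Γ).dist x (g * rgen Γ j ^ n) =
      setDistN (cayley Γ) x (stdGeod Γ g j) + (n - projExp Γ (x⁻¹ * g) j).natAbs := by
  rw [setDistN_stdGeod, dist_cayley, ← mul_assoc, wordLength_mul_zpow_eq]

lemma nearestPt_stdGeod (x g : Raag Γ) (j : ι) :
    NearestPt (cayley Γ) (stdGeod Γ g j) x (g * rgen Γ j ^ projExp Γ (x⁻¹ * g) j) := by
  refine ⟨⟨_, rfl⟩, ?_⟩
  rintro _ ⟨n, rfl⟩ hne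
  have : n ≠ projExp Γ (x⁻¹ * g) j := fun h => hne (by rw [h])
  rw [dist_mul_zpow_eq, dist_mul_zpow_eq]
  omega

lemma parSets_stdGeod_mul_of_mem_link (z : Raag Γ) {i : ι} {u : Raag Γ} (hu : u ∈ link Γ i) :
    ParSets (cayley Γ) (stdGeod Γ z i) (stdGeod Γ (z * u) i) := by
  have hdist : ∀ t n : ℤ, (cayley Γ).dist (z * rgen Γ i ^ t) (z * u * rgen Γ i ^ n) =
      wordLength Γ u + (n - t).natAbs := by
    intro t n
    have hc := ((commute_rgen_of_mem_link hu).zpow_left t).inv_left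
    have : (z * rgen Γ i ^ t)⁻¹ * (z * u * rgen Γ i ^ n) = u * rgen Γ i ^ (n - t) :=
      calc (z * rgen Γ i ^ t)⁻¹ * (z * u * rgen Γ i ^ n) = (rgen Γ i ^ t)⁻¹ * u * rgen Γ i ^ n := by
            group
        _ = u * rgen Γ i ^ (n - t) := by
          rw [hc.eq, mul_assoc, ← zpow_neg, ← zpow_add, neg_add_eq_sub]
    rw [dist_cayley, this, wordLength_mul_zpow_of_mem_link hu]
  refine ⟨⟨z, 0, by simp⟩, ⟨z * u, 0, by simp⟩, wordLength Γ u, ?_, ?_⟩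
  · rintro _ ⟨t, rfl⟩
    exact setDistN_eq (by rintro _ ⟨n, rfl⟩; rw [hdist]; omega) ⟨_, ⟨t, rfl⟩, by simp [hdist]⟩
  · rintro _ ⟨n, rfl⟩
    refine setDistN_eq (by rintro _ ⟨t, rfl⟩; rw [SimpleGraph.dist_comm, hdist]; omega)
      ⟨_, ⟨n, rfl⟩, by simp [SimpleGraph.dist_comm, hdist]⟩

lemma eq_of_parSets_stdGeod {g g₂ : Raag Γ} {i i₂ : ι}
    (hp : ParSets (cayley Γ) (stdGeod Γ g i) (stdGeod Γ g₂ i₂)) : i = i₂ := by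
  obtain ⟨-, -, c, hA, -⟩ := hp
  by_contra hne
  -- Along `g⟨i⟩` the exponent sum of `i` is unbounded, yet bounded by the distance `c` to `g₂⟨i₂⟩`.
  set t := toAdd (expSum Γ i (g⁻¹ * g₂)) + c + 1
  have hc := hA _ ⟨t, rfl⟩
  have hw : (g * rgen Γ i ^ t)⁻¹ * g₂ = rgen Γ i ^ (-t) * (g⁻¹ * g₂) := by group
  rw [setDistN_stdGeod, hw] at hc
  have := natAbs_toAdd_expSum_le_wordLength i
    (rgen Γ i ^ (-t) * (g⁻¹ * g₂) * rgen Γ i₂ ^ projExp Γ (rgen Γ i ^ (-t) * (g⁻¹ * g₂)) i₂)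
  rw [hc, map_mul (expSum Γ i), map_mul (expSum Γ i), toAdd_mul, toAdd_mul, toAdd_expSum_rgen_zpow,
    toAdd_expSum_rgen_zpow, if_pos rfl, if_neg (Ne.symm hne), add_zero] at this
  omega

lemma projExp_mul_rgen_ne_of_parSets {g g₂ : Raag Γ} {i : ι}
    (hp : ParSets (cayley Γ) (stdGeod Γ g i) (stdGeod Γ g₂ i)) :
    projExp Γ ((g * rgen Γ i)⁻¹ * g₂) i ≠ projExp Γ (g⁻¹ * g₂) i := by
  obtain ⟨-, -, c, hA, hB⟩ := hp
  intro heq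
  -- Otherwise `g₂ iᵏ` would be at distance `c` from both `g` and `g i`, but its nearest point on
  -- `g⟨i⟩` is unique and at distance `c`.
  set k := projExp Γ (g⁻¹ * g₂) i
  have h₀ := dist_mul_zpow_eq (g * rgen Γ i ^ (0 : ℤ)) g₂ i k
  have h₁ := dist_mul_zpow_eq (g * rgen Γ i ^ (1 : ℤ)) g₂ i k
  have h₂ := dist_mul_zpow_eq (g₂ * rgen Γ i ^ k) g i 0
  have h₃ := dist_mul_zpow_eq (g₂ * rgen Γ i ^ k) g i 1
  rw [hA _ ⟨0, rfl⟩] at h₀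
  rw [hA _ ⟨1, rfl⟩, zpow_one, heq] at h₁
  rw [hB _ ⟨k, rfl⟩, SimpleGraph.dist_comm] at h₂ h₃
  simp only [zpow_zero, mul_one, zpow_one] at h₀ h₁ h₂ h₃
  omega

lemma exists_mem_link_of_parSets {g g₂ : Raag Γ} {i i₂ : ι}
    (hp : ParSets (cayley Γ) (stdGeod Γ g i) (stdGeod Γ g₂ i₂)) :
    i₂ = i ∧ ∃ u ∈ link Γ i, ∃ q : ℤ, g₂ = g * u * rgen Γ i ^ q := by
  obtain rfl := eq_of_parSets_stdGeod hp
  have hne := projExp_mul_rgen_ne_of_parSets hp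
  rw [mul_inv_rev, mul_assoc, ← ofLetter_true] at hne
  obtain ⟨-, hmem⟩ := eq_and_mem_link_of_projExp_ne hne
  exact ⟨rfl, _, hmem, -projExp Γ (g⁻¹ * g₂) i, by group⟩

section Projection

variable {g h : Raag Γ} {i j : ι}

lemma projExp_mul_ofLetter_eq (hnp : ¬ ParSets (cayley Γ) (stdGeod Γ g i) (stdGeod Γ h j))
    (hna : ¬ ClassAdj Γ (stdGeod Γ g i) (stdGeod Γ h j)) {u : Raag Γ} (hu : u ∈ link Γ i) (q : ℤ)
    {x : Letter ι} (hx : x.1 = i ∨ Γ.Adj i x.1) :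
    projExp Γ ((g * u * rgen Γ i ^ q * ofLetter Γ x)⁻¹ * h) j =
      projExp Γ ((g * u * rgen Γ i ^ q)⁻¹ * h) j := by
  set p := g * u * rgen Γ i ^ q
  by_contra hne
  rw [mul_inv_rev, mul_assoc] at hne
  obtain ⟨hxj, hw⟩ := eq_and_mem_link_of_projExp_ne hne
  set w := p⁻¹ * h * rgen Γ j ^ projExp Γ (p⁻¹ * h) j
  have hlu : stdGeod Γ h j = stdGeod Γ (p * w) j := by
    simp only [w, ← mul_assoc, mul_inv_cancel, one_mul, stdGeod_mul_zpow]
  have hp : ParSets (cayley Γ) (stdGeod Γ g i) (stdGeod Γ p i) := by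
    rw [stdGeod_mul_zpow]
    exact parSets_stdGeod_mul_of_mem_link g hu
  rcases hx with hxi | hadj
  · obtain rfl : i = j := hxi.symm.trans hxj
    refine hnp ?_
    have hpw : p * w = g * (u * w) * rgen Γ i ^ q := by
      simp only [p, mul_assoc, ((commute_rgen_of_mem_link hw).zpow_left q).eq]
    rw [hlu, hpw, stdGeod_mul_zpow]
    exact parSets_stdGeod_mul_of_mem_link g (mul_mem hu hw)
  · refine hna ⟨stdGeod Γ p i, stdGeod Γ p j, ⟨p, i, rfl⟩, ⟨p, j, rfl⟩, hp, ?_,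
      Or.inl ⟨p, i, j, hxj ▸ hadj, rfl, rfl⟩⟩
    rw [hlu]
    exact (parSets_stdGeod_mul_of_mem_link p hw).symm

lemma projExp_eq_of_mem_link (hnp : ¬ ParSets (cayley Γ) (stdGeod Γ g i) (stdGeod Γ h j))
    (hna : ¬ ClassAdj Γ (stdGeod Γ g i) (stdGeod Γ h j)) {u : Raag Γ} (hu : u ∈ link Γ i)
    (q : ℤ) : projExp Γ ((g * u * rgen Γ i ^ q)⁻¹ * h) j = projExp Γ (g⁻¹ * h) j := by
  have step := fun {u} (hu : u ∈ link Γ i) q {x} hx =>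
    projExp_mul_ofLetter_eq (x := x) hnp hna hu q hx
  induction q using Int.induction_on with
  | zero =>
    rw [zpow_zero, mul_one]
    induction hu using Subgroup.closure_induction_right with
    | one => rw [mul_one]
    | mul_right u hu _ ha ih =>
      obtain ⟨a, ha, rfl⟩ := ha
      rw [← mul_assoc, ← ih]
      simpa only [zpow_zero, mul_one, ofLetter_true] using step hu 0 (x := (a, true)) (Or.inr ha)
    | mul_inv_cancel u hu _ ha ih =>
      obtain ⟨a, ha, rfl⟩ := ha
      rw [← mul_assoc, ← ih]
      simpa only [zpow_zero, mul_one, ofLetter_false] using step hu 0 (x := (a, false)) (Or.inr ha)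
  | succ n ih =>
    rw [zpow_add_one, ← mul_assoc, ← ih]
    exact step hu n (x := (i, true)) (Or.inl rfl)
  | pred n ih =>
    rw [zpow_sub_one, ← mul_assoc, ← ih]
    exact step hu (-n) (x := (i, false)) (Or.inl rfl)

lemma nearestPt_stdGeod_of_mem_link (hnp : ¬ ParSets (cayley Γ) (stdGeod Γ g i) (stdGeod Γ h j))
    (hna : ¬ ClassAdj Γ (stdGeod Γ g i) (stdGeod Γ h j)) {u : Raag Γ} (hu : u ∈ link Γ i)
    (q : ℤ) : NearestPt (cayley Γ) (stdGeod Γ h j) (g * u * rgen Γ i ^ q)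
      (h * rgen Γ j ^ projExp Γ (g⁻¹ * h) j) := by
  simpa only [projExp_eq_of_mem_link hnp hna hu q] using
    nearestPt_stdGeod (g * u * rgen Γ i ^ q) h j

end Projection

end Raag

theorem stmt11_general {ι : Type} (Γ : SimpleGraph ι)
    (g h : Raag Γ) (i j : ι)
    (hnp : ¬ ParSets (cayley Γ) (stdGeod Γ g i) (stdGeod Γ h j))
    (hna : ¬ ClassAdj Γ (stdGeod Γ g i) (stdGeod Γ h j)) :
    ∃ m ∈ stdGeod Γ h j,
      (∀ z ∈ stdGeod Γ g i, NearestPt (cayley Γ) (stdGeod Γ h j) z m) ∧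
      (∀ l₂ : Set (Raag Γ), IsStdGeod Γ l₂ → ParSets (cayley Γ) (stdGeod Γ g i) l₂ →
        ∀ z ∈ l₂, NearestPt (cayley Γ) (stdGeod Γ h j) z m) := by
  refine ⟨_, ⟨Raag.projExp Γ (g⁻¹ * h) j, rfl⟩, ?_, ?_⟩
  · rintro _ ⟨t, rfl⟩
    simpa only [mul_one] using Raag.nearestPt_stdGeod_of_mem_link hnp hna (one_mem _) t
  · rintro _ ⟨g₂, i₂, rfl⟩ hpar _ ⟨s, rfl⟩
    obtain ⟨rfl, u, hu, q, rfl⟩ := Raag.exists_mem_link_of_parSets hpar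
    rw [mul_assoc (g * u), ← zpow_add]
    exact Raag.nearestPt_stdGeod_of_mem_link hnp hna hu (q + s)

/-- Let `v = Δ(l)` and `u = Δ(l_u)` be non-adjacent (and distinct)
vertices of the extension complex `𝒫(Γ)`, represented by standard geodesics
`l = stdGeod Γ g i` and `l_u = stdGeod Γ h j` of `X(Γ)`.  Then the nearest-point
projection of `l` onto `l_u` is a single vertex `m` of `l_u`, and this vertex is
independent of the choice of representative of `v`: every standard geodesic
parallel to `l` also projects onto `m`. -/
theorem stmt11 {ι : Type} [Finite ι] (Γ : SimpleGraph ι)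
    (g h : Raag Γ) (i j : ι)
    (hnp : ¬ ParSets (cayley Γ) (stdGeod Γ g i) (stdGeod Γ h j))
    (hna : ¬ ClassAdj Γ (stdGeod Γ g i) (stdGeod Γ h j)) :
    ∃ m ∈ stdGeod Γ h j,
      (∀ z ∈ stdGeod Γ g i, NearestPt (cayley Γ) (stdGeod Γ h j) z m) ∧
      (∀ l₂ : Set (Raag Γ), IsStdGeod Γ l₂ → ParSets (cayley Γ) (stdGeod Γ g i) l₂ →
        ∀ z ∈ l₂, NearestPt (cayley Γ) (stdGeod Γ h j) z m) :=
  stmt11_general Γ g h i j hnp hna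
end

section
/- Let G be a group acting on ℤ by bijections that are (L,A)-quasi-isometries. Then there exist a branched line β, an isometric simplicial action of G on β, and a G-equivariant bijection q : ℤ → t(β) onto the set of tips of β, such that q is an M-bi-Lipschitz map and every vertex of β has valence at most M, where M depends only on L and A. -/
/-- The branched line determined by a branching datum `b : ℤ → ℕ`: it is obtained
from `ℝ` (with integer vertices) by attaching `b n` unit edges at the integer point
`n`.  Its vertex set consists of the core integer points `.inl n` and the free
endpoints `.inr ⟨n, k⟩` of the attached edges. -/
def BL (b : ℤ → ℕ) : Type := ℤ ⊕ (Σ n : ℤ, Fin (b n))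

open Classical in
/-- The path metric of the branched line `BL b`, restricted to its vertices. -/
noncomputable def blDist (b : ℤ → ℕ) : BL b → BL b → ℝ := fun x y =>
  if x = y then 0 else
    match x, y with
    | .inl m, .inl n => |(m : ℝ) - n|
    | .inl m, .inr p => |(m : ℝ) - p.1| + 1
    | .inr p, .inl m => |(m : ℝ) - p.1| + 1
    | .inr p, .inr q => if p.1 = q.1 then 2 else |(p.1 : ℝ) - q.1| + 2

/-- The tips of the branched line: free endpoints of attached edges together with
the unbranched integer points (i.e. the vertices of valence `≤ 2`). -/
def blTip (b : ℤ → ℕ) : BL b → Prop := fun x =>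
  match x with
  | .inl n => b n = 0
  | .inr _ => True

/-!
Each `ρ g` is a bijective `(L, A)`-quasi-isometry of `ℤ`, hence lies within uniformly bounded
distance of an isometry `n ↦ ε g * n + ρ g 0`, and `ε : G →* ℤˣ`. Averaging the displacements
`ρ g m - ε g * m` over `[-N, N]` along an ultrafilter turns the translation parts into a cocycle,
i.e. an action `α` of `G` on `ℝ` by isometries within bounded distance of `ρ`. The centre of the
bounded set `{α g⁻¹ (ρ g n) | g}` is then an exactly equivariant coordinate `F : ℤ → ℝ` with
`|F n - n|` bounded. Enumerating the discrete set `F(ℤ)` in increasing order gives an equivariant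
surjective quasi-isometry `π : ℤ → ℤ` with fibres of bounded size, on whose target `G` acts by
isometries. Attaching to the core line one edge for each point of every fibre with at least two
points gives the branched line, and `ℤ` is in bijection with its tips.
-/

noncomputable section

open Filter Topology

namespace BL

variable {b : ℤ → ℕ}

instance : Nonempty (BL b) := ⟨Sum.inl 0⟩

def foot : BL b → ℤ
  | .inl n => n
  | .inr p => p.1

def depth : BL b → ℝ
  | .inl _ => 0
  | .inr _ => 1

lemma blDist_self (v : BL b) : blDist b v v = 0 := by
  simp [blDist]

lemma blDist_of_ne {u v : BL b} (h : u ≠ v) :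
    blDist b u v = |(u.foot : ℝ) - v.foot| + u.depth + v.depth := by
  unfold blDist
  rw [if_neg h]
  rcases u with m | p <;> rcases v with n | r
  · simp [foot, depth]
  · simp [foot, depth]
  · simp [foot, depth, abs_sub_comm]
  · by_cases hpr : p.1 = r.1
    · norm_num [foot, depth, hpr]
    · simp only [foot, depth, hpr, if_false]; ring

lemma one_le_blDist {u v : BL b} (h : u ≠ v) : 1 ≤ blDist b u v := by
  rw [blDist_of_ne h]
  rcases u with m | p <;> rcases v with n | r
  · have hmn : m ≠ n := fun e => h (e ▸ rfl)
    have : (1 : ℝ) ≤ |(m : ℝ) - n| := by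
      exact_mod_cast Int.one_le_abs (sub_ne_zero.mpr hmn)
    simpa [foot, depth] using this
  all_goals simp only [foot, depth]; bound

lemma depth_of_blTip {v : BL b} (hv : blTip b v) : v.depth = if b v.foot = 0 then 0 else 1 := by
  rcases v with n | ⟨x, j⟩
  · exact (if_pos (show b n = 0 from hv)).symm
  · exact (if_neg j.pos.ne').symm

lemma eq_inl_of_blTip {v : BL b} (hv : blTip b v) (h0 : b v.foot = 0) : v = .inl v.foot := by
  rcases v with n | ⟨x, j⟩
  · rfl
  · exact absurd h0 j.pos.ne'

lemma blDist_map_eq (Φ : BL b → BL b) (hΦ : Function.Injective Φ)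
    (hdepth : ∀ v, (Φ v).depth = v.depth)
    (hfoot : ∀ u v, |((Φ u).foot : ℝ) - (Φ v).foot| = |(u.foot : ℝ) - v.foot|) (u v : BL b) :
    blDist b (Φ u) (Φ v) = blDist b u v := by
  by_cases h : u = v
  · rw [h, blDist_self, blDist_self]
  · rw [blDist_of_ne h, blDist_of_ne (hΦ.ne h), hfoot, hdepth, hdepth]

end BL

/-- `ρ` descends along `π` to an action on `ℤ` by isometries (`Semiconj.act`). -/
structure Semiconj {G : Type*} [Group G] (ρ : G →* Equiv.Perm ℤ) where
  π : ℤ → ℤ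
  surjective : Function.Surjective π
  finite_fiber : ∀ x, (π ⁻¹' {x}).Finite
  abs_sub_eq : ∀ g m n, |π (ρ g m) - π (ρ g n)| = |π m - π n|

namespace Semiconj

variable {G : Type*} [Group G] {ρ : G →* Equiv.Perm ℤ} (S : Semiconj ρ)

def fiber (x : ℤ) : Finset ℤ := (S.finite_fiber x).toFinset

lemma mem_fiber {x n : ℤ} : n ∈ S.fiber x ↔ S.π n = x := by
  simp [fiber]

/-- A one-point fibre is represented by its core vertex; a larger fibre by the free ends of as
many edges attached there. -/
def branching (x : ℤ) : ℕ := if 2 ≤ (S.fiber x).card then (S.fiber x).card else 0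

lemma branching_le_card (x : ℤ) : S.branching x ≤ (S.fiber x).card := by
  unfold branching; split_ifs <;> omega

lemma card_fiber_eq_branching {x : ℤ} (h : 0 < S.branching x) :
    (S.fiber x).card = S.branching x := by
  unfold branching at *; split_ifs at * <;> omega

def sec : ℤ → ℤ := Function.surjInv S.surjective

lemma π_sec (x : ℤ) : S.π (S.sec x) = x := Function.surjInv_eq S.surjective x

def act (g : G) (x : ℤ) : ℤ := S.π (ρ g (S.sec x))

lemma π_apply (g : G) (n : ℤ) : S.π (ρ g n) = S.act g (S.π n) := by
  have h := S.abs_sub_eq g n (S.sec (S.π n))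
  rw [S.π_sec, sub_self, abs_zero, abs_eq_zero, sub_eq_zero] at h
  exact h

lemma abs_act_sub_act (g : G) (x y : ℤ) : |S.act g x - S.act g y| = |x - y| := by
  have h := S.abs_sub_eq g (S.sec x) (S.sec y)
  rwa [S.π_sec, S.π_sec] at h

lemma act_mul (g h : G) (x : ℤ) : S.act (g * h) x = S.act g (S.act h x) := by
  rw [← S.π_sec x, ← S.π_apply, ← S.π_apply, ← S.π_apply, map_mul, Equiv.Perm.mul_apply]

lemma act_one (x : ℤ) : S.act 1 x = x := by
  rw [← S.π_sec x, ← S.π_apply, map_one, Equiv.Perm.one_apply]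

lemma fiber_act (g : G) (x : ℤ) : S.fiber (S.act g x) = (S.fiber x).image (ρ g) := by
  ext n
  simp only [Finset.mem_image, mem_fiber]
  constructor
  · intro hn
    refine ⟨(ρ g).symm n, ?_, Equiv.apply_symm_apply _ _⟩
    have h := S.abs_act_sub_act g (S.π ((ρ g).symm n)) x
    rwa [← S.π_apply, Equiv.apply_symm_apply, hn, sub_self, abs_zero, eq_comm, abs_eq_zero,
      sub_eq_zero] at h
  · rintro ⟨m, hm, rfl⟩
    rw [S.π_apply, hm]

lemma branching_act (g : G) (x : ℤ) : S.branching (S.act g x) = S.branching x := by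
  simp only [branching, fiber_act, Finset.card_image_of_injective _ (ρ g).injective]

/-- Labels the tips over `x` by the points of the fibre over `x`. -/
def lift : BL S.branching → ℤ
  | .inl x => S.sec x
  | .inr p => (S.fiber p.1).orderEmbOfFin (S.card_fiber_eq_branching p.2.pos) p.2

lemma π_lift (v : BL S.branching) : S.π (S.lift v) = v.foot := by
  rcases v with x | ⟨x, j⟩
  · exact S.π_sec x
  · exact (S.mem_fiber).mp (Finset.orderEmbOfFin_mem _ _ _)

lemma bijOn_lift : Set.BijOn S.lift {v | blTip S.branching v} Set.univ := by
  refine ⟨fun _ _ => trivial, ?_, ?_⟩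
  · intro u hu v hv huv
    have hfoot : u.foot = v.foot := by rw [← S.π_lift, ← S.π_lift, huv]
    rcases u with x | ⟨x, i⟩ <;> rcases v with y | ⟨y, j⟩
    · exact congrArg Sum.inl hfoot
    · obtain rfl : x = y := hfoot
      exact absurd (hu : S.branching x = 0) j.pos.ne'
    · obtain rfl : x = y := hfoot
      exact absurd (hv : S.branching x = 0) i.pos.ne'
    · obtain rfl : x = y := hfoot
      obtain rfl := (Finset.orderEmbOfFin _ _).injective huv
      rfl
  · intro n _
    by_cases h0 : S.branching (S.π n) = 0
    · refine ⟨.inl (S.π n), h0, ?_⟩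
      have hcard : (S.fiber (S.π n)).card ≤ 1 := by
        unfold branching at h0; split_ifs at h0 <;> omega
      exact Finset.card_le_one.mp hcard _ ((S.mem_fiber).mpr (S.π_sec _)) _ ((S.mem_fiber).mpr rfl)
    · have hmem : n ∈ Set.range ((S.fiber (S.π n)).orderEmbOfFin
          (S.card_fiber_eq_branching (Nat.pos_of_ne_zero h0))) := by
        rw [Finset.range_orderEmbOfFin]; exact (S.mem_fiber).mpr rfl
      obtain ⟨j, hj⟩ := hmem
      exact ⟨.inr ⟨S.π n, j⟩, trivial, hj⟩

def q : ℤ → BL S.branching := Function.invFunOn S.lift {v | blTip S.branching v}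

lemma bijOn_q : Set.BijOn S.q Set.univ {v | blTip S.branching v} :=
  Set.BijOn.symm S.bijOn_lift.invOn_invFunOn.symm S.bijOn_lift

lemma blTip_q (n : ℤ) : blTip S.branching (S.q n) := S.bijOn_q.mapsTo trivial

lemma lift_q (n : ℤ) : S.lift (S.q n) = n := S.bijOn_lift.invOn_invFunOn.2 trivial

lemma q_lift {v : BL S.branching} (hv : blTip S.branching v) : S.q (S.lift v) = v :=
  S.bijOn_lift.invOn_invFunOn.1 hv

lemma foot_q (n : ℤ) : (S.q n).foot = S.π n := by rw [← S.π_lift, S.lift_q]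

lemma depth_q (n : ℤ) : (S.q n).depth = if S.branching (S.π n) = 0 then 0 else 1 := by
  rw [BL.depth_of_blTip (S.blTip_q n), S.foot_q]

def actBL (g : G) : BL S.branching → BL S.branching
  | .inl x => .inl (S.act g x)
  | .inr p => S.q (ρ g (S.lift (.inr p)))

lemma actBL_q (g : G) (n : ℤ) : S.actBL g (S.q n) = S.q (ρ g n) := by
  rcases hq : S.q n with x | p
  · have hx : x = S.π n := by rw [← S.foot_q, hq]; rfl
    have h0 : S.branching x = 0 := by have := S.blTip_q n; rwa [hq] at this
    have h0' : S.branching (S.q (ρ g n)).foot = 0 := by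
      rw [S.foot_q, S.π_apply, S.branching_act, ← hx, h0]
    rw [BL.eq_inl_of_blTip (S.blTip_q _) h0', S.foot_q, S.π_apply, ← hx]
    rfl
  · show S.q (ρ g (S.lift (.inr p))) = _
    rw [← hq, S.lift_q]

lemma actBL_mul (g h : G) (v : BL S.branching) :
    S.actBL (g * h) v = S.actBL g (S.actBL h v) := by
  rcases v with x | p
  · exact congrArg Sum.inl (S.act_mul g h x)
  · rw [← S.q_lift (v := .inr p) trivial]
    simp only [actBL_q, map_mul, Equiv.Perm.mul_apply]

lemma actBL_one (v : BL S.branching) : S.actBL 1 v = v := by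
  rcases v with x | p
  · exact congrArg Sum.inl (S.act_one x)
  · rw [← S.q_lift (v := .inr p) trivial, actBL_q, map_one, Equiv.Perm.one_apply]

lemma foot_actBL (g : G) (v : BL S.branching) : (S.actBL g v).foot = S.act g v.foot := by
  rcases v with x | p
  · rfl
  · rw [← S.q_lift (v := .inr p) trivial, actBL_q, S.foot_q, S.foot_q, S.π_apply]

lemma depth_actBL (g : G) (v : BL S.branching) : (S.actBL g v).depth = v.depth := by
  rcases v with x | p
  · rfl
  · rw [← S.q_lift (v := .inr p) trivial, actBL_q, S.depth_q, S.depth_q, S.π_apply,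
      S.branching_act]

def σ : G →* Equiv.Perm (BL S.branching) where
  toFun g :=
    { toFun := S.actBL g
      invFun := S.actBL g⁻¹
      left_inv := fun v => by rw [← actBL_mul, inv_mul_cancel, actBL_one]
      right_inv := fun v => by rw [← actBL_mul, mul_inv_cancel, actBL_one] }
  map_one' := Equiv.ext S.actBL_one
  map_mul' g h := Equiv.ext (S.actBL_mul g h)

lemma σ_apply (g : G) (v : BL S.branching) : S.σ g v = S.actBL g v := rfl

lemma blDist_σ (g : G) (u v : BL S.branching) :
    blDist S.branching (S.σ g u) (S.σ g v) = blDist S.branching u v := by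
  refine BL.blDist_map_eq _ (S.σ g).injective (S.depth_actBL g) (fun u v => ?_) u v
  simp only [σ_apply, foot_actBL]
  exact_mod_cast S.abs_act_sub_act g u.foot v.foot

lemma q_apply (g : G) (n : ℤ) : S.q (ρ g n) = S.σ g (S.q n) := (S.actBL_q g n).symm

lemma blDist_q_bounds {m n : ℤ} (hmn : m ≠ n) :
    1 ≤ blDist S.branching (S.q m) (S.q n) ∧
    |(S.π m : ℝ) - S.π n| ≤ blDist S.branching (S.q m) (S.q n) ∧
    blDist S.branching (S.q m) (S.q n) ≤ |(S.π m : ℝ) - S.π n| + 2 := by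
  have hne : S.q m ≠ S.q n := fun h => hmn (by rw [← S.lift_q m, h, S.lift_q])
  refine ⟨BL.one_le_blDist hne, ?_⟩
  rw [BL.blDist_of_ne hne, S.foot_q, S.foot_q, S.depth_q, S.depth_q]
  constructor <;> split_ifs <;> linarith

lemma card_fiber (x : ℤ) : (S.fiber x).card = (S.π ⁻¹' {x}).ncard :=
  (Set.ncard_eq_toFinset_card _ _).symm

end Semiconj

lemma IsQIZ.nonneg {L A : ℝ} {f : ℤ → ℤ} (h : IsQIZ L A f) : 0 ≤ A := by
  obtain ⟨m, hm⟩ := h.2 0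
  exact (abs_nonneg _).trans hm

lemma IsQIZ.one_le {L A : ℝ} (h : IsQIZ L A id) : 1 ≤ L := by
  by_contra! hL
  obtain ⟨m, hm⟩ := exists_nat_gt (A / (1 - L))
  have hbound := (h.1 m 0).2
  simp only [id, Int.cast_natCast, Int.cast_zero, sub_zero, Nat.abs_cast] at hbound
  rw [div_lt_iff₀ (by linarith)] at hm
  nlinarith

lemma forall_le_or_forall_le_neg_of_abs_step_lt {u : ℤ → ℝ} {Q : ℝ} (hQ : ∀ n, Q ≤ |u n|)
    (hstep : ∀ n, |u (n + 1) - u n| < 2 * Q) : (∀ n, Q ≤ u n) ∨ (∀ n, Q ≤ -u n) := by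
  have key : ∀ n, (Q ≤ u n ↔ Q ≤ u (n + 1)) := by
    intro n
    have h1 := hQ n
    have h2 := hQ (n + 1)
    have h3 := abs_lt.mp (hstep n)
    rw [le_abs] at h1 h2
    constructor <;> intro h <;> rcases h1 with h1 | h1 <;> rcases h2 with h2 | h2 <;> linarith
  have hall : ∀ n, (Q ≤ u n ↔ Q ≤ u 0) := by
    intro n
    induction n using Int.induction_on with
    | zero => rfl
    | succ k ih => rw [← key, ih]
    | pred k ih => rw [key, sub_add_cancel, ih]
  by_cases h0 : Q ≤ u 0
  · exact Or.inl fun n => (hall n).2 h0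
  · refine Or.inr fun n => ?_
    have h := hQ n
    rw [le_abs] at h
    exact h.resolve_left fun h' => h0 ((hall n).1 h')

def qiPeriod (L A : ℝ) : ℕ := ⌈L * (L + 2 * A)⌉₊ + 1

def coarseMonoConst (L A : ℝ) : ℕ := ⌈L * qiPeriod L A + A⌉₊

def rigidityConst (L A : ℝ) : ℕ := 2 * coarseMonoConst L A + 2

/-- Over `qiPeriod L A` steps, `f` moves by more than `L + A`, while these displacements change by
at most `2 (L + A)` from `n` to `n + 1`; so they all have the same sign. -/
lemma exists_unit_mul_sub_period_nonneg {L A : ℝ} (hL : 1 ≤ L) (hA : 0 ≤ A) {f : ℤ → ℤ}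
    (hf : ∀ m n : ℤ, L⁻¹ * |(m : ℝ) - n| - A ≤ |(f m : ℝ) - f n| ∧
      |(f m : ℝ) - f n| ≤ L * |(m : ℝ) - n| + A) :
    ∃ ε : ℤˣ, ∀ n, 0 ≤ ε * (f (n + qiPeriod L A) - f n) := by
  set R := qiPeriod L A
  have hL0 : 0 < L := by linarith
  have hR : L * (L + 2 * A) < R := by
    have := Nat.le_ceil (L * (L + 2 * A))
    simp only [R, qiPeriod, Nat.cast_add, Nat.cast_one]
    linarith
  set Q := R / L - A
  have hQ : L + A < Q := by
    have : L + 2 * A < R / L := by rw [lt_div_iff₀ hL0]; linarith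
    simp only [Q]; linarith
  have hdist : ∀ m k : ℤ, |((m + k : ℤ) : ℝ) - m| = |(k : ℝ)| := fun m k => by push_cast; ring_nf
  set u : ℤ → ℝ := fun n => (f (n + R) : ℝ) - f n
  have hlow : ∀ n, Q ≤ |u n| := fun n => by
    have := (hf (n + R) n).1
    rwa [hdist, Int.cast_natCast, Nat.abs_cast, ← div_eq_inv_mul] at this
  have hstep : ∀ n, |u (n + 1) - u n| < 2 * Q := fun n => by
    have h1 := (hf (n + R + 1) (n + R)).2
    have h2 := (hf (n + 1) n).2
    rw [hdist, Int.cast_one, abs_one] at h1 h2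
    calc |u (n + 1) - u n|
        = |((f (n + R + 1) : ℝ) - f (n + R)) - ((f (n + 1) : ℝ) - f n)| := by
          simp only [u, add_right_comm n 1]; ring_nf
      _ ≤ |(f (n + R + 1) : ℝ) - f (n + R)| + |(f (n + 1) : ℝ) - f n| := abs_sub _ _
      _ < 2 * Q := by linarith
  have hQ0 : 0 < Q := by linarith
  rcases forall_le_or_forall_le_neg_of_abs_step_lt hlow hstep with h | h
  · refine ⟨1, fun n => ?_⟩
    have : (f n : ℝ) ≤ f (n + R) := by linarith [h n]
    simpa using (Int.cast_le (R := ℝ)).mp this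
  · refine ⟨-1, fun n => ?_⟩
    have : (f (n + R) : ℝ) ≤ f n := by linarith [h n]
    simpa using (Int.cast_le (R := ℝ)).mp this

lemma exists_coarse_mono {L A : ℝ} (hL : 1 ≤ L) (hA : 0 ≤ A) {f : ℤ → ℤ}
    (hf : ∀ m n : ℤ, L⁻¹ * |(m : ℝ) - n| - A ≤ |(f m : ℝ) - f n| ∧
      |(f m : ℝ) - f n| ≤ L * |(m : ℝ) - n| + A) :
    ∃ ε : ℤˣ, ∀ m n, m ≤ n → ε * f m ≤ ε * f n + coarseMonoConst L A := by
  obtain ⟨ε, hε⟩ := exists_unit_mul_sub_period_nonneg hL hA hf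
  set R := qiPeriod L A
  have hperiodic : ∀ m (k : ℕ), ε * f m ≤ ε * f (m + k * R) := by
    intro m k
    induction k with
    | zero => simp
    | succ k ih =>
      have := hε (m + k * R)
      rw [show m + k * (R : ℤ) + R = m + ((k + 1 : ℕ) : ℤ) * R by push_cast; ring, mul_sub] at this
      linarith
  refine ⟨ε, fun m n hmn => ?_⟩
  have hR0 : (0 : ℤ) < R := by simp [R, qiPeriod]
  obtain ⟨k, hk⟩ : ∃ k : ℕ, ((n - m) / R : ℤ) = k :=
    ⟨_, (Int.toNat_of_nonneg (Int.ediv_nonneg (by omega) hR0.le)).symm⟩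
  set r := (n - m) % (R : ℤ)
  have hr0 : (0 : ℝ) ≤ r := by exact_mod_cast Int.emod_nonneg _ hR0.ne'
  have hrR : (r : ℝ) ≤ R := by exact_mod_cast (Int.emod_lt_of_pos _ hR0).le
  have hn : n = m + k * R + r := by
    have := Int.mul_ediv_add_emod (n - m) R
    rw [hk] at this
    linarith
  have hrest : |f n - f (m + k * R)| ≤ coarseMonoConst L A := by
    have h := (hf n (m + k * R)).2
    rw [hn, Int.cast_add, add_sub_cancel_left, abs_of_nonneg hr0, ← hn] at h
    have : ((|f n - f (m + k * R)| : ℤ) : ℝ) ≤ coarseMonoConst L A := by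
      push_cast
      exact h.trans ((by nlinarith : L * r + A ≤ L * R + A).trans (Nat.le_ceil _))
    exact_mod_cast this
  have := hperiodic m k
  rw [abs_le] at hrest
  rcases Int.units_eq_one_or ε with rfl | rfl <;>
    simp only [Units.val_one, Units.val_neg, one_mul, neg_one_mul] at this ⊢ <;> linarith

/-- A coarsely monotone bijection cannot skip or repeat more than `c` values. -/
lemma abs_sub_sub_le_of_coarse_mono (e : ℤ ≃ ℤ) (c : ℕ) (he : ∀ m n, m ≤ n → e m ≤ e n + c)
    (m n : ℤ) : |e n - e m - (n - m)| ≤ 2 * c + 2 := by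
  wlog hmn : m ≤ n generalizing m n
  · rw [← abs_neg]
    convert this n m (by omega) using 2
    ring
  have hlow : n - m - 2 * c ≤ e n - e m := by
    have hmaps : Set.MapsTo e (Finset.Icc m n) (Finset.Icc (e m - c) (e n + c)) := by
      intro k hk
      simp only [Finset.coe_Icc, Set.mem_Icc] at hk ⊢
      have := he m k hk.1
      have := he k n hk.2
      omega
    have := Finset.card_le_card_of_injOn e hmaps e.injective.injOn
    simp only [Int.card_Icc] at this
    omega
  have hup : e n - e m ≤ n - m + 2 * c + 2 := by
    have hmaps : Set.MapsTo e.symm (Finset.Icc (e m + c + 1) (e n - c - 1)) (Finset.Icc m n) := by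
      intro y hy
      simp only [Finset.coe_Icc, Set.mem_Icc] at hy ⊢
      have h1 := he (e.symm y) m
      have h2 := he n (e.symm y)
      simp only [Equiv.apply_symm_apply] at h1 h2
      omega
    have := Finset.card_le_card_of_injOn e.symm hmaps e.symm.injective.injOn
    simp only [Int.card_Icc] at this
    omega
  rw [abs_le]
  constructor <;> omega

lemma IsQIZ.exists_near_isometry {L A : ℝ} {f : ℤ ≃ ℤ} (hL : 1 ≤ L) (hA : 0 ≤ A)
    (hf : IsQIZ L A f) : ∃ ε : ℤˣ, ∀ n, |f n - (ε * n + f 0)| ≤ rigidityConst L A := by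
  obtain ⟨ε, hε⟩ := exists_coarse_mono hL hA hf.1
  refine ⟨ε, fun n => ?_⟩
  have h := abs_sub_sub_le_of_coarse_mono (f.trans (Units.mulLeft ε)) _ hε 0 n
  simp only [Equiv.trans_apply, Units.mulLeft_apply, sub_zero] at h
  rw [rigidityConst]
  rcases Int.units_eq_one_or ε with rfl | rfl
  · convert h using 2 <;> push_cast <;> ring
  · rw [← abs_neg]; convert h using 2 <;> push_cast <;> ring

lemma units_eq_of_near {f : ℤ → ℤ} {ε ε' : ℤˣ} {a a' : ℤ} {K K' : ℕ}
    (h : ∀ n, |f n - (ε * n + a)| ≤ K) (h' : ∀ n, |f n - (ε' * n + a')| ≤ K') : ε = ε' := by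
  have h1 := abs_le.mp (h (K + K' + 1))
  have h2 := abs_le.mp (h (-(K + K' + 1)))
  have h3 := abs_le.mp (h' (K + K' + 1))
  have h4 := abs_le.mp (h' (-(K + K' + 1)))
  rcases Int.units_eq_one_or ε with rfl | rfl <;> rcases Int.units_eq_one_or ε' with rfl | rfl <;>
    first | rfl | (push_cast at h1 h2 h3 h4; omega)

lemma exists_orientation {G : Type*} [Group G] (ρ : G →* Equiv.Perm ℤ) (K : ℕ)
    (hρ : ∀ g, ∃ ε : ℤˣ, ∀ n, |ρ g n - (ε * n + ρ g 0)| ≤ K) :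
    ∃ ε : G →* ℤˣ, ∀ g n, |ρ g n - (ε g * n + ρ g 0)| ≤ K := by
  choose ε hε using hρ
  have hmul : ∀ g h, ε (g * h) = ε g * ε h := by
    intro g h
    refine units_eq_of_near (hε (g * h)) (K' := 2 * K) (a' := ε g * ρ h 0 + ρ g 0) fun n => ?_
    have h1 := hε g (ρ h n)
    have h2 : |(ε g : ℤ) * (ρ h n - (ε h * n + ρ h 0))| ≤ K := by
      rw [abs_mul, Int.isUnit_iff_abs_eq.mp (ε g).isUnit, one_mul]
      exact hε h n
    calc |ρ (g * h) n - ((ε g * ε h : ℤˣ) * n + (ε g * ρ h 0 + ρ g 0))|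
        = |(ρ g (ρ h n) - (ε g * ρ h n + ρ g 0)) + (ε g : ℤ) * (ρ h n - (ε h * n + ρ h 0))| := by
          rw [map_mul, Equiv.Perm.mul_apply, Units.val_mul]; ring_nf
      _ ≤ K + K := (abs_add_le _ _).trans (add_le_add h1 h2)
      _ = ((2 * K : ℕ) : ℤ) := by push_cast; ring
  exact ⟨MonoidHom.mk' ε hmul, hε⟩

def cesaroUltrafilter : Ultrafilter ℕ := Ultrafilter.of atTop

def avg (u : ℤ → ℝ) (N : ℕ) : ℝ := (∑ m ∈ Finset.Icc (-(N : ℤ)) N, u m) / (2 * N + 1)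

/-- An invariant mean on bounded functions `ℤ → ℝ`: taking the limit along an ultrafilter makes
it linear, and the Følner property of `[-N, N]` makes it invariant (`mean_comp`). -/
def mean (u : ℤ → ℝ) : ℝ := limUnder (cesaroUltrafilter : Filter ℕ) (avg u)

lemma card_Icc_neg_self (N : ℕ) : ((Finset.Icc (-(N : ℤ)) N).card : ℝ) = 2 * N + 1 := by
  rw [Int.card_Icc]; norm_cast; omega

lemma abs_sum_sub_le {s : Finset ℤ} {u : ℤ → ℝ} {c B : ℝ} (h : ∀ m, |u m - c| ≤ B) :
    |∑ m ∈ s, u m - s.card * c| ≤ s.card * B := by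
  rw [← nsmul_eq_mul, ← Finset.sum_const, ← Finset.sum_sub_distrib, ← nsmul_eq_mul]
  exact (Finset.abs_sum_le_sum_abs _ _).trans (Finset.sum_le_card_nsmul _ _ _ fun m _ => h m)

lemma abs_avg_sub_le {u : ℤ → ℝ} {c B : ℝ} (h : ∀ m, |u m - c| ≤ B) (N : ℕ) :
    |avg u N - c| ≤ B := by
  have hpos : (0 : ℝ) < 2 * N + 1 := by positivity
  have hs := abs_sum_sub_le (s := Finset.Icc (-(N : ℤ)) N) h
  rw [card_Icc_neg_self] at hs
  rw [avg, div_sub' hpos.ne', abs_div, abs_of_pos hpos, div_le_iff₀ hpos]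
  linarith

lemma tendsto_avg_mean {u : ℤ → ℝ} {c B : ℝ} (h : ∀ m, |u m - c| ≤ B) :
    Tendsto (avg u) cesaroUltrafilter (𝓝 (mean u)) := by
  refine tendsto_nhds_limUnder ?_
  have hle : ↑(cesaroUltrafilter.map (avg u)) ≤ 𝓟 (Set.Icc (c - B) (c + B)) :=
    le_principal_iff.mpr <| mem_map.mpr <| univ_mem' fun N => by
      have := abs_le.mp (abs_avg_sub_le h N)
      exact ⟨by linarith [this.1], by linarith [this.2]⟩
  obtain ⟨x, -, hx⟩ := isCompact_Icc.ultrafilter_le_nhds _ hle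
  exact ⟨x, hx⟩

lemma abs_mean_sub_le {u : ℤ → ℝ} {c B : ℝ} (h : ∀ m, |u m - c| ≤ B) : |mean u - c| ≤ B :=
  le_of_tendsto (((tendsto_avg_mean h).sub_const c).abs) (Eventually.of_forall (abs_avg_sub_le h))

lemma mean_add {u v : ℤ → ℝ} {c c' B B' : ℝ} (hu : ∀ m, |u m - c| ≤ B)
    (hv : ∀ m, |v m - c'| ≤ B') : mean (fun m => u m + v m) = mean u + mean v := by
  refine Tendsto.limUnder_eq ?_
  convert (tendsto_avg_mean hu).add (tendsto_avg_mean hv) using 1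
  ext N
  simp only [avg, Finset.sum_add_distrib, add_div]

lemma mean_const_mul {u : ℤ → ℝ} {c B : ℝ} (hu : ∀ m, |u m - c| ≤ B) (a : ℝ) :
    mean (fun m => a * u m) = a * mean u := by
  refine Tendsto.limUnder_eq ?_
  convert (tendsto_avg_mean hu).const_mul a using 1
  ext N
  simp only [avg, ← Finset.mul_sum, mul_div_assoc]

lemma abs_sum_sub_sum_le {u : ℤ → ℝ} {B : ℝ} (hu : ∀ m, |u m| ≤ B) {W J : Finset ℤ}
    (hWJ : W ⊆ J) : |∑ m ∈ J, u m - ∑ m ∈ W, u m| ≤ ((J.card : ℝ) - W.card) * B := by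
  calc |∑ m ∈ J, u m - ∑ m ∈ W, u m| = |∑ m ∈ J \ W, u m - (J \ W).card * 0| := by
        rw [← Finset.sum_sdiff hWJ, add_sub_cancel_right, mul_zero, sub_zero]
    _ ≤ (J \ W).card * B := abs_sum_sub_le (by simpa using hu)
    _ = ((J.card : ℝ) - W.card) * B := by
        rw [Finset.card_sdiff_of_subset hWJ, Nat.cast_sub (Finset.card_le_card hWJ)]

lemma abs_avg_comp_sub_avg_le {σ : ℤ → ℤ} (hσ : Function.Injective σ) {K : ℕ}
    (hK : ∀ m, |σ m| ≤ |m| + K) {u : ℤ → ℝ} {B : ℝ} (hu : ∀ m, |u m| ≤ B) (N : ℕ) :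
    |avg (u ∘ σ) N - avg u N| ≤ 4 * K * B / (2 * N + 1) := by
  set I := Finset.Icc (-(N : ℤ)) N
  set J := Finset.Icc (-(N : ℤ) - K) (N + K)
  have hIJ : I ⊆ J := fun m hm => by simp only [I, J, Finset.mem_Icc] at hm ⊢; omega
  have hσIJ : I.image σ ⊆ J := by
    intro k hk
    obtain ⟨m, hm, rfl⟩ := Finset.mem_image.mp hk
    have := abs_le.mp (hK m)
    simp only [I, J, Finset.mem_Icc] at hm ⊢
    rcases abs_cases m with ⟨h, -⟩ | ⟨h, -⟩ <;> omega
  have hJ : (J.card : ℝ) = 2 * N + 1 + 2 * K := by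
    simp only [J, Int.card_Icc]; norm_cast; omega
  have hσI : ((I.image σ).card : ℝ) = 2 * N + 1 := by
    rw [Finset.card_image_of_injective _ hσ, card_Icc_neg_self]
  have h1 := abs_sum_sub_sum_le hu hσIJ
  have h2 := abs_sum_sub_sum_le hu hIJ
  rw [hJ, hσI] at h1
  rw [hJ, card_Icc_neg_self] at h2
  have hpos : (0 : ℝ) < 2 * N + 1 := by positivity
  have hsum : avg (u ∘ σ) N - avg u N
      = ((∑ m ∈ J, u m - ∑ m ∈ I, u m) - (∑ m ∈ J, u m - ∑ m ∈ I.image σ, u m)) /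
          (2 * N + 1) := by
    simp only [avg, Finset.sum_image hσ.injOn, Function.comp_apply]; ring
  rw [hsum, abs_div, abs_of_pos hpos]
  refine div_le_div_of_nonneg_right ?_ hpos.le
  linarith [abs_sub (∑ m ∈ J, u m - ∑ m ∈ I, u m) (∑ m ∈ J, u m - ∑ m ∈ I.image σ, u m)]

lemma mean_comp {σ : ℤ → ℤ} (hσ : Function.Injective σ) {K : ℕ} (hK : ∀ m, |σ m| ≤ |m| + K)
    {u : ℤ → ℝ} {B : ℝ} (hu : ∀ m, |u m| ≤ B) : mean (u ∘ σ) = mean u := by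
  have hzero : Tendsto (fun N => avg (u ∘ σ) N - avg u N) atTop (𝓝 0) := by
    refine squeeze_zero_norm (abs_avg_comp_sub_avg_le hσ hK hu) ?_
    exact tendsto_const_nhds.div_atTop <| tendsto_atTop_add_const_right _ _
      (tendsto_natCast_atTop_atTop.const_mul_atTop two_pos)
  refine Tendsto.limUnder_eq ?_
  convert (tendsto_avg_mean (c := 0) (by simpa using hu)).add
    (hzero.mono_left (Ultrafilter.of_le atTop)) using 1
  · ext N; simp
  · simp

def center (s : Set ℝ) : ℝ := (sSup s + sInf s) / 2

lemma abs_center_sub_le {s : Set ℝ} (hs : s.Nonempty) {a r : ℝ} (h : ∀ x ∈ s, |x - a| ≤ r) :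
    |center s - a| ≤ r := by
  have hup : ∀ x ∈ s, x ≤ a + r := fun x hx => by linarith [(abs_le.mp (h x hx)).2]
  have hlow : ∀ x ∈ s, a - r ≤ x := fun x hx => by linarith [(abs_le.mp (h x hx)).1]
  obtain ⟨x, hx⟩ := hs
  have h1 := csSup_le ⟨x, hx⟩ hup
  have h2 := le_csInf ⟨x, hx⟩ hlow
  have h3 := le_csSup ⟨a + r, hup⟩ hx
  have h4 := csInf_le ⟨a - r, hlow⟩ hx
  rw [center, abs_le]
  constructor <;> linarith

lemma center_image_affine {s : Set ℝ} (hs : s.Nonempty) (hb : BddAbove s) (hb' : BddBelow s)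
    {e : ℝ} (he : e = 1 ∨ e = -1) (t : ℝ) :
    center ((fun x => e * x + t) '' s) = e * center s + t := by
  have hc : Continuous fun x : ℝ => e * x + t := by fun_prop
  rcases he with rfl | rfl
  · have hm : Monotone fun x : ℝ => 1 * x + t := fun x y h => by linarith
    rw [center, center, ← hm.map_csSup_of_continuousAt hc.continuousAt hs hb,
      ← hm.map_csInf_of_continuousAt hc.continuousAt hs hb']
    ring
  · have ha : Antitone fun x : ℝ => -1 * x + t := fun x y h => by linarith
    rw [center, center, ← ha.map_csSup_of_continuousAt hc.continuousAt hs hb,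
      ← ha.map_csInf_of_continuousAt hc.continuousAt hs hb']
    ring

section Coordinate

variable {G : Type*} [Group G] (ρ : G →* Equiv.Perm ℤ) (ε : G →* ℤˣ)

def displacement (g : G) (m : ℤ) : ℝ := (ρ g m : ℝ) - (ε g : ℤ) * m

/-- `x ↦ ε g * x + transl g` is an action of `G` on `ℝ` by isometries (`transl_mul`) within
bounded distance of `ρ`: averaging turns the quasi-cocycle `g ↦ ρ g 0` into a cocycle. -/
def transl (g : G) : ℝ := mean (displacement ρ ε g)

/-- The points `α g⁻¹ (ρ g n)`, where `α g x = ε g * x + transl g`. The action `α` permutes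
these bounded sets (`orbitSet_apply`), so their centres are exactly equivariant. -/
def orbitSet (n : ℤ) : Set ℝ := Set.range fun g : G => (ε g : ℝ) * ((ρ g n : ℝ) - transl ρ ε g)

def coord (n : ℤ) : ℝ := center (orbitSet ρ ε n)

variable {ρ ε}

lemma abs_displacement_sub_le {K : ℕ} (hK : ∀ g n, |ρ g n - (ε g * n + ρ g 0)| ≤ K)
    (g : G) (m : ℤ) : |displacement ρ ε g m - ρ g 0| ≤ K := by
  have h : ((|ρ g m - (ε g * m + ρ g 0)| : ℤ) : ℝ) ≤ K := by exact_mod_cast hK g m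
  push_cast at h
  rwa [displacement, sub_sub]

lemma displacement_mul (g h : G) (m : ℤ) :
    displacement ρ ε (g * h) m =
      displacement ρ ε g (ρ h m) + (ε g : ℝ) * displacement ρ ε h m := by
  simp only [displacement, map_mul, Equiv.Perm.mul_apply, Units.val_mul]
  push_cast
  ring

lemma abs_transl_sub_le {K : ℕ} (hK : ∀ g n, |ρ g n - (ε g * n + ρ g 0)| ≤ K) (g : G) :
    |transl ρ ε g - ρ g 0| ≤ K :=
  abs_mean_sub_le (abs_displacement_sub_le hK g)

lemma transl_mul {K : ℕ} (hK : ∀ g n, |ρ g n - (ε g * n + ρ g 0)| ≤ K) (g h : G) :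
    transl ρ ε (g * h) = transl ρ ε g + ε g * transl ρ ε h := by
  have hg := abs_displacement_sub_le hK g
  have hh := abs_displacement_sub_le hK h
  have hg' : ∀ m, |displacement ρ ε g m| ≤ |(ρ g 0 : ℝ)| + K := fun m => by
    linarith [abs_sub_abs_le_abs_sub (displacement ρ ε g m) (ρ g 0), hg m]
  have hεh : ∀ m, |(ε g : ℝ) * displacement ρ ε h m - ε g * ρ h 0| ≤ K := fun m => by
    rw [← mul_sub, abs_mul, abs_unit_intCast, one_mul]; exact hh m
  have hρh : ∀ m, |ρ h m| ≤ |m| + (K + (ρ h 0).natAbs : ℕ) := fun m => by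
    have := hK h m
    have := abs_sub_abs_le_abs_sub (ρ h m) (ε h * m + ρ h 0)
    have := abs_add_le ((ε h : ℤ) * m) (ρ h 0)
    rw [abs_mul, Int.isUnit_iff_abs_eq.mp (ε h).isUnit, one_mul] at this
    push_cast
    linarith
  unfold transl
  rw [funext (displacement_mul g h), mean_add (fun m => hg (ρ h m)) hεh, mean_const_mul hh,
    show (fun m => displacement ρ ε g (ρ h m)) = displacement ρ ε g ∘ ρ h from rfl,
    mean_comp (ρ h).injective hρh hg']

lemma abs_orbitSet_sub_le {K : ℕ} (hK : ∀ g n, |ρ g n - (ε g * n + ρ g 0)| ≤ K) (n : ℤ) :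
    ∀ x ∈ orbitSet ρ ε n, |x - n| ≤ 2 * K := by
  rintro _ ⟨g, rfl⟩
  have h1 := abs_displacement_sub_le hK g n
  have h2 := abs_transl_sub_le hK g
  have hε : ((ε g : ℤ) : ℝ) * (ε g : ℤ) = 1 := by
    rcases Int.units_eq_one_or (ε g) with h | h <;> rw [h] <;> norm_num
  calc |(ε g : ℝ) * ((ρ g n : ℝ) - transl ρ ε g) - n|
      = |(ε g : ℝ) * ((displacement ρ ε g n - ρ g 0) - (transl ρ ε g - ρ g 0))| := by
        rw [displacement]; congr 1; linear_combination (n : ℝ) * hε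
    _ ≤ K + K := by
        rw [abs_mul, abs_unit_intCast, one_mul]
        exact (abs_sub _ _).trans (add_le_add h1 h2)
    _ = 2 * K := by ring

lemma abs_coord_sub_le {K : ℕ} (hK : ∀ g n, |ρ g n - (ε g * n + ρ g 0)| ≤ K) (n : ℤ) :
    |coord ρ ε n - n| ≤ 2 * K :=
  abs_center_sub_le (Set.range_nonempty _) (abs_orbitSet_sub_le hK n)

lemma orbitSet_apply {K : ℕ} (hK : ∀ g n, |ρ g n - (ε g * n + ρ g 0)| ≤ K) (h : G) (n : ℤ) :
    orbitSet ρ ε (ρ h n) = (fun x => (ε h : ℝ) * x + transl ρ ε h) '' orbitSet ρ ε n := by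
  have key : ∀ g : G, (ε g : ℝ) * ((ρ g (ρ h n) : ℝ) - transl ρ ε g)
      = ε h * ((ε (g * h) : ℝ) * ((ρ (g * h) n : ℝ) - transl ρ ε (g * h))) + transl ρ ε h := by
    intro g
    rw [transl_mul hK, map_mul, map_mul, Equiv.Perm.mul_apply, Units.val_mul]
    rcases Int.units_eq_one_or (ε g) with hg | hg <;>
      rcases Int.units_eq_one_or (ε h) with hh | hh <;> rw [hg, hh] <;> push_cast <;> ring
  rw [orbitSet, orbitSet, ← Set.range_comp, funext key]
  exact (mul_right_surjective h).range_comp ((fun x => (ε h : ℝ) * x + transl ρ ε h) ∘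
    fun g => (ε g : ℝ) * ((ρ g n : ℝ) - transl ρ ε g))

lemma coord_apply {K : ℕ} (hK : ∀ g n, |ρ g n - (ε g * n + ρ g 0)| ≤ K) (h : G) (n : ℤ) :
    coord ρ ε (ρ h n) = ε h * coord ρ ε n + transl ρ ε h := by
  have hb := abs_orbitSet_sub_le hK n
  rw [coord, orbitSet_apply hK, coord]
  refine center_image_affine (Set.range_nonempty _) ⟨n + 2 * K, fun x hx => ?_⟩
    ⟨n - 2 * K, fun x hx => ?_⟩ ?_ _
  · linarith [(abs_le.mp (hb x hx)).2]
  · linarith [(abs_le.mp (hb x hx)).1]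
  · rcases Int.units_eq_one_or (ε h) with hh | hh <;> rw [hh] <;> norm_num

end Coordinate

section SignedCount

open scoped Pointwise

variable {V : Set ℝ} {a b c : ℝ}

def countIoc (V : Set ℝ) (a b : ℝ) : ℕ := (V ∩ Set.Ioc a b).ncard

def signedCount (V : Set ℝ) (a b : ℝ) : ℤ := countIoc V a b - countIoc V b a

lemma countIoc_of_le (h : b ≤ a) : countIoc V a b = 0 := by
  simp [countIoc, Set.Ioc_eq_empty_of_le h]

lemma finite_inter_Ioc (hV : ∀ a b, (V ∩ Set.Icc a b).Finite) (a b : ℝ) :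
    (V ∩ Set.Ioc a b).Finite :=
  (hV a b).subset (Set.inter_subset_inter_right _ Set.Ioc_subset_Icc_self)

lemma countIoc_add (hV : ∀ a b, (V ∩ Set.Icc a b).Finite) (hab : a ≤ b) (hbc : b ≤ c) :
    countIoc V a c = countIoc V a b + countIoc V b c := by
  rw [countIoc, ← Set.Ioc_union_Ioc_eq_Ioc hab hbc, Set.inter_union_distrib_left,
    Set.ncard_union_eq _ (finite_inter_Ioc hV a b) (finite_inter_Ioc hV b c)]
  · rfl
  · exact Set.disjoint_of_subset Set.inter_subset_right Set.inter_subset_right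
      (Set.Ioc_disjoint_Ioc_of_le le_rfl)

lemma one_le_countIoc (hV : ∀ a b, (V ∩ Set.Icc a b).Finite) {v : ℝ} (hv : v ∈ V)
    (h : v ∈ Set.Ioc a b) : 1 ≤ countIoc V a b :=
  (Set.ncard_pos (finite_inter_Ioc hV a b)).mpr ⟨v, hv, h⟩

lemma signedCount_eq_sub (hV : ∀ a b, (V ∩ Set.Icc a b).Finite) {m : ℝ} (ha : m ≤ a)
    (hb : m ≤ b) : signedCount V a b = countIoc V m b - countIoc V m a := by
  rcases le_total a b with h | h
  · rw [signedCount, countIoc_of_le h, countIoc_add hV ha h]; push_cast; ring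
  · rw [signedCount, countIoc_of_le h, countIoc_add hV hb h]; push_cast; ring

lemma signedCount_add (hV : ∀ a b, (V ∩ Set.Icc a b).Finite) (a b c : ℝ) :
    signedCount V a b + signedCount V b c = signedCount V a c := by
  have h1 : min a (min b c) ≤ a := min_le_left _ _
  have h2 : min a (min b c) ≤ b := (min_le_right _ _).trans (min_le_left _ _)
  have h3 : min a (min b c) ≤ c := (min_le_right _ _).trans (min_le_right _ _)
  rw [signedCount_eq_sub hV h1 h2, signedCount_eq_sub hV h2 h3, signedCount_eq_sub hV h1 h3]
  ring

lemma signedCount_self (a : ℝ) : signedCount V a a = 0 := sub_self _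

lemma signedCount_image_add (t : ℝ) :
    signedCount ((· + t) '' V) (a + t) (b + t) = signedCount V a b := by
  have key : ∀ a b, countIoc ((· + t) '' V) (a + t) (b + t) = countIoc V a b := fun a b => by
    rw [countIoc, countIoc, ← Set.image_add_const_Ioc, ← Set.image_inter (add_left_injective t),
      Set.ncard_image_of_injective _ (add_left_injective t)]
  rw [signedCount, signedCount, key, key]

lemma ncard_inter_Ico_eq (hV : ∀ a b, (V ∩ Set.Icc a b).Finite) (ha : a ∈ V) (hb : b ∈ V) :
    (V ∩ Set.Ico a b).ncard = (V ∩ Set.Ioc a b).ncard := by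
  rcases le_or_gt b a with hba | hab
  · rw [Set.Ico_eq_empty_of_le hba, Set.Ioc_eq_empty_of_le hba]
  have hfin : (V ∩ Set.Ioo a b).Finite :=
    (hV a b).subset (Set.inter_subset_inter_right _ Set.Ioo_subset_Icc_self)
  rw [← Set.Ioo_insert_left hab, ← Set.Ioo_insert_right hab, Set.inter_insert_of_mem ha,
    Set.inter_insert_of_mem hb, Set.ncard_insert_of_notMem (fun h => h.2.1.false) hfin,
    Set.ncard_insert_of_notMem (fun h => h.2.2.false) hfin]

lemma signedCount_neg (hV : ∀ a b, (V ∩ Set.Icc a b).Finite) (ha : a ∈ V) (hb : b ∈ V) :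
    signedCount (-V) (-a) (-b) = -signedCount V a b := by
  have key : ∀ {a b}, a ∈ V → b ∈ V → countIoc (-V) (-a) (-b) = countIoc V b a := by
    intro a b ha hb
    rw [countIoc, countIoc, ← Set.neg_Ico, ← Set.inter_neg, Set.ncard_neg,
      ncard_inter_Ico_eq hV hb ha]
  rw [signedCount, signedCount, key ha hb, key hb ha]
  ring

lemma eq_of_signedCount_eq_zero (hV : ∀ a b, (V ∩ Set.Icc a b).Finite) (ha : a ∈ V) (hb : b ∈ V)
    (h : signedCount V a b = 0) : a = b := by
  by_contra hne
  rcases lt_or_gt_of_ne hne with hab | hab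
  · have := one_le_countIoc hV hb ⟨hab, le_rfl⟩
    rw [signedCount, countIoc_of_le hab.le] at h
    omega
  · have := one_le_countIoc hV ha ⟨hab, le_rfl⟩
    rw [signedCount, countIoc_of_le hab.le] at h
    omega

lemma le_countIoc_of_gap (hV : ∀ a b, (V ∩ Set.Icc a b).Finite) {w : ℝ}
    (hgap : ∀ x, ∃ v ∈ V, x < v ∧ v < x + w) (a : ℝ) (j : ℕ) : j ≤ countIoc V a (a + j * w) := by
  have hw : 0 < w := by obtain ⟨v, -, h1, h2⟩ := hgap 0; linarith
  induction j with
  | zero => simp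
  | succ j ih =>
    obtain ⟨v, hv, h1, h2⟩ := hgap (a + j * w)
    have hstep := one_le_countIoc hV hv (a := a + j * w) (b := a + (j + 1 : ℕ) * w)
      ⟨h1, by push_cast; linarith⟩
    rw [countIoc_add hV (b := a + j * w) (by nlinarith [(j.cast_nonneg : (0 : ℝ) ≤ j)])
      (by push_cast; linarith)]
    omega

lemma sub_div_sub_one_le_countIoc (hV : ∀ a b, (V ∩ Set.Icc a b).Finite) {w : ℝ}
    (hgap : ∀ x, ∃ v ∈ V, x < v ∧ v < x + w) (hab : a ≤ b) :
    (b - a) / w - 1 ≤ countIoc V a b := by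
  have hw : 0 < w := by obtain ⟨v, -, h1, h2⟩ := hgap 0; linarith
  set j := ⌊(b - a) / w⌋₊
  have hj : (j : ℝ) * w ≤ b - a := (le_div_iff₀ hw).mp (Nat.floor_le (by positivity))
  have hsplit := countIoc_add hV (a := a) (b := a + j * w) (c := b)
    (by nlinarith [(j.cast_nonneg : (0 : ℝ) ≤ j)]) (by linarith)
  have h1 := le_countIoc_of_gap hV hgap a j
  have h2 : (b - a) / w < j + 1 := Nat.lt_floor_add_one _
  have : (j : ℝ) ≤ countIoc V a b := by exact_mod_cast h1.trans (hsplit ▸ Nat.le_add_right _ _)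
  linarith

lemma exists_signedCount_eq_one (hV : ∀ a b, (V ∩ Set.Icc a b).Finite) {w : ℝ}
    (hgap : ∀ x, ∃ v ∈ V, x < v ∧ v < x + w) (a : ℝ) : ∃ v ∈ V, signedCount V a v = 1 := by
  obtain ⟨v₀, hv₀, h₀, h₀'⟩ := hgap a
  obtain ⟨v, ⟨hv, hav, hvw⟩, hmin⟩ := Set.exists_min_image (V ∩ Set.Ioc a (a + w)) id
    (finite_inter_Ioc hV _ _) ⟨v₀, hv₀, h₀, h₀'.le⟩
  have hsingle : V ∩ Set.Ioc a v = {v} := by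
    refine Set.eq_singleton_iff_unique_mem.mpr ⟨⟨hv, hav, le_rfl⟩, ?_⟩
    rintro u ⟨hu, hau, huv⟩
    exact le_antisymm huv (hmin u ⟨hu, hau, huv.trans hvw⟩)
  refine ⟨v, hv, ?_⟩
  rw [signedCount, countIoc_of_le hav.le, countIoc, hsingle, Set.ncard_singleton]
  rfl

lemma finite_neg_inter_Icc (hV : ∀ a b, (V ∩ Set.Icc a b).Finite) (a b : ℝ) :
    (-V ∩ Set.Icc a b).Finite := by
  rw [← neg_neg (Set.Icc a b), Set.neg_Icc, ← Set.inter_neg]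
  exact (hV _ _).neg

lemma exists_signedCount_eq (hV : ∀ a b, (V ∩ Set.Icc a b).Finite) {w : ℝ}
    (hgap : ∀ x, ∃ v ∈ V, x < v ∧ v < x + w) (ha : a ∈ V) (k : ℤ) :
    ∃ v ∈ V, signedCount V a v = k := by
  induction k using Int.induction_on with
  | zero => exact ⟨a, ha, signedCount_self a⟩
  | succ k ih =>
    obtain ⟨v, -, hv⟩ := ih
    obtain ⟨v', hv', h1⟩ := exists_signedCount_eq_one hV hgap v
    exact ⟨v', hv', by rw [← signedCount_add hV a v v', hv, h1]⟩
  | pred k ih =>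
    obtain ⟨v, hv, hav⟩ := ih
    have hgap' : ∀ x, ∃ u ∈ -V, x < u ∧ u < x + w := fun x => by
      obtain ⟨u, hu, h1, h2⟩ := hgap (-x - w)
      exact ⟨-u, by simpa using hu, by linarith, by linarith⟩
    obtain ⟨u, hu, h1⟩ := exists_signedCount_eq_one (finite_neg_inter_Icc hV) hgap' (-v)
    rw [← neg_neg u, signedCount_neg hV hv (Set.mem_neg.mp hu)] at h1
    exact ⟨-u, hu, by rw [← signedCount_add hV a v (-u), hav]; omega⟩

lemma abs_signedCount_affine (hV : ∀ a b, (V ∩ Set.Icc a b).Finite) {e t : ℝ}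
    (he : e = 1 ∨ e = -1) (hVe : (fun x => e * x + t) '' V = V) (ha : a ∈ V) (hb : b ∈ V) :
    |signedCount V (e * a + t) (e * b + t)| = |signedCount V a b| := by
  rcases he with rfl | rfl
  · have : (fun x => 1 * x + t) '' V = (· + t) '' V := by simp only [one_mul]
    conv_lhs => rw [← hVe, this, one_mul, one_mul, signedCount_image_add]
  · have : (fun x => -1 * x + t) '' V = (· + t) '' (-V) := by
      rw [← Set.image_neg_eq_neg, Set.image_image]; simp only [neg_one_mul]
    conv_lhs => rw [← hVe, this, neg_one_mul, neg_one_mul, signedCount_image_add,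
      signedCount_neg hV ha hb, abs_neg]

end SignedCount

section FromCoordinate

variable {F : ℤ → ℝ} {c : ℝ}

lemma preimage_Icc_subset (hF : ∀ n, |F n - n| ≤ c) (a b : ℝ) :
    F ⁻¹' Set.Icc a b ⊆ Set.Icc ⌈a - c⌉ ⌊b + c⌋ := by
  intro n hn
  have := abs_le.mp (hF n)
  exact ⟨Int.ceil_le.mpr (by linarith [hn.1]), Int.le_floor.mpr (by linarith [hn.2])⟩

lemma ncard_preimage_Icc_le (hF : ∀ n, |F n - n| ≤ c) {a b : ℝ} (hab : a ≤ b) :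
    ((F ⁻¹' Set.Icc a b).ncard : ℝ) ≤ b - a + 2 * c + 1 := by
  have hc : 0 ≤ c := (abs_nonneg _).trans (hF 0)
  have hcard := Set.ncard_le_ncard (preimage_Icc_subset hF a b) (Set.finite_Icc _ _)
  rw [← Finset.coe_Icc ⌈a - c⌉ ⌊b + c⌋, Set.ncard_coe_finset, Int.card_Icc] at hcard
  have h1 := Int.floor_le (b + c)
  have h2 := Int.le_ceil (a - c)
  have h3 := Int.lt_floor_add_one (b + c)
  have h4 := Int.ceil_lt_add_one (a - c)
  have hnn : 0 ≤ ⌊b + c⌋ + 1 - ⌈a - c⌉ := by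
    have : ((⌈a - c⌉ : ℤ) : ℝ) < ⌊b + c⌋ + 2 := by linarith
    have : ⌈a - c⌉ < ⌊b + c⌋ + 2 := by exact_mod_cast this
    omega
  have : ((F ⁻¹' Set.Icc a b).ncard : ℤ) ≤ ⌊b + c⌋ + 1 - ⌈a - c⌉ := by
    have := Int.toNat_of_nonneg hnn; omega
  have : ((F ⁻¹' Set.Icc a b).ncard : ℝ) ≤ ((⌊b + c⌋ + 1 - ⌈a - c⌉ : ℤ) : ℝ) := by
    exact_mod_cast this
  push_cast at this
  linarith

lemma finite_range_inter_Icc (hF : ∀ n, |F n - n| ≤ c) (a b : ℝ) :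
    (Set.range F ∩ Set.Icc a b).Finite := by
  rw [← Set.image_preimage_eq_range_inter]
  exact ((Set.finite_Icc _ _).subset (preimage_Icc_subset hF a b)).image F

lemma range_gap (hF : ∀ n, |F n - n| ≤ c) (x : ℝ) :
    ∃ v ∈ Set.range F, x < v ∧ v < x + (2 * c + 2) := by
  refine ⟨F (⌊x + c⌋ + 1), ⟨_, rfl⟩, ?_⟩
  have := abs_le.mp (hF (⌊x + c⌋ + 1))
  have h1 := Int.floor_le (x + c)
  have h2 := Int.lt_floor_add_one (x + c)
  push_cast at this
  constructor <;> linarith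

lemma countIoc_range_le (hF : ∀ n, |F n - n| ≤ c) {a b : ℝ} (hab : a ≤ b) :
    (countIoc (Set.range F) a b : ℝ) ≤ b - a + 2 * c + 1 := by
  have hsub : Set.range F ∩ Set.Ioc a b ⊆ F '' (F ⁻¹' Set.Icc a b) := by
    rw [Set.image_preimage_eq_range_inter]
    exact Set.inter_subset_inter_right _ Set.Ioc_subset_Icc_self
  have hfin : (F ⁻¹' Set.Icc a b).Finite := (Set.finite_Icc _ _).subset (preimage_Icc_subset hF a b)
  have := (Set.ncard_le_ncard hsub (hfin.image F)).trans (Set.ncard_image_le hfin)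
  exact (Nat.cast_le.mpr this).trans (ncard_preimage_Icc_le hF hab)

/-- The index of `F n` when the discrete set `range F` is enumerated increasingly, `F 0` getting
index `0`. -/
def collapse (F : ℤ → ℝ) (n : ℤ) : ℤ := signedCount (Set.range F) (F 0) (F n)

lemma collapse_sub_collapse (hF : ∀ n, |F n - n| ≤ c) (m n : ℤ) :
    collapse F m - collapse F n = signedCount (Set.range F) (F n) (F m) := by
  rw [collapse, collapse, ← signedCount_add (finite_range_inter_Icc hF) (F 0) (F n) (F m)]
  ring

lemma eq_of_collapse_eq (hF : ∀ n, |F n - n| ≤ c) {m n : ℤ} (h : collapse F m = collapse F n) :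
    F m = F n :=
  (eq_of_signedCount_eq_zero (finite_range_inter_Icc hF) ⟨n, rfl⟩ ⟨m, rfl⟩
    (by rw [← collapse_sub_collapse hF, h, sub_self])).symm

lemma abs_collapse_sub_le (hF : ∀ n, |F n - n| ≤ c) (m n : ℤ) :
    |(collapse F m : ℝ) - collapse F n| ≤ |(m : ℝ) - n| + 4 * c + 1 := by
  wlog hmn : F n ≤ F m generalizing m n
  · rw [abs_sub_comm (m : ℝ), abs_sub_comm (collapse F m : ℝ)]; exact this n m (le_of_not_ge hmn)
  have hm := abs_le.mp (hF m)
  have hn := abs_le.mp (hF n)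
  have h := collapse_sub_collapse hF m n
  rw [signedCount, countIoc_of_le hmn, Nat.cast_zero, sub_zero] at h
  have : ((collapse F m - collapse F n : ℤ) : ℝ) = countIoc (Set.range F) (F n) (F m) := by
    rw [h]; rfl
  push_cast at this
  rw [this, abs_of_nonneg (Nat.cast_nonneg _)]
  linarith [countIoc_range_le hF hmn, le_abs_self ((m : ℝ) - n)]

lemma abs_sub_le_collapse (hF : ∀ n, |F n - n| ≤ c) (m n : ℤ) :
    |(m : ℝ) - n| ≤ (2 * c + 2) * (|(collapse F m : ℝ) - collapse F n| + 1) + 2 * c := by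
  wlog hmn : F n ≤ F m generalizing m n
  · rw [abs_sub_comm (m : ℝ), abs_sub_comm (collapse F m : ℝ)]; exact this n m (le_of_not_ge hmn)
  have hc : 0 ≤ c := (abs_nonneg _).trans (hF 0)
  have hm := abs_le.mp (hF m)
  have hn := abs_le.mp (hF n)
  have h := collapse_sub_collapse hF m n
  rw [signedCount, countIoc_of_le hmn, Nat.cast_zero, sub_zero] at h
  have hcount := sub_div_sub_one_le_countIoc (finite_range_inter_Icc hF) (range_gap hF) hmn
  have : ((collapse F m - collapse F n : ℤ) : ℝ) = countIoc (Set.range F) (F n) (F m) := by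
    rw [h]; rfl
  push_cast at this
  rw [← this, div_sub_one (by positivity), div_le_iff₀ (by positivity)] at hcount
  have := le_abs_self ((collapse F m : ℝ) - collapse F n)
  rcases abs_cases ((m : ℝ) - n) with ⟨h', -⟩ | ⟨h', -⟩ <;> rw [h'] <;> nlinarith

end FromCoordinate

section FromCoordinate

variable {G : Type*} [Group G] {ρ : G →* Equiv.Perm ℤ} {F : ℤ → ℝ} {c : ℝ}

lemma collapse_surjective (hF : ∀ n, |F n - n| ≤ c) : Function.Surjective (collapse F) := by
  intro k
  obtain ⟨_, ⟨n, rfl⟩, hn⟩ :=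
    exists_signedCount_eq (finite_range_inter_Icc hF) (range_gap hF) ⟨0, rfl⟩ k
  exact ⟨n, hn⟩

lemma collapse_fiber_subset (hF : ∀ n, |F n - n| ≤ c) (n : ℤ) :
    collapse F ⁻¹' {collapse F n} ⊆ F ⁻¹' Set.Icc (F n) (F n) := fun m hm => by
  have := eq_of_collapse_eq hF hm
  exact ⟨this.ge, this.le⟩

lemma finite_collapse_fiber (hF : ∀ n, |F n - n| ≤ c) (x : ℤ) : (collapse F ⁻¹' {x}).Finite := by
  obtain ⟨n, rfl⟩ := collapse_surjective hF x
  exact (Set.finite_Icc _ _).subset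
    ((collapse_fiber_subset hF n).trans (preimage_Icc_subset hF _ _))

lemma ncard_collapse_fiber_le (hF : ∀ n, |F n - n| ≤ c) (x : ℤ) :
    ((collapse F ⁻¹' {x}).ncard : ℝ) ≤ 2 * c + 1 := by
  obtain ⟨n, rfl⟩ := collapse_surjective hF x
  have hfin := (Set.finite_Icc _ _).subset (preimage_Icc_subset hF (F n) (F n))
  have := ncard_preimage_Icc_le hF (le_refl (F n))
  have := Nat.cast_le (α := ℝ) |>.mpr (Set.ncard_le_ncard (collapse_fiber_subset hF n) hfin)
  linarith

lemma abs_collapse_apply_sub (hF : ∀ n, |F n - n| ≤ c) {g : G} {e t : ℝ} (he : e = 1 ∨ e = -1)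
    (hFe : ∀ n, F (ρ g n) = e * F n + t) (m n : ℤ) :
    |collapse F (ρ g m) - collapse F (ρ g n)| = |collapse F m - collapse F n| := by
  have hVe : (fun x => e * x + t) '' Set.range F = Set.range F := by
    ext v
    constructor
    · rintro ⟨_, ⟨k, rfl⟩, rfl⟩
      exact ⟨ρ g k, hFe k⟩
    · rintro ⟨k, rfl⟩
      refine ⟨F ((ρ g).symm k), ⟨_, rfl⟩, ?_⟩
      change e * F _ + t = F k
      rw [← hFe, Equiv.apply_symm_apply]
  rw [collapse_sub_collapse hF, collapse_sub_collapse hF, hFe, hFe,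
    abs_signedCount_affine (finite_range_inter_Icc hF) he hVe ⟨_, rfl⟩ ⟨_, rfl⟩]

def Semiconj.ofCoord (hF : ∀ n, |F n - n| ≤ c)
    (hequiv : ∀ g, ∃ e t : ℝ, (e = 1 ∨ e = -1) ∧ ∀ n, F (ρ g n) = e * F n + t) : Semiconj ρ where
  π := collapse F
  surjective := collapse_surjective hF
  finite_fiber := finite_collapse_fiber hF
  abs_sub_eq g := by
    obtain ⟨e, t, he, hFe⟩ := hequiv g
    exact abs_collapse_apply_sub hF he hFe

theorem exists_branchedLine_of_coord (hF : ∀ n, |F n - n| ≤ c)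
    (hequiv : ∀ g, ∃ e t : ℝ, (e = 1 ∨ e = -1) ∧ ∀ n, F (ρ g n) = e * F n + t) :
    ∃ (b : ℤ → ℕ) (σ : G →* Equiv.Perm (BL b)) (q : ℤ → BL b),
      (∀ (g : G) (x y : BL b), blDist b (σ g x) (σ g y) = blDist b x y) ∧
      (∀ n : ℤ, (b n : ℝ) + 2 ≤ 6 * c + 4) ∧
      Set.BijOn q Set.univ {x : BL b | blTip b x} ∧
      (∀ (g : G) (n : ℤ), q (ρ g n) = σ g (q n)) ∧
      (∀ m n : ℤ, (6 * c + 4)⁻¹ * |(m : ℝ) - n| ≤ blDist b (q m) (q n) ∧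
        blDist b (q m) (q n) ≤ (6 * c + 4) * |(m : ℝ) - n|) := by
  have hc : 0 ≤ c := (abs_nonneg _).trans (hF 0)
  set S := Semiconj.ofCoord hF hequiv
  refine ⟨S.branching, S.σ, S.q, S.blDist_σ, fun x => ?_, S.bijOn_q, S.q_apply, fun m n => ?_⟩
  · have := (Nat.cast_le (α := ℝ)).mpr (S.branching_le_card x)
    have hfib : ((S.π ⁻¹' {x}).ncard : ℝ) ≤ 2 * c + 1 := ncard_collapse_fiber_le hF x
    rw [S.card_fiber] at this
    linarith
  rcases eq_or_ne m n with rfl | hmn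
  · simp [BL.blDist_self]
  obtain ⟨hone, hlow, hup⟩ := S.blDist_q_bounds hmn
  have h1 := abs_collapse_sub_le hF m n
  have h2 := abs_sub_le_collapse hF m n
  have hmn' : (1 : ℝ) ≤ |(m : ℝ) - n| := by
    exact_mod_cast Int.one_le_abs (sub_ne_zero.mpr hmn)
  change |((collapse F m : ℤ) : ℝ) - collapse F n| ≤ _ at hlow
  change _ ≤ |((collapse F m : ℤ) : ℝ) - collapse F n| + 2 at hup
  constructor
  · rw [inv_mul_le_iff₀ (by positivity)]
    nlinarith
  · nlinarith

end FromCoordinate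

end

/-- If a group `G` acts on `ℤ` by bijections which are
`(L,A)`-quasi-isometries, then there are a branched line `β = BL b`, an isometric
(automatically simplicial) action of `G` on `β`, and a `G`-equivariant bijection
`q : ℤ → t(β)` onto the set of tips of `β`, such that `q` is `M`-bi-Lipschitz and
every vertex of `β` has valence at most `M`, where `M` depends only on `L,A`. -/
theorem stmt17 :
    ∀ L A : ℝ, ∃ M : ℝ, 0 < M ∧
      ∀ (G : Type) [Group G] (ρ : G →* Equiv.Perm ℤ),
        (∀ g : G, IsQIZ L A (ρ g)) →
        ∃ (b : ℤ → ℕ) (σ : G →* Equiv.Perm (BL b)) (q : ℤ → BL b),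
          -- the action of `G` on the branched line is by isometries
          (∀ (g : G) (x y : BL b), blDist b (σ g x) (σ g y) = blDist b x y) ∧
          -- every vertex of `β` has valence at most `M`
          (∀ n : ℤ, (b n : ℝ) + 2 ≤ M) ∧
          -- `q` is a bijection of `ℤ` onto the set of tips of `β`
          Set.BijOn q Set.univ {x : BL b | blTip b x} ∧
          -- `q` is `G`-equivariant
          (∀ (g : G) (n : ℤ), q (ρ g n) = σ g (q n)) ∧
          -- `q` is `M`-bi-Lipschitz
          (∀ m n : ℤ, M⁻¹ * |(m : ℝ) - n| ≤ blDist b (q m) (q n) ∧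
            blDist b (q m) (q n) ≤ M * |(m : ℝ) - n|) := by
  intro L A
  refine ⟨6 * (2 * (rigidityConst L A : ℝ)) + 4, by positivity, fun G _ ρ hρ => ?_⟩
  have hid : IsQIZ L A id := by simpa using hρ 1
  obtain ⟨ε, hε⟩ := exists_orientation ρ _ fun g =>
    (hρ g).exists_near_isometry hid.one_le hid.nonneg
  refine exists_branchedLine_of_coord (abs_coord_sub_le hε) fun g =>
    ⟨ε g, transl ρ ε g, ?_, coord_apply hε g⟩
  rcases Int.units_eq_one_or (ε g) with h | h <;> simp [h]
end

section
/- Let c₁, c₂ be chambers of a right-angled building ℬ modelled on a right-angled Coxeter group W(Γ), and let |ℬ| be its Davis realization (a CAT(0) cube complex). Viewing c₁, c₂ as rank-0 vertices of |ℬ|, the gallery distance d(c₁,c₂) (the word length of the Weyl distance δ(c₁,c₂)) equals half the l¹-distance between the corresponding vertices in |ℬ|, i.e., d_{l¹}(c₁,c₂) = 2·d(c₁,c₂). -/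
/-! Right-angled buildings modelled on the right-angled Coxeter group `W(Γ)`,
in the `W`-metric (chamber system) formulation, together with the 1-skeleton of
the Davis realization `|ℬ|` (a CAT(0) cube complex whose vertices are the
spherical residues, with edges given by codimension-one containments; the
`l¹`-metric on vertices of a CAT(0) cube complex coincides with the graph metric
on this 1-skeleton). -/

/-- The relators of the right-angled Coxeter group `W(Γ)`. -/
def coxRels {ι : Type} (Γ : SimpleGraph ι) : Set (FreeGroup ι) :=
  {r | (∃ i : ι, r = FreeGroup.of i * FreeGroup.of i) ∨
    ∃ i j : ι, Γ.Adj i j ∧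
      r = FreeGroup.of i * FreeGroup.of j * FreeGroup.of i * FreeGroup.of j}

/-- The right-angled Coxeter group `W(Γ)`. -/
abbrev Cox {ι : Type} (Γ : SimpleGraph ι) := PresentedGroup (coxRels Γ)

/-- The standard generator of `W(Γ)` corresponding to a vertex of `Γ`. -/
def cgen {ι : Type} (Γ : SimpleGraph ι) (i : ι) : Cox Γ := PresentedGroup.of i

/-- The word length of an element of `W(Γ)` w.r.t. the standard generators. -/
noncomputable def wlen {ι : Type} (Γ : SimpleGraph ι) (w : Cox Γ) : ℕ :=
  sInf {n : ℕ | ∃ lst : List ι, lst.length = n ∧ (lst.map (cgen Γ)).prod = w}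

/-- `w` lies in the standard parabolic subgroup `W_J`. -/
def wordIn {ι : Type} (Γ : SimpleGraph ι) (J : Set ι) (w : Cox Γ) : Prop :=
  ∃ lst : List ι, (∀ i ∈ lst, i ∈ J) ∧ (lst.map (cgen Γ)).prod = w

/-- A building of type `W(Γ)`: a set of chambers `C` with a `W`-valued distance
function `δ` satisfying the standard building axioms (WD1)–(WD3). -/
structure RABuilding {ι : Type} (Γ : SimpleGraph ι) where
  C : Type
  ne : Nonempty C
  δ : C → C → Cox Γ
  wd1 : ∀ c d : C, δ c d = 1 ↔ c = d
  wdsymm : ∀ c d : C, δ d c = (δ c d)⁻¹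
  wd2 : ∀ (c c' d : C) (i : ι), δ c' c = cgen Γ i →
    (δ c' d = cgen Γ i * δ c d ∨ δ c' d = δ c d)
  wd2' : ∀ (c c' d : C) (i : ι), δ c' c = cgen Γ i →
    wlen Γ (cgen Γ i * δ c d) = wlen Γ (δ c d) + 1 → δ c' d = cgen Γ i * δ c d
  wd3 : ∀ (c d : C) (i : ι), ∃ c' : C, δ c' c = cgen Γ i ∧ δ c' d = cgen Γ i * δ c d

variable {ι : Type} {Γ : SimpleGraph ι}

/-- `J` is a spherical subset of the generating set: in the right-angled case,
a clique of `Γ`. -/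
def IsSphD (Γ : SimpleGraph ι) (J : Finset ι) : Prop := (↑J : Set ι).Pairwise Γ.Adj

/-- Pairs `(c, J)` (chamber, spherical type) determine the same `J`-residue. -/
def resRel (B : RABuilding Γ) :
    {p : B.C × Finset ι // IsSphD Γ p.2} → {p : B.C × Finset ι // IsSphD Γ p.2} → Prop :=
  fun p q => p.1.2 = q.1.2 ∧ wordIn Γ (↑p.1.2) (B.δ p.1.1 q.1.1)

/-- The setoid whose classes are the spherical residues of `ℬ`.  (For a genuine
building `resRel` is already an equivalence relation, so passing to the generated
equivalence relation does not change the classes.) -/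
def resSetoid (B : RABuilding Γ) : Setoid {p : B.C × Finset ι // IsSphD Γ p.2} :=
  ⟨Relation.EqvGen (resRel B), Relation.EqvGen.is_equivalence _⟩

/-- The vertex set of the Davis realization `|ℬ|`: the spherical residues. -/
def DVert (B : RABuilding Γ) := Quotient (resSetoid B)

/-- The vertex of `|ℬ|` given by the `J`-residue of the chamber `c`. -/
def dvMk (B : RABuilding Γ) (c : B.C) (J : Finset ι) (h : IsSphD Γ J) : DVert B :=
  Quotient.mk (resSetoid B) ⟨(c, J), h⟩

/-- The rank of a vertex of `|ℬ|`: the rank of the corresponding residue. -/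
def drank (B : RABuilding Γ) : DVert B → ℕ :=
  Quotient.lift (fun p => p.1.2.card) (by
    intro p q h
    induction h with
    | rel a b hab => exact congrArg Finset.card hab.1
    | refl => rfl
    | symm _ _ _ ih => exact ih.symm
    | trans _ _ _ _ _ ih1 ih2 => exact ih1.trans ih2)

/-- The 1-skeleton of the Davis realization `|ℬ|`: two spherical residues are
adjacent iff one contains the other with rank difference one. -/
def davisGraph (B : RABuilding Γ) : SimpleGraph (DVert B) where
  Adj x y := x ≠ y ∧ ∃ (c : B.C) (J J' : Finset ι) (hJ : IsSphD Γ J) (hJ' : IsSphD Γ J'),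
    J ⊆ J' ∧ J'.card = J.card + 1 ∧
    ((x = dvMk B c J hJ ∧ y = dvMk B c J' hJ') ∨ (y = dvMk B c J hJ ∧ x = dvMk B c J' hJ'))
  symm := ⟨by
    rintro x y ⟨hne, c, J, J', hJ, hJ', hss, hc, hor⟩
    exact ⟨hne.symm, c, J, J', hJ, hJ', hss, hc, hor.symm⟩⟩
  loopless := ⟨by rintro x ⟨hne, _⟩; exact hne rfl⟩

/-- The empty type is spherical. -/
theorem isSphD_empty : IsSphD Γ (∅ : Finset ι) := by
  simp [IsSphD]

section CoxLemmas

variable {ι : Type} {Γ : SimpleGraph ι}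

theorem cgen_mul_self' (i : ι) : cgen Γ i * cgen Γ i = 1 := by
  have h : (FreeGroup.of i * FreeGroup.of i) ∈ Subgroup.normalClosure (coxRels Γ) :=
    Subgroup.subset_normalClosure (Or.inl ⟨i, rfl⟩)
  exact (QuotientGroup.eq_one_iff _).2 h

theorem cgen_inv (i : ι) : (cgen Γ i)⁻¹ = cgen Γ i :=
  inv_eq_of_mul_eq_one_right (cgen_mul_self' i)

theorem cgen_comm {i j : ι} (h : Γ.Adj i j) :
    cgen Γ i * cgen Γ j = cgen Γ j * cgen Γ i := by
  have hh : (FreeGroup.of i * FreeGroup.of j * FreeGroup.of i * FreeGroup.of j)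
      ∈ Subgroup.normalClosure (coxRels Γ) :=
    Subgroup.subset_normalClosure (Or.inr ⟨i, j, h, rfl⟩)
  have h1 : cgen Γ i * cgen Γ j * cgen Γ i * cgen Γ j = 1 :=
    (QuotientGroup.eq_one_iff _).2 hh
  have h2 : cgen Γ i * cgen Γ j = (cgen Γ i * cgen Γ j)⁻¹ := by
    rw [eq_inv_iff_mul_eq_one, ← mul_assoc]; exact h1
  rw [h2, mul_inv_rev, cgen_inv, cgen_inv]

theorem prod_reverse_eq_inv (lst : List ι) :
    ((lst.reverse.map (cgen Γ)).prod) = ((lst.map (cgen Γ)).prod)⁻¹ := by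
  induction lst with
  | nil => simp
  | cons a t ih =>
      simp only [List.map_cons, List.prod_cons, List.reverse_cons, List.map_append,
        List.prod_append, mul_inv_rev, ih, List.map_cons, List.prod_cons, List.map_nil,
        List.prod_nil, mul_one, cgen_inv]

theorem exists_word (w : Cox Γ) : ∃ lst : List ι, (lst.map (cgen Γ)).prod = w := by
  have hw : w ∈ Subgroup.closure (Set.range (cgen Γ)) := by
    rw [show Set.range (cgen Γ) = Set.range (PresentedGroup.of : ι → Cox Γ) from rfl,
      PresentedGroup.closure_range_of]
    trivial
  induction hw using Subgroup.closure_induction with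
  | mem x hx => obtain ⟨i, rfl⟩ := hx; exact ⟨[i], by simp⟩
  | one => exact ⟨[], by simp⟩
  | mul x y _ _ hx hy =>
      obtain ⟨l1, h1⟩ := hx; obtain ⟨l2, h2⟩ := hy
      exact ⟨l1 ++ l2, by simp [List.prod_append, h1, h2]⟩
  | inv x _ hx =>
      obtain ⟨l, h⟩ := hx
      exact ⟨l.reverse, by rw [prod_reverse_eq_inv, h]⟩

theorem wlen_set_nonempty (w : Cox Γ) :
    {n : ℕ | ∃ lst : List ι, lst.length = n ∧ (lst.map (cgen Γ)).prod = w}.Nonempty := by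
  obtain ⟨lst, h⟩ := exists_word w
  exact ⟨lst.length, lst, rfl, h⟩

theorem wlen_spec (w : Cox Γ) :
    ∃ lst : List ι, lst.length = wlen Γ w ∧ (lst.map (cgen Γ)).prod = w :=
  Nat.sInf_mem (wlen_set_nonempty w)

theorem wlen_le {w : Cox Γ} {lst : List ι} (h : (lst.map (cgen Γ)).prod = w) :
    wlen Γ w ≤ lst.length :=
  Nat.sInf_le ⟨lst, rfl, h⟩

theorem wlen_one : wlen Γ (1 : Cox Γ) = 0 :=
  Nat.le_zero.1 (wlen_le (lst := []) (by simp))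

theorem wlen_inv (w : Cox Γ) : wlen Γ w⁻¹ = wlen Γ w := by
  have key : ∀ v : Cox Γ, wlen Γ v⁻¹ ≤ wlen Γ v := by
    intro v
    obtain ⟨lst, hl, hp⟩ := wlen_spec v
    have : ((lst.reverse.map (cgen Γ)).prod) = v⁻¹ := by rw [prod_reverse_eq_inv, hp]
    calc wlen Γ v⁻¹ ≤ lst.reverse.length := wlen_le this
      _ = wlen Γ v := by rw [List.length_reverse, hl]
  exact le_antisymm (by simpa using key w) (by simpa using key w⁻¹)

theorem wlen_cgen_mul_le (i : ι) (w : Cox Γ) :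
    wlen Γ (cgen Γ i * w) ≤ wlen Γ w + 1 := by
  obtain ⟨lst, hl, hp⟩ := wlen_spec w
  have : (((i :: lst).map (cgen Γ)).prod) = cgen Γ i * w := by simp [hp]
  calc wlen Γ (cgen Γ i * w) ≤ (i :: lst).length := wlen_le this
    _ = wlen Γ w + 1 := by simp [hl]

/-! `wordIn` lemmas -/

theorem wordIn_one (J : Set ι) : wordIn Γ J (1 : Cox Γ) := ⟨[], by simp, by simp⟩

theorem wordIn_mul {J : Set ι} {v w : Cox Γ} (hv : wordIn Γ J v) (hw : wordIn Γ J w) :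
    wordIn Γ J (v * w) := by
  obtain ⟨l1, h1, p1⟩ := hv; obtain ⟨l2, h2, p2⟩ := hw
  refine ⟨l1 ++ l2, ?_, by simp [List.prod_append, p1, p2]⟩
  intro i hi; rcases List.mem_append.1 hi with h | h
  exacts [h1 i h, h2 i h]

theorem wordIn_inv {J : Set ι} {w : Cox Γ} (hw : wordIn Γ J w) : wordIn Γ J w⁻¹ := by
  obtain ⟨l, h, p⟩ := hw
  exact ⟨l.reverse, fun i hi => h i (List.mem_reverse.1 hi),
    by rw [prod_reverse_eq_inv, p]⟩

theorem wordIn_mono {J J' : Set ι} (hJJ : J ⊆ J') {w : Cox Γ} (hw : wordIn Γ J w) :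
    wordIn Γ J' w := by
  obtain ⟨l, h, p⟩ := hw
  exact ⟨l, fun i hi => hJJ (h i hi), p⟩

theorem wordIn_empty {w : Cox Γ} (hw : wordIn Γ (∅ : Set ι) w) : w = 1 := by
  obtain ⟨l, h, p⟩ := hw
  cases l with
  | nil => simpa using p.symm
  | cons a t => exact absurd (h a (List.mem_cons_self)) (Set.notMem_empty a)

theorem cgen_comm_prod {J : Set ι} {j : ι}
    (hadj : ∀ i ∈ J, Γ.Adj j i) (lst : List ι) (hl : ∀ i ∈ lst, i ∈ J) :
    cgen Γ j * (lst.map (cgen Γ)).prod = (lst.map (cgen Γ)).prod * cgen Γ j := by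
  induction lst with
  | nil => simp
  | cons a t ih =>
      have ha : a ∈ J := hl a (List.mem_cons_self)
      have hcomm : cgen Γ j * cgen Γ a = cgen Γ a * cgen Γ j := cgen_comm (hadj a ha)
      have iht := ih (fun i hi => hl i (List.mem_cons_of_mem a hi))
      simp only [List.map_cons, List.prod_cons]
      rw [← mul_assoc, hcomm, mul_assoc, iht, ← mul_assoc]

end CoxLemmas

section BuildingLemmas

variable {ι : Type} {Γ : SimpleGraph ι}

theorem delta_self (B : RABuilding Γ) (c : B.C) : B.δ c c = 1 := (B.wd1 c c).2 rfl

/-- Transport lemma: if `δ c d` is represented by a word with letters in `J`,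
then `δ d x` differs from `δ c x` by a left factor which is a word in `J`. -/
theorem delta_transport (B : RABuilding Γ) (J : Set ι) :
    ∀ (lst : List ι) (c d x : B.C), (∀ i ∈ lst, i ∈ J) →
      (lst.map (cgen Γ)).prod = B.δ c d →
      ∃ u : List ι, (∀ i ∈ u, i ∈ J) ∧ B.δ d x = (u.map (cgen Γ)).prod * B.δ c x := by
  intro lst
  induction lst with
  | nil =>
      intro c d x _ hp
      have : c = d := (B.wd1 c d).1 (by simpa using hp.symm)
      subst this
      exact ⟨[], by simp, by simp⟩
  | cons a t ih =>
      intro c d x hmem hp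
      obtain ⟨c', hc'c, hc'd⟩ := B.wd3 c d a
      have hδ : B.δ c' d = (t.map (cgen Γ)).prod := by
        rw [hc'd, ← hp]
        simp only [List.map_cons, List.prod_cons, ← mul_assoc, cgen_mul_self', one_mul]
      obtain ⟨u, hu, hux⟩ := ih c' d x (fun i hi => hmem i (List.mem_cons_of_mem a hi)) hδ.symm
      rcases B.wd2 c c' x a hc'c with h | h
      · refine ⟨u ++ [a], ?_, ?_⟩
        · intro i hi
          rcases List.mem_append.1 hi with h' | h'
          · exact hu i h'
          · simp only [List.mem_singleton] at h'
            exact h' ▸ hmem a (List.mem_cons_self)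
        · rw [hux, h]
          simp [List.prod_append, mul_assoc]
      · exact ⟨u, hu, by rw [hux, h]⟩

/-- Membership in the `J`-residue is transported along the residue relation. -/
theorem residue_congr (B : RABuilding Γ) (J : Set ι) {c d : B.C}
    (h : wordIn Γ J (B.δ c d)) (x : B.C) (hx : wordIn Γ J (B.δ c x)) :
    wordIn Γ J (B.δ d x) := by
  obtain ⟨lst, hmem, hp⟩ := h
  obtain ⟨u, hu, hux⟩ := delta_transport B J lst c d x hmem hp
  rw [hux]
  exact wordIn_mul ⟨u, hu, rfl⟩ hx

theorem delta_symm_wordIn (B : RABuilding Γ) (J : Set ι) {c d : B.C}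
    (h : wordIn Γ J (B.δ c d)) : wordIn Γ J (B.δ d c) := by
  rw [B.wdsymm c d]
  exact wordIn_inv h

end BuildingLemmas

section Potential

variable {ι : Type} {Γ : SimpleGraph ι}

/-- Distance (from a fixed base chamber `c₁`) to the `J`-residue of `c`. -/
noncomputable def gres (B : RABuilding Γ) (c₁ c : B.C) (J : Finset ι) : ℕ :=
  sInf {n : ℕ | ∃ x : B.C, wordIn Γ (↑J) (B.δ c x) ∧ wlen Γ (B.δ c₁ x) = n}

theorem gres_nonempty (B : RABuilding Γ) (c₁ c : B.C) (J : Finset ι) :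
    {n : ℕ | ∃ x : B.C, wordIn Γ (↑J) (B.δ c x) ∧ wlen Γ (B.δ c₁ x) = n}.Nonempty :=
  ⟨wlen Γ (B.δ c₁ c), c, by rw [delta_self]; exact wordIn_one _, rfl⟩

theorem gres_spec (B : RABuilding Γ) (c₁ c : B.C) (J : Finset ι) :
    ∃ x : B.C, wordIn Γ (↑J) (B.δ c x) ∧ wlen Γ (B.δ c₁ x) = gres B c₁ c J :=
  Nat.sInf_mem (gres_nonempty B c₁ c J)

theorem gres_congr (B : RABuilding Γ) (c₁ : B.C) {c d : B.C} {J : Finset ι}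
    (h : wordIn Γ (↑J) (B.δ c d)) : gres B c₁ c J = gres B c₁ d J := by
  unfold gres
  congr 1
  ext n
  constructor
  · rintro ⟨x, hx, hn⟩
    exact ⟨x, residue_congr B (↑J) h x hx, hn⟩
  · rintro ⟨x, hx, hn⟩
    exact ⟨x, residue_congr B (↑J) (delta_symm_wordIn B (↑J) h) x hx, hn⟩

/-- The potential function on vertices of the Davis realization. -/
noncomputable def Fpot (B : RABuilding Γ) (c₁ : B.C) : DVert B → ℕ :=
  Quotient.lift (fun p => 2 * gres B c₁ p.1.1 p.1.2 + p.1.2.card) (by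
    intro p q h
    induction h with
    | rel a b hab =>
        obtain ⟨hJ, hw⟩ := hab
        rw [← hJ, gres_congr B c₁ hw]
    | refl => rfl
    | symm _ _ _ ih => exact ih.symm
    | trans _ _ _ _ _ ih1 ih2 => exact ih1.trans ih2)

theorem Fpot_dvMk (B : RABuilding Γ) (c₁ c : B.C) (J : Finset ι) (h : IsSphD Γ J) :
    Fpot B c₁ (dvMk B c J h) = 2 * gres B c₁ c J + J.card := rfl

theorem drank_dvMk (B : RABuilding Γ) (c : B.C) (J : Finset ι) (h : IsSphD Γ J) :
    drank B (dvMk B c J h) = J.card := rfl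

theorem gres_mono (B : RABuilding Γ) (c₁ c : B.C) {J J' : Finset ι} (hss : J ⊆ J') :
    gres B c₁ c J' ≤ gres B c₁ c J := by
  obtain ⟨x, hx, hlen⟩ := gres_spec B c₁ c J
  exact Nat.sInf_le ⟨x, wordIn_mono (Finset.coe_subset.2 hss) hx, hlen⟩

/-- Pulling the letter `j` out of a word in `insert j J`, when `j` commutes with `J`. -/
theorem pullout {J : Set ι} {j : ι} (hadj : ∀ i ∈ J, Γ.Adj j i) :
    ∀ lst : List ι, (∀ i ∈ lst, i = j ∨ i ∈ J) →
      ∃ u : List ι, (∀ i ∈ u, i ∈ J) ∧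
        ((lst.map (cgen Γ)).prod = (u.map (cgen Γ)).prod ∨
         (lst.map (cgen Γ)).prod = (u.map (cgen Γ)).prod * cgen Γ j) := by
  intro lst
  induction lst with
  | nil => exact fun _ => ⟨[], by simp, Or.inl rfl⟩
  | cons a t ih =>
      intro hmem
      obtain ⟨u, hu, hcase⟩ := ih (fun i hi => hmem i (List.mem_cons_of_mem a hi))
      rcases hmem a (List.mem_cons_self) with ha | ha
      · subst ha
        have hcomm := cgen_comm_prod (J := J) hadj u hu
        rcases hcase with h | h
        · refine ⟨u, hu, Or.inr ?_⟩
          simp only [List.map_cons, List.prod_cons, h, hcomm]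
        · refine ⟨u, hu, Or.inl ?_⟩
          simp only [List.map_cons, List.prod_cons, h]
          rw [← mul_assoc, hcomm, mul_assoc, cgen_mul_self', mul_one]
      · refine ⟨a :: u, ?_, ?_⟩
        · intro i hi
          rcases List.mem_cons.1 hi with h' | h'
          · exact h' ▸ ha
          · exact hu i h'
        · rcases hcase with h | h
          · exact Or.inl (by simp [h])
          · refine Or.inr ?_
            simp only [List.map_cons, List.prod_cons, h, mul_assoc]

theorem gres_step (B : RABuilding Γ) (c₁ c : B.C) {J J' : Finset ι}
    (hJ' : IsSphD Γ J') (hss : J ⊆ J') (hcard : J'.card = J.card + 1) :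
    gres B c₁ c J ≤ gres B c₁ c J' + 1 := by
  -- find the extra letter j
  have hssub : J ⊂ J' := HasSubset.Subset.ssubset_of_ne hss (fun h => by rw [h] at hcard; omega)
  obtain ⟨j, hjJ', hjJ⟩ := Finset.exists_of_ssubset hssub
  letI := Classical.decEq ι
  have hins : J' = insert j J := by
    refine (Finset.eq_of_subset_of_card_le (Finset.insert_subset hjJ' hss) ?_).symm
    rw [Finset.card_insert_of_notMem hjJ]
    omega
  have hadj : ∀ i ∈ (↑J : Set ι), Γ.Adj j i := by
    intro i hi
    have hiJ' : i ∈ (↑J' : Set ι) := Finset.coe_subset.2 hss hi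
    have hne : j ≠ i := fun h => hjJ (h ▸ hi)
    exact hJ' (by exact_mod_cast hjJ') hiJ' hne
  -- take the minimizer for J'
  obtain ⟨x, hx, hlen⟩ := gres_spec B c₁ c J'
  obtain ⟨lst, hmem, hp⟩ := hx
  have hmem' : ∀ i ∈ lst, i = j ∨ i ∈ (↑J : Set ι) := by
    intro i hi
    have := hmem i hi
    rw [hins] at this
    simpa using this
  obtain ⟨u, hu, hcase⟩ := pullout hadj lst hmem'
  rcases hcase with h | h
  · -- x itself lies in the J-residue
    have hxJ : wordIn Γ (↑J) (B.δ c x) := ⟨u, hu, by rw [← h, hp]⟩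
    have : gres B c₁ c J ≤ wlen Γ (B.δ c₁ x) := Nat.sInf_le ⟨x, hxJ, rfl⟩
    omega
  · -- move one step to enter the J-residue
    have hδcx : B.δ c x = (u.map (cgen Γ)).prod * cgen Γ j := by rw [← hp, h]
    obtain ⟨y, hyx, hyc⟩ := B.wd3 x c j
    have hδyc : B.δ y c = ((u.map (cgen Γ)).prod)⁻¹ := by
      rw [hyc, B.wdsymm c x, hδcx, mul_inv_rev, cgen_inv, ← mul_assoc, cgen_mul_self',
        one_mul]
    have hδcy : B.δ c y = (u.map (cgen Γ)).prod := by
      rw [B.wdsymm y c, hδyc, inv_inv]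
    have hyJ : wordIn Γ (↑J) (B.δ c y) := ⟨u, hu, hδcy.symm⟩
    have hwl : wlen Γ (B.δ c₁ y) ≤ wlen Γ (B.δ c₁ x) + 1 := by
      have h1 : wlen Γ (B.δ c₁ y) = wlen Γ (B.δ y c₁) := by
        rw [B.wdsymm y c₁, wlen_inv]
      have h2 : wlen Γ (B.δ x c₁) = wlen Γ (B.δ c₁ x) := by
        rw [B.wdsymm x c₁, wlen_inv]
      rcases B.wd2 x y c₁ j hyx with h' | h'
      · rw [h1, h']
        calc wlen Γ (cgen Γ j * B.δ x c₁) ≤ wlen Γ (B.δ x c₁) + 1 := wlen_cgen_mul_le _ _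
          _ = wlen Γ (B.δ c₁ x) + 1 := by rw [h2]
      · rw [h1, h', h2]; omega
    have : gres B c₁ c J ≤ wlen Γ (B.δ c₁ y) := Nat.sInf_le ⟨y, hyJ, rfl⟩
    omega

theorem fpot_adj (B : RABuilding Γ) (c₁ : B.C) {x y : DVert B}
    (h : (davisGraph B).Adj x y) : Fpot B c₁ y ≤ Fpot B c₁ x + 1 := by
  obtain ⟨_, c, J, J', hJ, hJ', hss, hcard, hor⟩ := h
  have hmono := gres_mono B c₁ c hss
  have hstep := gres_step B c₁ c hJ' hss hcard
  rcases hor with ⟨hx, hy⟩ | ⟨hy, hx⟩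
  · subst hx; subst hy
    rw [Fpot_dvMk, Fpot_dvMk]
    omega
  · subst hx; subst hy
    rw [Fpot_dvMk, Fpot_dvMk]
    omega

theorem fpot_walk (B : RABuilding Γ) (c₁ : B.C) {a b : DVert B}
    (w : (davisGraph B).Walk a b) : Fpot B c₁ b ≤ Fpot B c₁ a + w.length := by
  induction w with
  | nil => simp
  | cons h p ih =>
      have := fpot_adj B c₁ h
      rw [SimpleGraph.Walk.length_cons]
      omega

theorem gres_empty (B : RABuilding Γ) (c₁ c : B.C) :
    gres B c₁ c ∅ = wlen Γ (B.δ c₁ c) := by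
  unfold gres
  have hset : {n : ℕ | ∃ x : B.C, wordIn Γ (↑(∅ : Finset ι)) (B.δ c x) ∧
      wlen Γ (B.δ c₁ x) = n} = {wlen Γ (B.δ c₁ c)} := by
    ext n
    constructor
    · rintro ⟨x, hx, hn⟩
      rw [Finset.coe_empty] at hx
      have : c = x := (B.wd1 c x).1 (wordIn_empty hx)
      subst this
      simpa using hn.symm
    · rintro rfl
      exact ⟨c, by rw [delta_self]; exact wordIn_one _, rfl⟩
  rw [hset, csInf_singleton]

theorem Fpot_base (B : RABuilding Γ) (c₁ c : B.C) :
    Fpot B c₁ (dvMk B c ∅ isSphD_empty) = 2 * wlen Γ (B.δ c₁ c) := by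
  rw [Fpot_dvMk, gres_empty]
  simp

theorem isSphD_singleton (a : ι) : IsSphD Γ {a} := by
  simp [IsSphD]

theorem exists_walk (B : RABuilding Γ) :
    ∀ (lst : List ι) (c d : B.C), (lst.map (cgen Γ)).prod = B.δ c d →
      ∃ w : (davisGraph B).Walk (dvMk B c ∅ isSphD_empty) (dvMk B d ∅ isSphD_empty),
        w.length = 2 * lst.length := by
  intro lst
  induction lst with
  | nil =>
      intro c d hp
      have : c = d := (B.wd1 c d).1 (by simpa using hp.symm)
      subst this
      exact ⟨SimpleGraph.Walk.nil, by simp⟩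
  | cons a t ih =>
      intro c d hp
      obtain ⟨c', hc'c, hc'd⟩ := B.wd3 c d a
      have hδ : (t.map (cgen Γ)).prod = B.δ c' d := by
        rw [hc'd, ← hp]
        simp only [List.map_cons, List.prod_cons, ← mul_assoc, cgen_mul_self', one_mul]
      obtain ⟨w', hw'⟩ := ih c' d hδ
      have hδcc' : B.δ c c' = cgen Γ a := by
        rw [B.wdsymm c' c, hc'c, cgen_inv]
      -- the middle vertex as a residue of c equals the residue of c'
      have hmid : dvMk B c {a} (isSphD_singleton a) = dvMk B c' {a} (isSphD_singleton a) := by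
        apply Quotient.sound
        exact Relation.EqvGen.rel _ _ ⟨rfl, ⟨[a], by simp, by simp [hδcc']⟩⟩
      have hrank : ∀ (e : B.C), dvMk B e ∅ isSphD_empty ≠ dvMk B e {a} (isSphD_singleton a) := by
        intro e h
        have := congrArg (drank B) h
        rw [drank_dvMk, drank_dvMk] at this
        simp at this
      have e1 : (davisGraph B).Adj (dvMk B c ∅ isSphD_empty) (dvMk B c {a} (isSphD_singleton a)) :=
        ⟨hrank c, c, ∅, {a}, isSphD_empty, isSphD_singleton a, Finset.empty_subset _,
          by simp, Or.inl ⟨rfl, rfl⟩⟩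
      have e2' : (davisGraph B).Adj (dvMk B c' {a} (isSphD_singleton a)) (dvMk B c' ∅ isSphD_empty) :=
        ⟨(hrank c').symm, c', ∅, {a}, isSphD_empty, isSphD_singleton a, Finset.empty_subset _,
          by simp, Or.inr ⟨rfl, rfl⟩⟩
      have e2 : (davisGraph B).Adj (dvMk B c {a} (isSphD_singleton a)) (dvMk B c' ∅ isSphD_empty) := by
        rw [hmid]; exact e2'
      refine ⟨SimpleGraph.Walk.cons e1 (SimpleGraph.Walk.cons e2 w'), ?_⟩
      simp only [SimpleGraph.Walk.length_cons, hw', List.length_cons]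
      omega

end Potential

/-- for chambers `c₁, c₂` of a right-angled building `ℬ` modelled
on `W(Γ)`, viewed as rank-0 vertices of the Davis realization `|ℬ|`, the
`l¹`-distance between the corresponding vertices (that is, the graph distance in
the 1-skeleton of `|ℬ|`) equals twice the gallery distance
`d(c₁,c₂) = ℓ(δ(c₁,c₂))`. -/
theorem stmt18 (B : RABuilding Γ) (c₁ c₂ : B.C) :
    (davisGraph B).dist (dvMk B c₁ ∅ isSphD_empty) (dvMk B c₂ ∅ isSphD_empty) =
      2 * wlen Γ (B.δ c₁ c₂) := by
  
  obtain ⟨lst, hlen, hprod⟩ := wlen_spec (B.δ c₁ c₂)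
  obtain ⟨w, hw⟩ := exists_walk B lst c₁ c₂ hprod
  have hub : (davisGraph B).dist (dvMk B c₁ ∅ isSphD_empty) (dvMk B c₂ ∅ isSphD_empty)
      ≤ 2 * wlen Γ (B.δ c₁ c₂) := by
    have := SimpleGraph.dist_le w
    rw [hw, hlen] at this
    exact this
  have hreach : (davisGraph B).Reachable (dvMk B c₁ ∅ isSphD_empty)
      (dvMk B c₂ ∅ isSphD_empty) := ⟨w⟩
  obtain ⟨p, hp⟩ := hreach.exists_walk_length_eq_dist
  have hlb := fpot_walk B c₁ p
  rw [Fpot_base, Fpot_base, delta_self, wlen_one, hp] at hlb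
  omega
end
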